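/- arXiv:2209.06204 — 3 statements merged into one kernel-verified Lean document; each statement's English description precedes it below -/
import Mathlib

section
/- Let k and ℓ be integers with 2 ≤ k < ℓ ≤ 2k−1 and let G be a 2ℓ-connected graph. Then the (k,ℓ)-count matroid M_{k,ℓ}(G) is connected (vertically 2-connected and loopless). -/
open scoped Classical

/-- The set of vertices incident to an edge of `F`. -/
noncomputable def incVerts {V : Type} [Fintype V] (F : Finset (Sym2 V)) : Finset V :=
  Finset.univ.filter (fun v => ∃ e ∈ F, v ∈ e)

/-- `F` is independent in the `(k,ℓ)`-count matroid. -/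
noncomputable def CountSparse {V : Type} [Fintype V] (k ℓ : ℤ) (F : Finset (Sym2 V)) : Prop :=
  ∀ F' ⊆ F, F'.Nonempty → (F'.card : ℤ) ≤ k * (incVerts F').card - ℓ

/-- Rank in the `(k,ℓ)`-count matroid. -/
noncomputable def countRank {V : Type} [Fintype V] (k ℓ : ℤ) (F : Finset (Sym2 V)) : ℕ :=
  (F.powerset.filter (CountSparse k ℓ)).sup Finset.card

/-- `G` is `c`-(vertex-)connected. -/
def VConn {V : Type} [Fintype V] (G : SimpleGraph V) (c : ℕ) : Prop :=
  c < Fintype.card V ∧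
    ∀ S : Finset V, S.card < c → (G.induce ((↑S : Set V)ᶜ)).Connected

namespace Cnt
variable {V : Type} [Fintype V]


lemma mem_incVerts {F : Finset (Sym2 V)} {v : V} : v ∈ incVerts F ↔ ∃ e ∈ F, v ∈ e := by
  simp [incVerts]

lemma incVerts_mono {F F' : Finset (Sym2 V)} (h : F ⊆ F') : incVerts F ⊆ incVerts F' := by
  intro v hv
  rcases mem_incVerts.1 hv with ⟨e, he, hve⟩
  exact mem_incVerts.2 ⟨e, h he, hve⟩

lemma incVerts_union (F F' : Finset (Sym2 V)) :
    incVerts (F ∪ F') = incVerts F ∪ incVerts F' := by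
  ext v
  simp [mem_incVerts, or_and_right, exists_or]

lemma incVerts_singleton {a b : V} (h : a ≠ b) :
    incVerts ({s(a,b)} : Finset (Sym2 V)) = {a, b} := by
  ext v
  simp [mem_incVerts, Sym2.mem_iff]

lemma card_incVerts_singleton {a b : V} (h : a ≠ b) :
    (incVerts ({s(a,b)} : Finset (Sym2 V))).card = 2 := by
  rw [incVerts_singleton h, Finset.card_insert_of_notMem (by simp [h]), Finset.card_singleton]

lemma two_le_card_incVerts {F : Finset (Sym2 V)} (hne : F.Nonempty)
    (hd : ∀ e ∈ F, ¬ e.IsDiag) : 2 ≤ (incVerts F).card := by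
  rcases hne with ⟨e, he⟩
  induction e using Sym2.ind with
  | _ a b =>
    have hab : a ≠ b := by
      intro h; exact hd _ he (by simp [h])
    have : ({a, b} : Finset V) ⊆ incVerts F := by
      intro v hv
      simp only [Finset.mem_insert, Finset.mem_singleton] at hv
      rcases hv with rfl | rfl
      · exact mem_incVerts.2 ⟨_, he, by simp⟩
      · exact mem_incVerts.2 ⟨_, he, by simp⟩
    calc 2 = ({a, b} : Finset V).card := by
            rw [Finset.card_insert_of_notMem (by simp [hab]), Finset.card_singleton]
      _ ≤ _ := Finset.card_le_card this

lemma sparse_subset {k ℓ : ℤ} {F F' : Finset (Sym2 V)} (h : CountSparse k ℓ F)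
    (hsub : F' ⊆ F) : CountSparse k ℓ F' :=
  fun F'' h'' hne => h F'' (h''.trans hsub) hne

lemma sparse_empty (k ℓ : ℤ) : CountSparse k ℓ (∅ : Finset (Sym2 V)) := by
  intro F' h' hne
  simp [Finset.subset_empty.1 h'] at hne

lemma sparse_singleton {k ℓ : ℤ} (hl : ℓ ≤ 2*k - 1) {e : Sym2 V} (he : ¬ e.IsDiag) :
    CountSparse k ℓ ({e} : Finset (Sym2 V)) := by
  intro F' h' hne
  rcases Finset.subset_singleton_iff.1 h' with rfl | rfl
  · simp at hne
  · induction e using Sym2.ind with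
    | _ a b =>
      have hab : a ≠ b := by simpa using he
      rw [card_incVerts_singleton hab]
      push_cast
      simp only [Finset.card_singleton]
      push_cast
      linarith


lemma le_countRank_of_sparse {k ℓ : ℤ} {F A : Finset (Sym2 V)} (hA : A ⊆ F)
    (hs : CountSparse k ℓ A) : A.card ≤ countRank k ℓ F :=
  Finset.le_sup (by simp [Finset.mem_filter, Finset.mem_powerset, hA, hs])

lemma countRank_le {k ℓ : ℤ} {F : Finset (Sym2 V)} {m : ℕ}
    (h : ∀ A ⊆ F, CountSparse k ℓ A → A.card ≤ m) : countRank k ℓ F ≤ m := by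
  apply Finset.sup_le
  intro A hA
  simp only [Finset.mem_filter, Finset.mem_powerset] at hA
  exact h A hA.1 hA.2

lemma exists_max_sparse (k ℓ : ℤ) (F : Finset (Sym2 V)) :
    ∃ A ⊆ F, CountSparse k ℓ A ∧ A.card = countRank k ℓ F := by
  have hne : (F.powerset.filter (CountSparse k ℓ)).Nonempty :=
    ⟨∅, by simp [sparse_empty]⟩
  obtain ⟨A, hA, hcard⟩ := Finset.exists_mem_eq_sup _ hne Finset.card
  simp only [Finset.mem_filter, Finset.mem_powerset] at hA
  exact ⟨A, hA.1, hA.2, hcard.symm⟩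

lemma countRank_int_le {k ℓ : ℤ} (hk : 0 ≤ k) (hkl : 0 ≤ k * (Fintype.card V) - ℓ) {F : Finset (Sym2 V)} :
    (countRank k ℓ F : ℤ) ≤ k * (Fintype.card V) - ℓ := by
  obtain ⟨A, hAF, hs, hcard⟩ := exists_max_sparse k ℓ F
  rw [← hcard]
  rcases A.eq_empty_or_nonempty with rfl | hne
  · simpa using hkl
  · calc (A.card : ℤ) ≤ k * (incVerts A).card - ℓ := hs A subset_rfl hne
      _ ≤ k * (Fintype.card V) - ℓ := by
          have h1 : ((incVerts A).card : ℤ) ≤ (Fintype.card V : ℤ) := by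
            exact_mod_cast Finset.card_le_univ _
          nlinarith



lemma reach_closed {W : Type} {H : SimpleGraph W} {K : Set W}
    (hcl : ∀ a b, H.Adj a b → a ∈ K → b ∈ K) {x y : W} (hx : x ∈ K) (w : H.Walk x y) :
    y ∈ K := by
  induction w with
  | nil => exact hx
  | cons h p ih => exact ih (hcl _ _ h hx)

lemma vconn_degree {G : SimpleGraph V} {c : ℕ} (h : VConn G c) (v : V) :
    c ≤ G.degree v := by
  by_contra hlt
  push_neg at hlt
  have hdeg : (G.neighborFinset v).card = G.degree v := G.card_neighborFinset_eq_degree v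
  have hS := h.2 (G.neighborFinset v) (by omega)
  -- find u ≠ v outside neighborFinset
  have hcardc : (G.neighborFinset v)ᶜ.card ≥ 2 := by
    have h2 := Finset.card_compl (G.neighborFinset v)
    have hc := h.1
    omega
  have hv : v ∈ (G.neighborFinset v)ᶜ := by
    simp [SimpleGraph.mem_neighborFinset, G.irrefl]
  obtain ⟨u, hu, huv⟩ := Finset.exists_mem_ne (s := (G.neighborFinset v)ᶜ) (by omega) v
  have hvmem : v ∈ ((↑(G.neighborFinset v) : Set V)ᶜ) := by
    simpa using (Finset.mem_compl.1 hv)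
  have humem : u ∈ ((↑(G.neighborFinset v) : Set V)ᶜ) := by
    simpa using (Finset.mem_compl.1 hu)
  have hreach := hS.preconnected ⟨v, hvmem⟩ ⟨u, humem⟩
  rcases hreach with ⟨w⟩
  cases w with
  | nil => exact huv rfl
  | cons hadj p =>
    rename_i b
    have : G.Adj v b.val := hadj
    have : b.val ∈ G.neighborFinset v := by simpa [SimpleGraph.mem_neighborFinset] using this
    exact b.property (Finset.mem_coe.2 this)


/-- A tight set. -/
def Tight (k ℓ : ℤ) (T : Finset (Sym2 V)) : Prop :=
  T.Nonempty ∧ (T.card : ℤ) = k * (incVerts T).card - ℓ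

lemma tight_union {k ℓ : ℤ} (hk : 0 ≤ k) {A T₁ T₂ : Finset (Sym2 V)}
    (hA : CountSparse k ℓ A) (h1 : T₁ ⊆ A) (h2 : T₂ ⊆ A)
    (ht1 : Tight k ℓ T₁) (ht2 : Tight k ℓ T₂) (hint : (T₁ ∩ T₂).Nonempty) :
    Tight k ℓ (T₁ ∪ T₂) := by
  constructor
  · exact ht1.1.mono Finset.subset_union_left
  · have hcard : (T₁ ∪ T₂).card + (T₁ ∩ T₂).card = T₁.card + T₂.card :=
      Finset.card_union_add_card_inter _ _
    have hvcard : (incVerts T₁ ∪ incVerts T₂).card + (incVerts T₁ ∩ incVerts T₂).card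
        = (incVerts T₁).card + (incVerts T₂).card := Finset.card_union_add_card_inter _ _
    have hvu : incVerts (T₁ ∪ T₂) = incVerts T₁ ∪ incVerts T₂ := incVerts_union _ _
    have hii : incVerts (T₁ ∩ T₂) ⊆ incVerts T₁ ∩ incVerts T₂ := by
      intro v hv
      exact Finset.mem_inter.2 ⟨incVerts_mono Finset.inter_subset_left hv,
        incVerts_mono Finset.inter_subset_right hv⟩
    have hiic : ((incVerts (T₁ ∩ T₂)).card : ℤ) ≤ ((incVerts T₁ ∩ incVerts T₂).card : ℤ) := by
      exact_mod_cast Finset.card_le_card hii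
    have hsInt : ((T₁ ∩ T₂).card : ℤ) ≤ k * (incVerts (T₁ ∩ T₂)).card - ℓ :=
      hA _ ((Finset.inter_subset_left).trans h1) hint
    have hsU : ((T₁ ∪ T₂).card : ℤ) ≤ k * (incVerts (T₁ ∪ T₂)).card - ℓ :=
      hA _ (Finset.union_subset h1 h2) (ht1.1.mono Finset.subset_union_left)
    have e1 := ht1.2
    have e2 := ht2.2
    rw [hvu] at hsU ⊢
    have hc1 : ((T₁ ∪ T₂).card : ℤ) + ((T₁ ∩ T₂).card : ℤ) = T₁.card + T₂.card := by
      exact_mod_cast hcard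
    have hc2 : ((incVerts T₁ ∪ incVerts T₂).card : ℤ) + ((incVerts T₁ ∩ incVerts T₂).card : ℤ)
        = ((incVerts T₁).card : ℤ) + ((incVerts T₂).card : ℤ) := by exact_mod_cast hvcard
    nlinarith [mul_le_mul_of_nonneg_left hiic hk]

/-- The maximal tight set containing `e` (junk if none exists). -/
noncomputable def Mset (k ℓ : ℤ) (A : Finset (Sym2 V)) (e : Sym2 V) : Finset (Sym2 V) :=
  ((A.powerset.filter (fun T => Tight k ℓ T ∧ e ∈ T)).sup id)

def InTight (k ℓ : ℤ) (A : Finset (Sym2 V)) (e : Sym2 V) : Prop :=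
  ∃ T ⊆ A, Tight k ℓ T ∧ e ∈ T

lemma Mset_spec {k ℓ : ℤ} (hk : 0 ≤ k) {A : Finset (Sym2 V)} (hA : CountSparse k ℓ A)
    {e : Sym2 V} (he : InTight k ℓ A e) :
    Tight k ℓ (Mset k ℓ A e) ∧ e ∈ Mset k ℓ A e ∧ Mset k ℓ A e ⊆ A := by
  classical
  -- prove by induction on the filter set
  have key : ∀ S : Finset (Finset (Sym2 V)), S.Nonempty →
      (∀ T ∈ S, T ⊆ A ∧ Tight k ℓ T ∧ e ∈ T) →
      Tight k ℓ (S.sup id) ∧ e ∈ S.sup id ∧ S.sup id ⊆ A := by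
    intro S
    induction S using Finset.induction with
    | empty => intro h; simp at h
    | insert _ _ hnot ih =>
      rename_i T S'
      intro _ hall
      rcases S'.eq_empty_or_nonempty with rfl | hS'
      · have h := hall T (by simp)
        simp only [Finset.sup_insert, Finset.sup_empty, id, sup_bot_eq]
        exact ⟨h.2.1, h.2.2, h.1⟩
      · have ihres := ih hS' (fun T' hT' => hall T' (by simp [hT']))
        have hT := hall T (by simp)
        rw [Finset.sup_insert]
        refine ⟨?_, ?_, ?_⟩
        · exact tight_union hk hA hT.1 ihres.2.2 hT.2.1 ihres.1
            ⟨e, Finset.mem_inter.2 ⟨hT.2.2, ihres.2.1⟩⟩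
        · exact Finset.mem_union.2 (Or.inl hT.2.2)
        · exact Finset.union_subset hT.1 ihres.2.2
  rcases he with ⟨T, hTA, hT, heT⟩
  have hne : (A.powerset.filter (fun T => Tight k ℓ T ∧ e ∈ T)).Nonempty :=
    ⟨T, by simp [Finset.mem_powerset, hTA, hT, heT]⟩
  exact key _ hne (fun T' hT' => by
    simp only [Finset.mem_filter, Finset.mem_powerset] at hT'
    exact ⟨hT'.1, hT'.2⟩)

lemma subset_Mset {k ℓ : ℤ} {A T : Finset (Sym2 V)} (hTA : T ⊆ A) (hT : Tight k ℓ T)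
    {e : Sym2 V} (he : e ∈ T) : T ⊆ Mset k ℓ A e := by
  have : T ∈ A.powerset.filter (fun T => Tight k ℓ T ∧ e ∈ T) := by
    simp [Finset.mem_powerset, hTA, hT, he]
  exact Finset.le_sup (f := id) this

lemma Mset_eq {k ℓ : ℤ} (hk : 0 ≤ k) {A : Finset (Sym2 V)} (hA : CountSparse k ℓ A)
    {e f : Sym2 V} (he : InTight k ℓ A e) (hf : f ∈ Mset k ℓ A e) :
    Mset k ℓ A f = Mset k ℓ A e := by
  obtain ⟨hMt, heM, hMA⟩ := Mset_spec hk hA he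
  have hfin : InTight k ℓ A f := ⟨_, hMA, hMt, hf⟩
  obtain ⟨hMt', hfM', hMA'⟩ := Mset_spec hk hA hfin
  -- Mset e ⊆ Mset f since Mset e is tight and contains f
  have h1 : Mset k ℓ A e ⊆ Mset k ℓ A f := subset_Mset hMA hMt hf
  -- union is tight and contains e, hence ⊆ Mset e
  have hu : Tight k ℓ (Mset k ℓ A f ∪ Mset k ℓ A e) :=
    tight_union hk hA hMA' hMA hMt' hMt ⟨f, Finset.mem_inter.2 ⟨hfM', hf⟩⟩
  have h2 : Mset k ℓ A f ∪ Mset k ℓ A e ⊆ Mset k ℓ A e :=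
    subset_Mset (Finset.union_subset hMA' hMA) hu (Finset.mem_union.2 (Or.inr heM))
  exact Finset.Subset.antisymm (fun x hx => h2 (Finset.mem_union.2 (Or.inl hx))) h1


lemma support_eq (a b : V) : Finset.univ.filter (· ∈ s(a,b)) = {a, b} := by
  ext v; simp [Sym2.mem_iff]

lemma card_le_choose {T : Finset (Sym2 V)} (hd : ∀ e ∈ T, ¬ e.IsDiag) :
    T.card ≤ (incVerts T).card.choose 2 := by
  have h := Finset.card_le_card_of_injOn (f := fun e => Finset.univ.filter (· ∈ e))
    (s := T) (t := (incVerts T).powersetCard 2) ?_ ?_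
  · simpa [Finset.card_powersetCard] using h
  · intro e he
    rw [Finset.mem_coe, Finset.mem_powersetCard]
    constructor
    · intro v hv
      simp only [Finset.mem_filter] at hv
      exact mem_incVerts.2 ⟨e, he, hv.2⟩
    · induction e using Sym2.ind with
      | _ a b =>
        show (Finset.univ.filter (· ∈ s(a,b))).card = 2
        rw [support_eq]
        have hab : a ≠ b := by simpa using hd _ he
        rw [Finset.card_insert_of_notMem (by simp [hab]), Finset.card_singleton]
  · intro e he f hf hef
    induction e using Sym2.ind with
    | _ a b =>
      induction f using Sym2.ind with
      | _ c d =>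
        have hef' : ({a,b} : Finset V) = {c,d} := by
          rw [← support_eq a b, ← support_eq c d]; exact hef
        clear hef
        have hab : a ≠ b := by simpa using hd _ he
        have hc : c ∈ ({a, b} : Finset V) := by rw [hef']; simp
        have hdm : d ∈ ({a, b} : Finset V) := by rw [hef']; simp
        simp only [Finset.mem_insert, Finset.mem_singleton] at hc hdm
        rw [Sym2.eq_iff]
        have hcd : c ≠ d := by simpa using hd _ hf
        rcases hc with rfl | rfl
        · rcases hdm with rfl | rfl
          · exact absurd rfl hcd
          · exact Or.inl ⟨rfl, rfl⟩
        · rcases hdm with rfl | rfl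
          · exact Or.inr ⟨rfl, rfl⟩
          · exact absurd rfl hcd

lemma arith_big {k ℓ x c : ℤ} (hk : 2 ≤ k) (hl : ℓ ≤ 2*k - 1) (hx : 3 ≤ x)
    (htight : c = k * x - ℓ) (hchoose : 2 * c ≤ x * (x - 1)) : 2*k - 1 ≤ x := by
  by_contra hcon
  push_neg at hcon
  nlinarith [mul_pos (show (0:ℤ) < x - 2 by omega) (show (0:ℤ) < (2*k-1) - x by omega)]

lemma two_choose_le (x : ℕ) : 2 * x.choose 2 ≤ x * (x - 1) := by
  rw [Nat.choose_two_right, Nat.mul_comm]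
  exact Nat.div_mul_le_self _ _


/-- The components of a sparse set: maximal tight subsets plus free single edges. -/
noncomputable def compsOf (k ℓ : ℤ) (A : Finset (Sym2 V)) : Finset (Finset (Sym2 V)) :=
  ((A.filter (InTight k ℓ A)).image (Mset k ℓ A)) ∪
    ((A.filter (fun e => ¬ InTight k ℓ A e)).image (fun e => {e}))

lemma mem_Tset {k ℓ : ℤ} (hk : 0 ≤ k) {A : Finset (Sym2 V)} (hA : CountSparse k ℓ A)
    {T : Finset (Sym2 V)} (hT : T ∈ (A.filter (InTight k ℓ A)).image (Mset k ℓ A)) :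
    Tight k ℓ T ∧ T ⊆ A ∧ ∀ f ∈ T, InTight k ℓ A f ∧ Mset k ℓ A f = T := by
  rcases Finset.mem_image.1 hT with ⟨e, he, rfl⟩
  rcases Finset.mem_filter.1 he with ⟨heA, hin⟩
  obtain ⟨ht, hmem, hsub⟩ := Mset_spec hk hA hin
  refine ⟨ht, hsub, fun f hf => ?_⟩
  exact ⟨⟨_, hsub, ht, hf⟩, Mset_eq hk hA hin hf⟩

lemma comps_sum {k ℓ : ℤ} (hk : 0 ≤ k) {A : Finset (Sym2 V)} (hA : CountSparse k ℓ A) :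
    ∑ T ∈ compsOf k ℓ A, T.card = A.card := by
  classical
  set Ts := (A.filter (InTight k ℓ A)).image (Mset k ℓ A) with hTs
  set Fs := (A.filter (fun e => ¬ InTight k ℓ A e)).image (fun e => ({e} : Finset (Sym2 V)))
    with hFs
  have hdisjTF : Disjoint Ts Fs := by
    rw [Finset.disjoint_right]
    intro T hTF hTT
    rcases Finset.mem_image.1 hTF with ⟨e, he, rfl⟩
    rcases Finset.mem_filter.1 he with ⟨heA, hnin⟩
    have := (mem_Tset hk hA hTT).2.2 e (by simp)
    exact hnin this.1
  have hsum : ∑ T ∈ compsOf k ℓ A, T.card = ∑ T ∈ Ts, T.card + ∑ T ∈ Fs, T.card := by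
    rw [compsOf, ← hTs, ← hFs, Finset.sum_union hdisjTF]
  have hFsum : ∑ T ∈ Fs, T.card = (A.filter (fun e => ¬ InTight k ℓ A e)).card := by
    rw [hFs, Finset.sum_image (by intro x hx y hy hxy; simpa using hxy)]
    simp
  have hTdisj : ∀ T₁ ∈ Ts, ∀ T₂ ∈ Ts, T₁ ≠ T₂ → Disjoint (id T₁) (id T₂) := by
    intro T₁ h₁ T₂ h₂ hne
    rw [Finset.disjoint_left]
    intro f hf1 hf2
    have e1 := (mem_Tset hk hA h₁).2.2 f hf1
    have e2 := (mem_Tset hk hA h₂).2.2 f hf2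
    exact hne (e1.2 ▸ e2.2 ▸ rfl)
  have hTbi : Ts.biUnion id = A.filter (InTight k ℓ A) := by
    ext f
    simp only [Finset.mem_biUnion, id, Finset.mem_filter]
    constructor
    · rintro ⟨T, hT, hfT⟩
      obtain ⟨ht, hsub, hall⟩ := mem_Tset hk hA hT
      exact ⟨hsub hfT, (hall f hfT).1⟩
    · rintro ⟨hfA, hfin⟩
      refine ⟨Mset k ℓ A f, ?_, (Mset_spec hk hA hfin).2.1⟩
      exact Finset.mem_image.2 ⟨f, Finset.mem_filter.2 ⟨hfA, hfin⟩, rfl⟩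
  have hTsum : ∑ T ∈ Ts, T.card = (A.filter (InTight k ℓ A)).card := by
    rw [← hTbi, Finset.card_biUnion hTdisj]
    rfl
  rw [hsum, hFsum, hTsum, Finset.card_filter_add_card_filter_not]

lemma comps_mem_basic {k ℓ : ℤ} (hk : 0 ≤ k) {A : Finset (Sym2 V)} (hA : CountSparse k ℓ A)
    {T : Finset (Sym2 V)} (hT : T ∈ compsOf k ℓ A) : T ⊆ A ∧ T.Nonempty := by
  rcases Finset.mem_union.1 hT with h | h
  · obtain ⟨ht, hsub, _⟩ := mem_Tset hk hA h
    exact ⟨hsub, ht.1⟩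
  · rcases Finset.mem_image.1 h with ⟨e, he, rfl⟩
    exact ⟨by simpa using (Finset.mem_filter.1 he).1, by simp⟩

/-- Structural dichotomy for components: small (a single edge on 2 vertices)
or big (tight on at least `2k-1 ≥ 3` vertices). -/
lemma comps_mem_struct {k ℓ : ℤ} (hk : 2 ≤ k) (hl1 : k < ℓ) (hl : ℓ ≤ 2*k - 1)
    {A : Finset (Sym2 V)} (hA : CountSparse k ℓ A) (hd : ∀ e ∈ A, ¬ e.IsDiag)
    {T : Finset (Sym2 V)} (hT : T ∈ compsOf k ℓ A) :
    ((incVerts T).card = 2 ∧ T.card = 1) ∨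
      ((T.card : ℤ) = k * (incVerts T).card - ℓ ∧ 3 ≤ (incVerts T).card ∧
        2*k - 1 ≤ ((incVerts T).card : ℤ)) := by
  have hk0 : (0:ℤ) ≤ k := by omega
  obtain ⟨hsub, hne⟩ := comps_mem_basic hk0 hA hT
  have hdT : ∀ e ∈ T, ¬ e.IsDiag := fun e he => hd e (hsub he)
  have h2le : 2 ≤ (incVerts T).card := two_le_card_incVerts hne hdT
  rcases Finset.mem_union.1 hT with h | h
  · -- tight component
    obtain ⟨ht, _, _⟩ := mem_Tset hk0 hA h
    rcases Nat.eq_or_lt_of_le h2le with h2 | h3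
    · -- 2 vertices: card ≤ 1, and tight means card = 2k - ℓ ≥ 1, so card = 1
      left
      have hc1 : T.card ≤ 1 := by
        have := card_le_choose hdT
        rw [← h2] at this
        simpa using this
      have hcge : (1:ℤ) ≤ T.card := by exact_mod_cast hne.card_pos
      omega
    · right
      have hch := card_le_choose hdT
      have h2c := two_choose_le (incVerts T).card
      have hchoose : 2 * (T.card : ℤ) ≤ ((incVerts T).card : ℤ) * ((incVerts T).card - 1) := by
        have hx1 : 1 ≤ (incVerts T).card := by omega
        have : 2 * T.card ≤ (incVerts T).card * ((incVerts T).card - 1) := by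
          calc 2 * T.card ≤ 2 * (incVerts T).card.choose 2 := by omega
            _ ≤ _ := h2c
        zify [hx1] at this
        convert this using 2
      have hx3 : (3:ℤ) ≤ ((incVerts T).card : ℤ) := by exact_mod_cast h3
      exact ⟨ht.2, by exact_mod_cast hx3, arith_big hk hl hx3 ht.2 hchoose⟩
  · -- free single edge
    left
    rcases Finset.mem_image.1 h with ⟨e, he, rfl⟩
    have heA := (Finset.mem_filter.1 he).1
    constructor
    · induction e using Sym2.ind with
      | _ a b =>
        have hab : a ≠ b := by simpa using hd _ heA
        exact card_incVerts_singleton hab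
    · simp

lemma exists_tight_of_not_sparse_insert {k ℓ : ℤ} (hk : 2 ≤ k) (hl : ℓ ≤ 2*k - 1)
    {A : Finset (Sym2 V)} (hA : CountSparse k ℓ A) {e : Sym2 V} (he : ¬ e.IsDiag)
    (heA : e ∉ A) (hnot : ¬ CountSparse k ℓ (insert e A)) :
    ∃ T ⊆ A, Tight k ℓ T ∧ ∀ v ∈ e, v ∈ incVerts T := by
  rw [CountSparse] at hnot
  push_neg at hnot
  obtain ⟨F', hsub, hne, hgt⟩ := hnot
  have heF : e ∈ F' := by
    by_contra hef
    have : F' ⊆ A := fun x hx => by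
      rcases Finset.mem_insert.1 (hsub hx) with rfl | h
      · exact absurd hx hef
      · exact h
    exact absurd (hA F' this hne) (not_le.2 hgt)
  set T := F'.erase e with hTdef
  have hTA : T ⊆ A := by
    intro x hx
    rcases Finset.mem_erase.1 hx with ⟨hxe, hxF⟩
    rcases Finset.mem_insert.1 (hsub hxF) with rfl | h
    · exact absurd rfl hxe
    · exact h
  have hcardF : F'.card = T.card + 1 := by
    rw [hTdef, Finset.card_erase_of_mem heF]
    have : 1 ≤ F'.card := hne.card_pos
    omega
  rcases T.eq_empty_or_nonempty with hTemp | hTne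
  · -- F' = {e}: contradiction with ℓ ≤ 2k-1
    exfalso
    have hF'e : F' = {e} := by
      rw [hTdef] at hTemp
      rcases (Finset.erase_eq_empty_iff F' e).1 hTemp with rfl | h
      · simp at hne
      · exact h
    rw [hF'e] at hgt
    induction e using Sym2.ind with
    | _ a b =>
      have hab : a ≠ b := by simpa using he
      rw [card_incVerts_singleton hab] at hgt
      simp only [Finset.card_singleton] at hgt
      push_cast at hgt
      omega
  · have hTsp : (T.card : ℤ) ≤ k * (incVerts T).card - ℓ := hA T hTA hTne
    have hmono : incVerts T ⊆ incVerts F' := incVerts_mono (Finset.erase_subset _ _)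
    have hvle : ((incVerts T).card : ℤ) ≤ ((incVerts F').card : ℤ) := by
      exact_mod_cast Finset.card_le_card hmono
    have hgt' : k * ((incVerts F').card : ℤ) - ℓ < (T.card : ℤ) + 1 := by
      rw [hcardF] at hgt
      push_cast at hgt
      linarith
    have hkv : k * ((incVerts T).card : ℤ) ≤ k * ((incVerts F').card : ℤ) := by
      apply mul_le_mul_of_nonneg_left hvle (by omega)
    have htight : (T.card : ℤ) = k * (incVerts T).card - ℓ := by omega
    have hveq : incVerts T = incVerts F' := by
      apply Finset.eq_of_subset_of_card_le hmono
      have : k * ((incVerts F').card : ℤ) ≤ k * ((incVerts T).card : ℤ) := by omega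
      have hk0 : (0:ℤ) < k := by omega
      have := le_of_mul_le_mul_left this hk0
      exact_mod_cast this
    refine ⟨T, hTA, ⟨hTne, htight⟩, fun v hv => ?_⟩
    rw [hveq]
    exact mem_incVerts.2 ⟨e, heF, hv⟩



lemma comps_cover_self {k ℓ : ℤ} {A : Finset (Sym2 V)} {e : Sym2 V} (he : e ∈ A) :
    ∃ T ∈ compsOf k ℓ A, e ∈ T := by
  by_cases hin : InTight k ℓ A e
  · obtain ⟨T', hT'A, hT', heT'⟩ := hin
    refine ⟨Mset k ℓ A e, ?_, ?_⟩
    · exact Finset.mem_union.2 (Or.inl (Finset.mem_image.2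
        ⟨e, Finset.mem_filter.2 ⟨he, ⟨T', hT'A, hT', heT'⟩⟩, rfl⟩))
    · exact subset_Mset hT'A hT' heT' heT'
  · refine ⟨{e}, ?_, by simp⟩
    exact Finset.mem_union.2 (Or.inr (Finset.mem_image.2
      ⟨e, Finset.mem_filter.2 ⟨he, hin⟩, rfl⟩))

lemma comps_nonempty {k ℓ : ℤ} {A : Finset (Sym2 V)} (hA : A.Nonempty) :
    (compsOf k ℓ A).Nonempty := by
  obtain ⟨e, he⟩ := hA
  obtain ⟨T, hT, _⟩ := comps_cover_self (k := k) (ℓ := ℓ) he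
  exact ⟨T, hT⟩

set_option maxHeartbeats 2000000 in
theorem cover_count {k ℓ : ℕ} (hk : 2 ≤ k) (hkl : k < ℓ) (hl : ℓ ≤ 2*k-1)
    {G : SimpleGraph V} (hconn : VConn G (2*ℓ))
    (J : Finset (Finset (Sym2 V)))
    (hm : 2 ≤ J.card)
    (hstruct : ∀ T ∈ J, ((incVerts T).card = 2 ∧ T.card = 1) ∨
       ((T.card : ℤ) = (k:ℤ) * (incVerts T).card - ℓ ∧ 3 ≤ (incVerts T).card ∧
        2*(k:ℤ) - 1 ≤ ((incVerts T).card : ℤ)))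
    (hcover : ∀ e ∈ G.edgeFinset, ∃ T ∈ J, ∀ v ∈ e, v ∈ incVerts T) :
    (k:ℤ) * (Fintype.card V) - ℓ + 1 ≤ ∑ T ∈ J, (T.card : ℤ) := by
  classical
  have hl' : (ℓ:ℤ) ≤ 2*(k:ℤ) - 1 := by push_cast; omega
  have hn : 2*ℓ < Fintype.card V := hconn.1
  set n := Fintype.card V with hndef
  -- every component has at least 1 edge
  have hcard1 : ∀ T ∈ J, (1:ℤ) ≤ T.card := by
    intro T hT
    rcases hstruct T hT with ⟨_, h1⟩ | ⟨h1, _, h3⟩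
    · omega
    · have hkk : (0:ℤ) ≤ (k:ℤ) := by positivity
      nlinarith [mul_le_mul_of_nonneg_left h3 hkk]
  -- case 1 : some component spans everything
  by_cases hbig : ∃ T ∈ J, incVerts T = Finset.univ
  · obtain ⟨T₀, hT₀J, hT₀⟩ := hbig
    have hT₀card : (T₀.card : ℤ) = (k:ℤ)*n - ℓ := by
      rcases hstruct T₀ hT₀J with ⟨h2, _⟩ | ⟨h1, _, _⟩
      · exfalso
        rw [hT₀, Finset.card_univ, ← hndef] at h2
        omega
      · rw [hT₀, Finset.card_univ, ← hndef] at h1; exact h1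
    obtain ⟨T₁, hT₁J, hT₁ne⟩ := Finset.exists_mem_ne (s := J) (by omega) T₀
    have hsub : {T₀, T₁} ⊆ J := by
      intro x hx; rcases Finset.mem_insert.1 hx with rfl | hx
      · exact hT₀J
      · exact (Finset.mem_singleton.1 hx) ▸ hT₁J
    calc (k:ℤ)*n - ℓ + 1 ≤ ∑ T ∈ ({T₀, T₁} : Finset _), (T.card : ℤ) := by
          rw [Finset.sum_pair (Ne.symm hT₁ne)]
          have := hcard1 T₁ hT₁J
          omega
      _ ≤ ∑ T ∈ J, (T.card : ℤ) :=
          Finset.sum_le_sum_of_subset_of_nonneg hsub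
            (fun T hT _ => by have := hcard1 T hT; omega)
  · -- case 2 : all components proper
    push_neg at hbig
    -- work in ℚ
    set xq : Finset (Sym2 V) → ℚ := fun T => ((incVerts T).card : ℚ) with hxq
    set tq : Finset (Sym2 V) → ℚ := fun T => (T.card : ℚ) / xq T with htq
    set d : V → ℕ := fun v => (J.filter (fun T => v ∈ incVerts T)).card with hd
    have hx2n : ∀ T ∈ J, 2 ≤ (incVerts T).card := by
      intro T hT
      rcases hstruct T hT with ⟨h2, _⟩ | ⟨_, h3, _⟩ <;> omega
    have hx2 : ∀ T ∈ J, (2:ℚ) ≤ xq T := by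
      intro T hT
      simp only [hxq]
      exact_mod_cast hx2n T hT
    have hx0 : ∀ T ∈ J, xq T ≠ 0 := fun T hT => by have := hx2 T hT; positivity
    have ht_small : ∀ T ∈ J, (incVerts T).card = 2 → tq T = 1/2 := by
      intro T hT h2
      rcases hstruct T hT with ⟨_, hc⟩ | ⟨_, h3, _⟩
      · simp only [htq, hxq, hc, h2]
        norm_num
      · omega
    have ht_big : ∀ T ∈ J, 3 ≤ (incVerts T).card →
        tq T = (k:ℚ) - (ℓ:ℚ)/xq T ∧ (k:ℚ) - 1 ≤ tq T := by
      intro T hT h3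
      rcases hstruct T hT with ⟨h2, _⟩ | ⟨h1, _, hge⟩
      · omega
      · have hxpos : (0:ℚ) < xq T := lt_of_lt_of_le (by norm_num) (hx2 T hT)
        have hcq : (T.card : ℚ) = (k:ℚ) * xq T - ℓ := by
          simp only [hxq]
          exact_mod_cast h1
        have heq : tq T = (k:ℚ) - (ℓ:ℚ)/xq T := by
          simp only [htq, hcq]
          field_simp
        refine ⟨heq, ?_⟩
        rw [heq]
        have hlx : (ℓ:ℚ) ≤ xq T := by
          have h1' : (ℓ:ℤ) ≤ ((incVerts T).card : ℤ) := by omega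
          simp only [hxq]
          exact_mod_cast h1'
        have : (ℓ:ℚ)/xq T ≤ 1 := by
          rw [div_le_one hxpos]; exact hlx
        linarith
    have ht_half : ∀ T ∈ J, (1/2 : ℚ) ≤ tq T := by
      intro T hT
      rcases Nat.lt_or_ge (incVerts T).card 3 with h | h
      · have h2 : (incVerts T).card = 2 := by have := hx2n T hT; omega
        rw [ht_small T hT h2]
      · have := (ht_big T hT h).2
        have hk1 : (2:ℚ) ≤ (k:ℚ) := by exact_mod_cast hk
        linarith
    -- minimum degree and the degree-cover inequality (a)
    have hmd : ∀ v : V, 2*ℓ ≤ G.degree v := fun v => vconn_degree hconn v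
    have hJv : ∀ (v : V) (u : V), G.Adj v u →
        ∃ T ∈ J.filter (fun T => v ∈ incVerts T), u ∈ (incVerts T).erase v := by
      intro v u hadj
      have hedge : s(v,u) ∈ G.edgeFinset := SimpleGraph.mem_edgeFinset.2 hadj
      obtain ⟨T, hTJ, hall⟩ := hcover _ hedge
      refine ⟨T, Finset.mem_filter.2 ⟨hTJ, hall v (by simp)⟩, ?_⟩
      exact Finset.mem_erase.2 ⟨(G.ne_of_adj hadj).symm, hall u (by simp)⟩
    have hdegN : ∀ v : V, 2*ℓ ≤ ∑ T ∈ J.filter (fun T => v ∈ incVerts T),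
        ((incVerts T).card - 1) := by
      intro v
      have hsubB : G.neighborFinset v ⊆
          (J.filter (fun T => v ∈ incVerts T)).biUnion (fun T => (incVerts T).erase v) := by
        intro u hu
        have hadj : G.Adj v u := by rwa [SimpleGraph.mem_neighborFinset] at hu
        obtain ⟨T, hT, hmem⟩ := hJv v u hadj
        exact Finset.mem_biUnion.2 ⟨T, hT, hmem⟩
      calc 2*ℓ ≤ G.degree v := hmd v
        _ = (G.neighborFinset v).card := (G.card_neighborFinset_eq_degree v).symm
        _ ≤ ((J.filter (fun T => v ∈ incVerts T)).biUnion
              (fun T => (incVerts T).erase v)).card := Finset.card_le_card hsubB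
        _ ≤ ∑ T ∈ J.filter (fun T => v ∈ incVerts T), ((incVerts T).erase v).card :=
            Finset.card_biUnion_le
        _ = ∑ T ∈ J.filter (fun T => v ∈ incVerts T), ((incVerts T).card - 1) := by
            apply Finset.sum_congr rfl
            intro T hT
            exact Finset.card_erase_of_mem (Finset.mem_filter.1 hT).2
    have hdeg : ∀ v : V, (2*ℓ : ℚ) ≤ ∑ T ∈ J.filter (fun T => v ∈ incVerts T), (xq T - 1) := by
      intro v
      have h := hdegN v
      have hcast : ((∑ T ∈ J.filter (fun T => v ∈ incVerts T), ((incVerts T).card - 1) : ℕ) : ℚ)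
          = ∑ T ∈ J.filter (fun T => v ∈ incVerts T), (xq T - 1) := by
        push_cast
        apply Finset.sum_congr rfl
        intro T hT
        have h2 := hx2n T (Finset.mem_filter.1 hT).1
        have h1 : 1 ≤ (incVerts T).card := by omega
        simp only [hxq]
        push_cast [Nat.cast_sub h1]
        ring
      calc (2*ℓ : ℚ) = ((2*ℓ : ℕ) : ℚ) := by push_cast; ring
        _ ≤ _ := by rw [← hcast]; exact_mod_cast h
    have hd1 : ∀ v : V, 1 ≤ d v := by
      intro v
      have hpos : 0 < G.degree v := lt_of_lt_of_le (by omega) (hmd v)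
      obtain ⟨u, hadj⟩ := (SimpleGraph.degree_pos_iff_exists_adj G v).1 hpos
      obtain ⟨T, hT, _⟩ := hJv v u hadj
      have : (J.filter (fun T => v ∈ incVerts T)).Nonempty := ⟨T, hT⟩
      simpa [hd, Finset.card_pos] using this
    -- the private-vertex components
    set W : Finset (Finset (Sym2 V)) :=
      J.filter (fun T => ∃ v, d v = 1 ∧ v ∈ incVerts T) with hW
    have hJvsing : ∀ (v : V), d v = 1 → ∀ T ∈ J, v ∈ incVerts T →
        J.filter (fun T => v ∈ incVerts T) = {T} := by
      intro v hdv T hTJ hvT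
      have hTm : T ∈ J.filter (fun T => v ∈ incVerts T) := Finset.mem_filter.2 ⟨hTJ, hvT⟩
      rcases Finset.card_eq_one.1 hdv with ⟨a, ha⟩
      rw [ha] at hTm ⊢
      rw [Finset.mem_singleton.1 hTm]
    have hWx : ∀ T ∈ W, (2*(ℓ:ℚ) + 1 ≤ xq T) := by
      intro T hT
      rcases Finset.mem_filter.1 hT with ⟨hTJ, v₀, hdv₀, hv₀⟩
      have h := hdeg v₀
      rw [hJvsing v₀ hdv₀ T hTJ hv₀, Finset.sum_singleton] at h
      linarith
    have hWbig : ∀ T ∈ W, 3 ≤ (incVerts T).card ∧ (2*(ℓ:ℚ) + 1 ≤ xq T) := by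
      intro T hT
      have hx := hWx T hT
      refine ⟨?_, hx⟩
      have h7 : (7:ℚ) ≤ xq T := by
        have : (3:ℚ) ≤ (ℓ:ℚ) := by exact_mod_cast (by omega : 3 ≤ ℓ)
        linarith
      have : (7:ℕ) ≤ (incVerts T).card := by
        simp only [hxq] at h7
        exact_mod_cast h7
      omega
    -- the cut lemma
    have hcut : ∀ T ∈ W,
        2*ℓ ≤ ((incVerts T) ∩ (Finset.univ.filter (fun v => 2 ≤ d v))).card := by
      intro T hT
      rcases Finset.mem_filter.1 hT with ⟨hTJ, v₀, hdv₀, hv₀⟩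
      by_contra hlt
      push_neg at hlt
      set S := (incVerts T) ∩ (Finset.univ.filter (fun v => 2 ≤ d v)) with hS
      have hconn' := hconn.2 S hlt
      -- v₀ is not in S
      have hv₀S : v₀ ∉ S := by
        intro hmem
        have := (Finset.mem_filter.1 (Finset.mem_inter.1 hmem).2).2
        omega
      -- pick a vertex outside incVerts T
      have hTne : incVerts T ≠ Finset.univ := hbig T hTJ
      have : ∃ u, u ∉ incVerts T := by
        by_contra hc
        push_neg at hc
        exact hTne (Finset.eq_univ_iff_forall.2 hc)
      obtain ⟨u, hu⟩ := this
      have huS : u ∉ S := fun hmem => hu (Finset.mem_inter.1 hmem).1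
      have hv₀' : v₀ ∈ ((↑S : Set V)ᶜ) := by simpa using hv₀S
      have hu' : u ∈ ((↑S : Set V)ᶜ) := by simpa using huS
      obtain ⟨w⟩ := hconn'.preconnected ⟨v₀, hv₀'⟩ ⟨u, hu'⟩
      have hclosed : ∀ a b : ((↑S : Set V)ᶜ : Set V),
          (G.induce ((↑S : Set V)ᶜ)).Adj a b → (a : V) ∈ incVerts T → (b : V) ∈ incVerts T := by
        intro a b hadj haT
        have hGadj : G.Adj (a : V) (b : V) := hadj
        have hedge : s((a:V),(b:V)) ∈ G.edgeFinset := SimpleGraph.mem_edgeFinset.2 hGadj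
        obtain ⟨T', hT'J, hall⟩ := hcover _ hedge
        by_cases hTT : T' = T
        · exact hTT ▸ hall (b : V) (by simp)
        · exfalso
          have haT' : (a:V) ∈ incVerts T' := hall (a:V) (by simp)
          have h2d : 2 ≤ d (a:V) := by
            have hpair : ({T, T'} : Finset _) ⊆ J.filter (fun X => (a:V) ∈ incVerts X) := by
              intro X hX
              rcases Finset.mem_insert.1 hX with rfl | hX
              · exact Finset.mem_filter.2 ⟨hTJ, haT⟩
              · rw [Finset.mem_singleton.1 hX]
                exact Finset.mem_filter.2 ⟨hT'J, haT'⟩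
            calc 2 = ({T, T'} : Finset _).card := (Finset.card_pair (Ne.symm hTT)).symm
              _ ≤ _ := Finset.card_le_card hpair
          have : (a:V) ∈ S := Finset.mem_inter.2 ⟨haT, Finset.mem_filter.2 ⟨Finset.mem_univ _, h2d⟩⟩
          exact a.property (Finset.mem_coe.2 this)
      have := reach_closed (K := {z : ((↑S : Set V)ᶜ : Set V) | (z : V) ∈ incVerts T})
        hclosed hv₀ w
      exact hu this
    -- double counting
    have hdouble : ∑ T ∈ J, (T.card:ℚ)
        = ∑ v ∈ Finset.univ, ∑ T ∈ J.filter (fun T => v ∈ incVerts T), tq T := by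
      have hswap := Finset.sum_comm' (s := J) (t := fun T => incVerts T)
        (t' := Finset.univ) (s' := fun v => J.filter (fun T => v ∈ incVerts T))
        (f := fun T _ => tq T)
        (by intro T v; simp [Finset.mem_filter, and_comm])
      rw [← hswap]
      apply Finset.sum_congr rfl
      intro T hT
      rw [Finset.sum_const, nsmul_eq_mul, htq]
      field_simp [hx0 T hT]
      try ring
    -- per-vertex bounds
    have hKpr : ∀ v : V, d v = 1 →
        (k:ℚ) - ∑ T ∈ (J.filter (fun T => v ∈ incVerts T)).filter (fun T => T ∈ W),
          (ℓ:ℚ)/xq T ≤ ∑ T ∈ J.filter (fun T => v ∈ incVerts T), tq T := by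
      intro v hdv
      -- the unique component containing v
      have hne : (J.filter (fun T => v ∈ incVerts T)).Nonempty := by
        rw [← Finset.card_pos]
        have hh : d v = (J.filter (fun T => v ∈ incVerts T)).card := rfl
        omega
      obtain ⟨T, hTmem⟩ := hne
      rcases Finset.mem_filter.1 hTmem with ⟨hTJ, hvT⟩
      have hsing := hJvsing v hdv T hTJ hvT
      have hTW : T ∈ W := Finset.mem_filter.2 ⟨hTJ, v, hdv, hvT⟩
      rw [hsing]
      have hfil : ({T} : Finset _).filter (fun T => T ∈ W) = {T} := by
        apply Finset.filter_true_of_mem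
        intro X hX
        rw [Finset.mem_singleton.1 hX]
        exact hTW
      rw [hfil, Finset.sum_singleton, Finset.sum_singleton]
      have hbig3 := (hWbig T hTW).1
      rw [(ht_big T hTJ hbig3).1]
    have hKu : ∀ v : V, 2 ≤ d v →
        (k:ℚ) + ∑ T ∈ (J.filter (fun T => v ∈ incVerts T)).filter (fun T => T ∈ W),
          (1/2 - (ℓ:ℚ)/xq T) ≤ ∑ T ∈ J.filter (fun T => v ∈ incVerts T), tq T := by
      intro v hdv
      set Jv := J.filter (fun T => v ∈ incVerts T) with hJvdef
      have hJvsub : Jv ⊆ J := Finset.filter_subset _ _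
      have hJvcard : Jv.card = d v := rfl
      set Wv := Jv.filter (fun T => T ∈ W) with hWvdef
      set Rv := Jv.filter (fun T => ¬ T ∈ W) with hRvdef
      have hsplit : ∑ T ∈ Wv, tq T + ∑ T ∈ Rv, tq T = ∑ T ∈ Jv, tq T :=
        Finset.sum_filter_add_sum_filter_not Jv _ tq
      have hWterm : ∀ T ∈ Wv, tq T - (1/2 - (ℓ:ℚ)/xq T) = (k:ℚ) - 1/2 := by
        intro T hT
        rcases Finset.mem_filter.1 hT with ⟨hTJv, hTW⟩
        rw [(ht_big T (hJvsub hTJv) (hWbig T hTW).1).1]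
        ring
      have hWsum : ∑ T ∈ Wv, tq T - ∑ T ∈ Wv, (1/2 - (ℓ:ℚ)/xq T)
          = (Wv.card : ℚ) * ((k:ℚ) - 1/2) := by
        rw [← Finset.sum_sub_distrib, Finset.sum_congr rfl hWterm, Finset.sum_const,
          nsmul_eq_mul]
      have hRpos : (0:ℚ) ≤ ∑ T ∈ Rv, tq T :=
        Finset.sum_nonneg (fun T hT => le_trans (by norm_num)
          (ht_half T (hJvsub (Finset.mem_filter.1 hT).1)))
      have hcards : Wv.card + Rv.card = Jv.card := Finset.card_filter_add_card_filter_not _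
      -- reduce to : k ≤ Wv.card * (k - 1/2) + ∑_{Rv} tq
      rw [← hsplit]
      have hred : (k:ℚ) ≤ (Wv.card : ℚ) * ((k:ℚ) - 1/2) + ∑ T ∈ Rv, tq T → (k:ℚ) +
          ∑ T ∈ Wv, (1/2 - (ℓ:ℚ)/xq T) ≤ ∑ T ∈ Wv, tq T + ∑ T ∈ Rv, tq T := by
        intro h
        linarith [hWsum]
      apply hred
      have hkq : (2:ℚ) ≤ (k:ℚ) := by exact_mod_cast hk
      rcases Nat.lt_or_ge Wv.card 1 with hw | hw1
      · -- no W-components at v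
        have hWv0 : Wv = ∅ := by rw [← Finset.card_eq_zero]; omega
        have hRvJv : Rv = Jv := by
          rw [hRvdef]
          apply Finset.filter_true_of_mem
          intro T hT
          intro hTW
          have : T ∈ Wv := Finset.mem_filter.2 ⟨hT, hTW⟩
          rw [hWv0] at this
          simp at this
        rw [hWv0, hRvJv]
        simp only [Finset.card_empty, Nat.cast_zero, zero_mul, zero_add]
        -- now show k ≤ ∑_{Jv} tq
        set Bv := Jv.filter (fun T => 3 ≤ (incVerts T).card) with hBvdef
        set Sv := Jv.filter (fun T => ¬ 3 ≤ (incVerts T).card) with hSvdef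
        have hsplit2 : ∑ T ∈ Bv, tq T + ∑ T ∈ Sv, tq T = ∑ T ∈ Jv, tq T :=
          Finset.sum_filter_add_sum_filter_not Jv _ tq
        have hcards2 : Bv.card + Sv.card = Jv.card :=
          Finset.card_filter_add_card_filter_not _
        have hSval : ∀ T ∈ Sv, tq T = 1/2 ∧ xq T = 2 := by
          intro T hT
          rcases Finset.mem_filter.1 hT with ⟨hTJv, h3⟩
          have h2 : (incVerts T).card = 2 := by
            have := hx2n T (hJvsub hTJv); omega
          refine ⟨ht_small T (hJvsub hTJv) h2, ?_⟩
          simp only [hxq, h2]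
          norm_num
        have hSsum : ∑ T ∈ Sv, tq T = (Sv.card : ℚ) * (1/2) := by
          rw [Finset.sum_congr rfl (fun T hT => (hSval T hT).1), Finset.sum_const, nsmul_eq_mul]
        rcases Nat.lt_or_ge Bv.card 1 with hb | hb1
        · -- all small: degree forces many
          have hBv0 : Bv = ∅ := by rw [← Finset.card_eq_zero]; omega
          have hb0 : Bv.card = 0 := by rw [hBv0]; simp
          have hSvJv : Sv = Jv :=
            Finset.eq_of_subset_of_card_le (Finset.filter_subset _ _) (by omega)
          have hdg := hdeg v
          rw [← hJvdef, ← hSvJv] at hdg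
          have hdsum : ∑ T ∈ Sv, (xq T - 1) = (Sv.card : ℚ) := by
            rw [Finset.sum_congr rfl (fun T hT => by rw [(hSval T hT).2]; norm_num : ∀ T ∈ Sv, xq T - 1 = (1:ℚ)),
              Finset.sum_const, nsmul_eq_mul, mul_one]
          rw [hdsum] at hdg
          rw [← hsplit2, hBv0, hSsum]
          simp only [Finset.sum_empty, zero_add]
          have hlq : (k:ℚ) + 1 ≤ (ℓ:ℚ) := by exact_mod_cast hkl
          linarith
        · rcases Nat.lt_or_ge Bv.card 2 with hb2 | hb2
          · -- exactly one big component
            have hBv1 : Bv.card = 1 := by omega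
            obtain ⟨Tb, hTb⟩ := Finset.card_eq_one.1 hBv1
            have hTbJv : Tb ∈ Jv := by
              have : Tb ∈ Bv := by rw [hTb]; simp
              exact (Finset.mem_filter.1 this).1
            have hTb3 : 3 ≤ (incVerts Tb).card := by
              have : Tb ∈ Bv := by rw [hTb]; simp
              exact (Finset.mem_filter.1 this).2
            have htb := ht_big Tb (hJvsub hTbJv) hTb3
            rw [← hsplit2, hTb, Finset.sum_singleton, hSsum]
            rcases Nat.lt_or_ge Sv.card 2 with hs2 | hs2
            · -- one small: x_b ≥ 2ℓ
              have hs1 : Sv.card = 1 := by omega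
              have hdg := hdeg v
              rw [← hJvdef] at hdg
              have : ∑ T ∈ Jv, (xq T - 1) = (xq Tb - 1) + (Sv.card : ℚ) := by
                rw [← Finset.sum_filter_add_sum_filter_not Jv
                  (fun T => 3 ≤ (incVerts T).card) (fun T => xq T - 1), ← hBvdef, ← hSvdef,
                  hTb, Finset.sum_singleton]
                congr 1
                rw [Finset.sum_congr rfl (fun T hT => by rw [(hSval T hT).2]; norm_num : ∀ T ∈ Sv, xq T - 1 = (1:ℚ)),
                  Finset.sum_const, nsmul_eq_mul, mul_one]
              rw [this, hs1] at hdg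
              have hxb : 2*(ℓ:ℚ) ≤ xq Tb := by push_cast at hdg ⊢; linarith
              have hxbpos : (0:ℚ) < xq Tb := lt_of_lt_of_le (by norm_num) (hx2 Tb (hJvsub hTbJv))
              have hlpos : (0:ℚ) < (ℓ:ℚ) := by
                have : 3 ≤ ℓ := by omega
                exact_mod_cast lt_of_lt_of_le (by norm_num) this
              have hfrac : (ℓ:ℚ)/xq Tb ≤ 1/2 := by
                rw [div_le_iff₀ hxbpos]
                linarith
              rw [htb.1, hs1]
              push_cast
              linarith
            · -- at least two smalls
              rw [htb.1]
              have hfrac : (ℓ:ℚ)/xq Tb ≤ 1 := by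
                have := htb.2
                rw [htb.1] at this
                linarith
              have : (2:ℚ) ≤ (Sv.card : ℚ) := by exact_mod_cast hs2
              linarith
          · -- at least two big components
            have hBsum : (Bv.card : ℚ) * ((k:ℚ) - 1) ≤ ∑ T ∈ Bv, tq T := by
              have h := Finset.card_nsmul_le_sum Bv tq ((k:ℚ) - 1) (fun T hT =>
                (ht_big T (hJvsub (Finset.mem_filter.1 hT).1) (Finset.mem_filter.1 hT).2).2)
              rwa [nsmul_eq_mul] at h
            have hSpos : (0:ℚ) ≤ ∑ T ∈ Sv, tq T := by
              rw [hSsum]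
              have h0 : (0:ℚ) ≤ (Sv.card:ℚ) := Nat.cast_nonneg _
              linarith
            have hb2q : (2:ℚ) ≤ (Bv.card:ℚ) := by exact_mod_cast hb2
            rw [← hsplit2]
            have hmul : (2:ℚ)*((k:ℚ)-1) ≤ (Bv.card:ℚ)*((k:ℚ)-1) :=
              mul_le_mul_of_nonneg_right hb2q (by linarith)
            linarith
      · rcases Nat.lt_or_ge Wv.card 2 with hw2 | hw2
        · -- exactly one W-component
          have hw1' : Wv.card = 1 := by omega
          have hRvcard : 1 ≤ Rv.card := by omega
          have hRsum : (Rv.card : ℚ) * (1/2) ≤ ∑ T ∈ Rv, tq T := by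
            have h := Finset.card_nsmul_le_sum Rv tq ((1:ℚ)/2) (fun T hT =>
              ht_half T (hJvsub (Finset.mem_filter.1 hT).1))
            rwa [nsmul_eq_mul] at h
          have h1R : (1:ℚ) ≤ (Rv.card : ℚ) := by exact_mod_cast hRvcard
          have hmul : (1:ℚ)*(1/2) ≤ (Rv.card:ℚ)*(1/2) :=
            mul_le_mul_of_nonneg_right h1R (by norm_num)
          rw [hw1']
          push_cast
          linarith
        · -- at least two W-components
          have h2W : (2:ℚ) ≤ (Wv.card : ℚ) := by exact_mod_cast hw2
          have hmul : (2:ℚ)*((k:ℚ)-1/2) ≤ (Wv.card:ℚ)*((k:ℚ)-1/2) :=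
            mul_le_mul_of_nonneg_right h2W (by linarith)
          linarith
    -- final assembly
    set U := Finset.univ.filter (fun v => 2 ≤ d v) with hU
    set Pr := Finset.univ.filter (fun v => ¬ 2 ≤ d v) with hPrdef
    have hPr1 : ∀ v ∈ Pr, d v = 1 := by
      intro v hv
      have h1 := hd1 v
      have h2 := (Finset.mem_filter.1 hv).2
      omega
    have hswapW : ∀ (Vs : Finset V) (f : Finset (Sym2 V) → ℚ),
        (∑ v ∈ Vs, ∑ T ∈ (J.filter (fun T => v ∈ incVerts T)).filter (fun T => T ∈ W), f T)
        = ∑ T ∈ W, ((Vs ∩ incVerts T).card : ℚ) * f T := by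
      intro Vs f
      have hcond : ∀ (v : V) (T : Finset (Sym2 V)),
          v ∈ Vs ∧ T ∈ (J.filter (fun T => v ∈ incVerts T)).filter (fun T => T ∈ W)
          ↔ v ∈ Vs ∩ incVerts T ∧ T ∈ W := by
        intro v T
        simp only [Finset.mem_filter, Finset.mem_inter]
        constructor
        · rintro ⟨hv, ⟨⟨hTJ, hvT⟩, hTW⟩⟩
          exact ⟨⟨hv, hvT⟩, hTW⟩
        · rintro ⟨⟨hv, hvT⟩, hTW⟩
          exact ⟨hv, ⟨⟨(Finset.mem_filter.1 hTW).1, hvT⟩, hTW⟩⟩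
      rw [Finset.sum_comm' hcond]
      apply Finset.sum_congr rfl
      intro T hT
      rw [Finset.sum_const, nsmul_eq_mul]
    have hsplitV : (∑ v ∈ U, ∑ T ∈ J.filter (fun T => v ∈ incVerts T), tq T)
        + (∑ v ∈ Pr, ∑ T ∈ J.filter (fun T => v ∈ incVerts T), tq T)
        = ∑ v ∈ Finset.univ, ∑ T ∈ J.filter (fun T => v ∈ incVerts T), tq T :=
      Finset.sum_filter_add_sum_filter_not _ _ _
    have hcardUP : U.card + Pr.card = Fintype.card V := by
      have h := Finset.card_filter_add_card_filter_not
        (s := Finset.univ) (p := fun v : V => 2 ≤ d v)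
      rw [hU, hPrdef]
      simp only [not_le] at h ⊢
      simpa using h
    have hUbound : (U.card : ℚ) * k +
        (∑ T ∈ W, ((U ∩ incVerts T).card : ℚ) * (1/2 - (ℓ:ℚ)/xq T))
        ≤ ∑ v ∈ U, ∑ T ∈ J.filter (fun T => v ∈ incVerts T), tq T := by
      rw [← hswapW U]
      calc (U.card : ℚ) * k + ∑ v ∈ U, ∑ T ∈ (J.filter (fun T => v ∈ incVerts T)).filter
            (fun T => T ∈ W), (1/2 - (ℓ:ℚ)/xq T)
          = ∑ v ∈ U, ((k:ℚ) + ∑ T ∈ (J.filter (fun T => v ∈ incVerts T)).filter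
            (fun T => T ∈ W), (1/2 - (ℓ:ℚ)/xq T)) := by
            rw [Finset.sum_add_distrib, Finset.sum_const, nsmul_eq_mul]
        _ ≤ _ := Finset.sum_le_sum (fun v hv => hKu v (Finset.mem_filter.1 hv).2)
    have hPrbound : (Pr.card : ℚ) * k -
        (∑ T ∈ W, ((Pr ∩ incVerts T).card : ℚ) * ((ℓ:ℚ)/xq T))
        ≤ ∑ v ∈ Pr, ∑ T ∈ J.filter (fun T => v ∈ incVerts T), tq T := by
      rw [← hswapW Pr]
      calc (Pr.card : ℚ) * k - ∑ v ∈ Pr, ∑ T ∈ (J.filter (fun T => v ∈ incVerts T)).filter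
            (fun T => T ∈ W), ((ℓ:ℚ)/xq T)
          = ∑ v ∈ Pr, ((k:ℚ) - ∑ T ∈ (J.filter (fun T => v ∈ incVerts T)).filter
            (fun T => T ∈ W), ((ℓ:ℚ)/xq T)) := by
            rw [Finset.sum_sub_distrib, Finset.sum_const, nsmul_eq_mul]
        _ ≤ _ := Finset.sum_le_sum (fun v hv => hKpr v (hPr1 v hv))
    -- per W component, the surplus covers the deficiency
    have hperW : ∀ T ∈ W, ((Pr ∩ incVerts T).card : ℚ) * ((ℓ:ℚ)/xq T)
        ≤ ((U ∩ incVerts T).card : ℚ) * (1/2 - (ℓ:ℚ)/xq T) := by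
      intro T hT
      have hxT := hWx T hT
      have hxpos : (0:ℚ) < xq T := by
        have : (0:ℚ) ≤ (ℓ:ℚ) := Nat.cast_nonneg _
        linarith
      have hc2 : (2*(ℓ:ℚ)) ≤ ((U ∩ incVerts T).card : ℚ) := by
        have h := hcut T hT
        rw [Finset.inter_comm] at h
        have : ((2*ℓ : ℕ):ℚ) ≤ ((U ∩ incVerts T).card : ℚ) := by exact_mod_cast h
        push_cast at this
        linarith
      have hc12 : ((Pr ∩ incVerts T).card : ℚ) + ((U ∩ incVerts T).card : ℚ) ≤ xq T := by
        have hdisj : Disjoint (Pr ∩ incVerts T) (U ∩ incVerts T) := by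
          apply Finset.disjoint_left.2
          intro a ha hb
          have h1 := (Finset.mem_filter.1 (Finset.mem_inter.1 ha).1).2
          have h2 := (Finset.mem_filter.1 (Finset.mem_inter.1 hb).1).2
          exact h1 h2
        have hsub : (Pr ∩ incVerts T) ∪ (U ∩ incVerts T) ⊆ incVerts T :=
          Finset.union_subset Finset.inter_subset_right Finset.inter_subset_right
        have := Finset.card_le_card hsub
        rw [Finset.card_union_of_disjoint hdisj] at this
        simp only [hxq]
        exact_mod_cast this
      set c1 := ((Pr ∩ incVerts T).card : ℚ) with hc1def
      set c2 := ((U ∩ incVerts T).card : ℚ) with hc2def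
      have hc1nn : (0:ℚ) ≤ c1 := Nat.cast_nonneg _
      have hlnn : (0:ℚ) ≤ (ℓ:ℚ) := Nat.cast_nonneg _
      have key : c1 * (ℓ:ℚ) ≤ c2 * (xq T/2 - (ℓ:ℚ)) := by
        have h1 : c1 * (ℓ:ℚ) ≤ (xq T - c2) * (ℓ:ℚ) :=
          mul_le_mul_of_nonneg_right (by linarith) hlnn
        have h3 : 2*(ℓ:ℚ)*xq T ≤ c2*xq T :=
          mul_le_mul_of_nonneg_right hc2 (le_of_lt hxpos)
        linarith [h1, h3]
      have hnum : (0:ℚ) ≤ c2 * (xq T/2 - (ℓ:ℚ)) - c1*(ℓ:ℚ) := by linarith [key]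
      have hxne : xq T ≠ 0 := ne_of_gt hxpos
      have e0 : (xq T/2)/xq T = 1/2 := by rw [div_right_comm, div_self hxne]
      have heq : c2 * (1/2 - (ℓ:ℚ)/xq T) - c1 * ((ℓ:ℚ)/xq T)
          = (c2 * (xq T/2 - (ℓ:ℚ)) - c1*(ℓ:ℚ))/xq T := by
        rw [sub_div, mul_div_assoc, mul_div_assoc, sub_div, e0]
      have hfin := div_nonneg hnum hxpos.le
      rw [← heq] at hfin
      linarith
    -- combine everything
    have hsum1 : ∑ T ∈ W, ((Pr ∩ incVerts T).card : ℚ) * ((ℓ:ℚ)/xq T)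
        ≤ ∑ T ∈ W, ((U ∩ incVerts T).card : ℚ) * (1/2 - (ℓ:ℚ)/xq T) :=
      Finset.sum_le_sum hperW
    have hfinalQ : (k:ℚ) * (Fintype.card V) - (ℓ:ℚ) + 1 ≤ ∑ T ∈ J, (T.card : ℚ) := by
      rw [hdouble]
      have hnn : ((U.card : ℚ) + (Pr.card : ℚ)) * k = (k:ℚ) * (Fintype.card V) := by
        have hc : ((U.card + Pr.card : ℕ) : ℚ) = ((Fintype.card V : ℕ) : ℚ) := by
          exact_mod_cast hcardUP
        push_cast at hc
        rw [hc]
        ring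
      have hl1 : (1:ℚ) ≤ (ℓ:ℚ) := by exact_mod_cast (by omega : 1 ≤ ℓ)
      rw [← hsplitV]
      linarith [hUbound, hPrbound, hsum1, hnn, hl1]
    exact_mod_cast hfinalQ

end Cnt

/-- For integers `2 ≤ k < ℓ ≤ 2k-1`, if `G` is `2ℓ`-connected then the count
matroid `M_{k,ℓ}(G)` is connected: its ground set has at least two elements, it is loopless
(every singleton has rank 1), and there is no bipartition `(E₁,E₂)` of the edge set with
`r(E₁), r(E₂) ≥ 1` and `r(E₁) + r(E₂) ≤ r(E)`. -/
theorem stmt_11 {V : Type} [Fintype V] (k ℓ : ℕ)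
    (hk : 2 ≤ k) (hkl : k < ℓ) (hl : ℓ ≤ 2 * k - 1)
    (G : SimpleGraph V) (hconn : VConn G (2 * ℓ)) :
    2 ≤ G.edgeFinset.card ∧
    (∀ e ∈ G.edgeFinset, countRank (k : ℤ) (ℓ : ℤ) {e} = 1) ∧
    (∀ E₁ E₂ : Finset (Sym2 V), E₁ ∪ E₂ = G.edgeFinset → Disjoint E₁ E₂ →
      1 ≤ countRank (k : ℤ) (ℓ : ℤ) E₁ → 1 ≤ countRank (k : ℤ) (ℓ : ℤ) E₂ →
      countRank (k : ℤ) (ℓ : ℤ) G.edgeFinset <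
        countRank (k : ℤ) (ℓ : ℤ) E₁ + countRank (k : ℤ) (ℓ : ℤ) E₂) := by
  classical
  have hnV : 2*ℓ < Fintype.card V := hconn.1
  have hl3 : 3 ≤ ℓ := by omega
  have hlZ : (ℓ:ℤ) ≤ 2*(k:ℤ) - 1 := by push_cast; omega
  have hkZ : (2:ℤ) ≤ (k:ℤ) := by exact_mod_cast hk
  have hklZ : (k:ℤ) < (ℓ:ℤ) := by exact_mod_cast hkl
  have hkn : (0:ℤ) ≤ (k:ℤ) * (Fintype.card V) - (ℓ:ℤ) := by
    have h7 : (7:ℤ) ≤ (Fintype.card V : ℤ) := by exact_mod_cast (by omega : 7 ≤ Fintype.card V)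
    nlinarith
  -- every edge of G is non-diagonal
  have hndiag : ∀ e ∈ G.edgeFinset, ¬ e.IsDiag := by
    intro e he
    exact G.not_isDiag_of_mem_edgeSet (SimpleGraph.mem_edgeFinset.1 he)
  refine ⟨?_, ?_, ?_⟩
  · -- at least two edges
    have hpos : 0 < Fintype.card V := by omega
    have : Nonempty V := Fintype.card_pos_iff.1 hpos
    obtain ⟨v⟩ := this
    have hdeg : 2 ≤ G.degree v := le_trans (by omega) (Cnt.vconn_degree hconn v)
    have hcard2 : 1 < (G.neighborFinset v).card := by
      rw [G.card_neighborFinset_eq_degree]; omega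
    obtain ⟨a, ha, b, hb, hab⟩ := Finset.one_lt_card.1 hcard2
    have hva : G.Adj v a := (SimpleGraph.mem_neighborFinset _ _ _).1 ha
    have hvb : G.Adj v b := (SimpleGraph.mem_neighborFinset _ _ _).1 hb
    apply Finset.one_lt_card.2
    refine ⟨s(v,a), ?_, s(v,b), ?_, ?_⟩
    · exact SimpleGraph.mem_edgeFinset.2 hva
    · exact SimpleGraph.mem_edgeFinset.2 hvb
    · intro hcon
      rw [Sym2.eq_iff] at hcon
      rcases hcon with ⟨_, rfl⟩ | ⟨h1, h2⟩
      · exact hab rfl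
      · exact (G.ne_of_adj hva) h2.symm
  · -- loopless: singletons have rank 1
    intro e he
    have hd : ¬ e.IsDiag := hndiag e he
    apply le_antisymm
    · apply Cnt.countRank_le
      intro A hA _
      exact le_trans (Finset.card_le_card hA) (by simp)
    · have := Cnt.le_countRank_of_sparse (F := ({e} : Finset (Sym2 V))) subset_rfl
        (Cnt.sparse_singleton hlZ hd)
      simpa using this
  · -- the connectivity inequality
    intro E₁ E₂ hunion hdisj hr1 hr2
    have hE1 : E₁ ⊆ G.edgeFinset := hunion ▸ Finset.subset_union_left
    have hE2 : E₂ ⊆ G.edgeFinset := hunion ▸ Finset.subset_union_right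
    obtain ⟨A₁, hA₁E, hA₁s, hA₁c⟩ := Cnt.exists_max_sparse (k:ℤ) (ℓ:ℤ) E₁
    obtain ⟨A₂, hA₂E, hA₂s, hA₂c⟩ := Cnt.exists_max_sparse (k:ℤ) (ℓ:ℤ) E₂
    have hA₁ne : A₁.Nonempty := by
      rw [← Finset.card_pos]; omega
    have hA₂ne : A₂.Nonempty := by
      rw [← Finset.card_pos]; omega
    have hA₁d : ∀ e ∈ A₁, ¬ e.IsDiag := fun e he => hndiag e (hE1 (hA₁E he))
    have hA₂d : ∀ e ∈ A₂, ¬ e.IsDiag := fun e he => hndiag e (hE2 (hA₂E he))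
    set J := Cnt.compsOf (k:ℤ) (ℓ:ℤ) A₁ ∪ Cnt.compsOf (k:ℤ) (ℓ:ℤ) A₂ with hJ
    have hkZ0 : (0:ℤ) ≤ (k:ℤ) := by omega
    -- the two comp families are disjoint
    have hdisjC : Disjoint (Cnt.compsOf (k:ℤ) (ℓ:ℤ) A₁) (Cnt.compsOf (k:ℤ) (ℓ:ℤ) A₂) := by
      rw [Finset.disjoint_left]
      intro T hT1 hT2
      obtain ⟨hs1, hne⟩ := Cnt.comps_mem_basic hkZ0 hA₁s hT1
      obtain ⟨hs2, -⟩ := Cnt.comps_mem_basic hkZ0 hA₂s hT2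
      obtain ⟨e, heT⟩ := hne
      exact Finset.disjoint_left.1 hdisj (hA₁E (hs1 heT)) (hA₂E (hs2 heT))
    have hsumJ : ∑ T ∈ J, (T.card : ℤ) = (A₁.card : ℤ) + A₂.card := by
      rw [hJ, Finset.sum_union hdisjC]
      have h1 := Cnt.comps_sum hkZ0 hA₁s
      have h2 := Cnt.comps_sum hkZ0 hA₂s
      have e1 : ∑ T ∈ Cnt.compsOf (k:ℤ) (ℓ:ℤ) A₁, (T.card : ℤ) = (A₁.card : ℤ) := by
        rw [← h1]; push_cast; rfl
      have e2 : ∑ T ∈ Cnt.compsOf (k:ℤ) (ℓ:ℤ) A₂, (T.card : ℤ) = (A₂.card : ℤ) := by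
        rw [← h2]; push_cast; rfl
      rw [e1, e2]
    have hmJ : 2 ≤ J.card := by
      rw [hJ, Finset.card_union_of_disjoint hdisjC]
      have h1 := (Cnt.comps_nonempty (k := (k:ℤ)) (ℓ := (ℓ:ℤ)) hA₁ne).card_pos
      have h2 := (Cnt.comps_nonempty (k := (k:ℤ)) (ℓ := (ℓ:ℤ)) hA₂ne).card_pos
      omega
    have hstructJ : ∀ T ∈ J, ((incVerts T).card = 2 ∧ T.card = 1) ∨
        ((T.card : ℤ) = (k:ℤ) * (incVerts T).card - (ℓ:ℤ) ∧ 3 ≤ (incVerts T).card ∧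
          2*(k:ℤ) - 1 ≤ ((incVerts T).card : ℤ)) := by
      intro T hT
      rcases Finset.mem_union.1 hT with h | h
      · exact Cnt.comps_mem_struct hkZ hklZ hlZ hA₁s hA₁d h
      · exact Cnt.comps_mem_struct hkZ hklZ hlZ hA₂s hA₂d h
    -- J covers every edge of G
    have hcoverJ : ∀ e ∈ G.edgeFinset, ∃ T ∈ J, ∀ v ∈ e, v ∈ incVerts T := by
      have hside : ∀ (E' A : Finset (Sym2 V)), A ⊆ E' → CountSparse (k:ℤ) (ℓ:ℤ) A →
          A.card = countRank (k:ℤ) (ℓ:ℤ) E' → ∀ e ∈ E', e ∈ G.edgeFinset →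
          ∃ T ∈ Cnt.compsOf (k:ℤ) (ℓ:ℤ) A, ∀ v ∈ e, v ∈ incVerts T := by
        intro E' A hAE hAs hAc e heE' heG
        by_cases heA : e ∈ A
        · obtain ⟨T, hT, heT⟩ := Cnt.comps_cover_self (k := (k:ℤ)) (ℓ := (ℓ:ℤ)) heA
          exact ⟨T, hT, fun v hv => Cnt.mem_incVerts.2 ⟨e, heT, hv⟩⟩
        · have hnots : ¬ CountSparse (k:ℤ) (ℓ:ℤ) (insert e A) := by
            intro hsp
            have hsub : insert e A ⊆ E' := Finset.insert_subset heE' hAE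
            have := Cnt.le_countRank_of_sparse hsub hsp
            rw [Finset.card_insert_of_notMem heA] at this
            omega
          obtain ⟨T, hTA, hTt, hTv⟩ := Cnt.exists_tight_of_not_sparse_insert hkZ hlZ hAs
            (hndiag e heG) heA hnots
          obtain ⟨t₀, ht₀⟩ := hTt.1
          have hin : Cnt.InTight (k:ℤ) (ℓ:ℤ) A t₀ := ⟨T, hTA, hTt, ht₀⟩
          refine ⟨Cnt.Mset (k:ℤ) (ℓ:ℤ) A t₀, ?_, ?_⟩
          · exact Finset.mem_union.2 (Or.inl (Finset.mem_image.2
              ⟨t₀, Finset.mem_filter.2 ⟨hTA ht₀, hin⟩, rfl⟩))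
          · intro v hv
            exact Cnt.incVerts_mono (Cnt.subset_Mset hTA hTt ht₀) (hTv v hv)
      intro e heG
      have : e ∈ E₁ ∪ E₂ := hunion ▸ heG
      rcases Finset.mem_union.1 this with h | h
      · obtain ⟨T, hT, hall⟩ := hside E₁ A₁ hA₁E hA₁s hA₁c e h heG
        exact ⟨T, Finset.mem_union.2 (Or.inl hT), hall⟩
      · obtain ⟨T, hT, hall⟩ := hside E₂ A₂ hA₂E hA₂s hA₂c e h heG
        exact ⟨T, Finset.mem_union.2 (Or.inr hT), hall⟩
    have hmain := Cnt.cover_count hk hkl hl hconn J hmJ hstructJ hcoverJ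
    rw [hsumJ] at hmain
    have hrE : (countRank (k:ℤ) (ℓ:ℤ) G.edgeFinset : ℤ) ≤ (k:ℤ) * (Fintype.card V) - ℓ :=
      Cnt.countRank_int_le hkZ0 hkn
    have : (countRank (k:ℤ) (ℓ:ℤ) G.edgeFinset : ℤ) <
        (countRank (k:ℤ) (ℓ:ℤ) E₁ : ℤ) + (countRank (k:ℤ) (ℓ:ℤ) E₂ : ℤ) := by
      rw [← hA₁c, ← hA₂c] at *
      push_cast at hmain ⊢
      omega
    exact_mod_cast this
end

section
/- Let k, ℓ, t be positive integers with 2 ≤ k < ℓ ≤ 2k−1 and let G be a (2ℓt)-connected graph. Then G contains t edge-disjoint (k,ℓ)-rigid spanning subgraphs. -/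
open scoped Classical

set_option maxHeartbeats 1000000
open Finset

namespace S12
variable {V : Type} [Fintype V]

noncomputable def eVerts (e : Sym2 V) : Finset V := Finset.univ.filter (fun v => v ∈ e)

lemma mem_eVerts {e : Sym2 V} {v : V} : v ∈ eVerts e ↔ v ∈ e := by simp [eVerts]

lemma mem_incVerts {F : Finset (Sym2 V)} {v : V} : v ∈ incVerts F ↔ ∃ e ∈ F, v ∈ e := by
  simp [incVerts]

lemma eVerts_subset_incVerts {F : Finset (Sym2 V)} {e : Sym2 V} (he : e ∈ F) :
    eVerts e ⊆ incVerts F := fun v hv => mem_incVerts.2 ⟨e, he, mem_eVerts.1 hv⟩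

lemma incVerts_mono {F F' : Finset (Sym2 V)} (h : F ⊆ F') : incVerts F ⊆ incVerts F' := by
  intro v hv; rcases mem_incVerts.1 hv with ⟨e, he, hve⟩
  exact mem_incVerts.2 ⟨e, h he, hve⟩

lemma incVerts_union {F F' : Finset (Sym2 V)} :
    incVerts (F ∪ F') = incVerts F ∪ incVerts F' := by
  ext v; simp only [mem_incVerts, Finset.mem_union]
  constructor
  · rintro ⟨e, he | he, hv⟩
    · exact Or.inl ⟨e, he, hv⟩
    · exact Or.inr ⟨e, he, hv⟩
  · rintro (⟨e, he, hv⟩ | ⟨e, he, hv⟩) <;> exact ⟨e, by tauto, hv⟩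

lemma incVerts_insert {F : Finset (Sym2 V)} {e : Sym2 V} :
    incVerts (insert e F) = eVerts e ∪ incVerts F := by
  ext v; simp [mem_incVerts, mem_eVerts]

lemma incVerts_inter_subset {F F' : Finset (Sym2 V)} :
    incVerts (F ∩ F') ⊆ incVerts F ∩ incVerts F' := by
  intro v hv; rcases mem_incVerts.1 hv with ⟨e, he, hv⟩
  rw [Finset.mem_inter] at he
  exact Finset.mem_inter.2 ⟨mem_incVerts.2 ⟨e, he.1, hv⟩, mem_incVerts.2 ⟨e, he.2, hv⟩⟩

lemma eVerts_card {e : Sym2 V} (h : ¬ e.IsDiag) : (eVerts e).card = 2 := by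
  induction e using Sym2.inductionOn with
  | hf x y =>
    rw [Sym2.isDiag_iff_proj_eq] at h
    have : eVerts (s(x, y)) = {x, y} := by
      ext v; simp [mem_eVerts, Sym2.mem_iff]
    rw [this, Finset.card_insert_of_notMem (by simp [h]), Finset.card_singleton]

lemma incVerts_singleton {e : Sym2 V} : incVerts {e} = eVerts e := by
  ext v; simp [mem_incVerts, mem_eVerts]

lemma sparse_subset {k ℓ : ℤ} {F F' : Finset (Sym2 V)} (h : CountSparse k ℓ F) (hs : F' ⊆ F) :
    CountSparse k ℓ F' := fun W hW hne => h W (hW.trans hs) hne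

lemma sparse_card_le {k ℓ : ℤ} {F : Finset (Sym2 V)} (h : CountSparse k ℓ F) (hne : F.Nonempty) :
    (F.card : ℤ) ≤ k * (incVerts F).card - ℓ := h F (Finset.Subset.refl F) hne

lemma sparse_empty (k ℓ : ℤ) : CountSparse k ℓ (∅ : Finset (Sym2 V)) := by
  intro W hW hne
  simp only [Finset.subset_empty] at hW
  rw [hW] at hne; exact absurd hne (by simp)

lemma not_sparse_superset {k ℓ : ℤ} {F F' : Finset (Sym2 V)} (h : ¬ CountSparse k ℓ F)
    (hs : F ⊆ F') : ¬ CountSparse k ℓ F' := fun h' => h (sparse_subset h' hs)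


/-- Tight edge set -/
def Tt (k ℓ : ℤ) (T : Finset (Sym2 V)) : Prop :=
  T.Nonempty ∧ (T.card : ℤ) = k * (incVerts T).card - ℓ

def IsBlocker (k ℓ : ℤ) (F : Finset (Sym2 V)) (e : Sym2 V) (B : Finset (Sym2 V)) : Prop :=
  B ⊆ F ∧ Tt k ℓ B ∧ eVerts e ⊆ incVerts B

def MinBlocker (k ℓ : ℤ) (F : Finset (Sym2 V)) (e : Sym2 V) (B : Finset (Sym2 V)) : Prop :=
  IsBlocker k ℓ F e B ∧ ∀ B', IsBlocker k ℓ F e B' → B ⊆ B'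

section Blk
variable {k ℓ : ℤ} (hk : 2 ≤ k) (hl2 : ℓ ≤ 2*k - 1)
include hk hl2

lemma inter_card_le {F T₁ T₂ : Finset (Sym2 V)} (hF : CountSparse k ℓ F)
    (h1 : T₁ ⊆ F) (h2 : T₂ ⊆ F) (hv : 2 ≤ (incVerts T₁ ∩ incVerts T₂).card) :
    ((T₁ ∩ T₂).card : ℤ) ≤ k * ((incVerts T₁ ∩ incVerts T₂).card : ℤ) - ℓ := by
  rcases (T₁ ∩ T₂).eq_empty_or_nonempty with h | h
  · rw [h]; simp only [Finset.card_empty, Nat.cast_zero]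
    have : (2:ℤ) ≤ ((incVerts T₁ ∩ incVerts T₂).card : ℤ) := by exact_mod_cast hv
    nlinarith
  · have hsub : T₁ ∩ T₂ ⊆ F := fun x hx => h1 (Finset.mem_inter.1 hx).1
    have := hF _ hsub h
    have hmono : ((incVerts (T₁ ∩ T₂)).card : ℤ) ≤ ((incVerts T₁ ∩ incVerts T₂).card : ℤ) := by
      exact_mod_cast Finset.card_le_card incVerts_inter_subset
    nlinarith

lemma tight_union {F T₁ T₂ : Finset (Sym2 V)} (hF : CountSparse k ℓ F)
    (h1 : T₁ ⊆ F) (h2 : T₂ ⊆ F) (ht1 : Tt k ℓ T₁) (ht2 : Tt k ℓ T₂)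
    (hv : 2 ≤ (incVerts T₁ ∩ incVerts T₂).card) : Tt k ℓ (T₁ ∪ T₂) := by
  have hne : (T₁ ∪ T₂).Nonempty := ht1.1.mono Finset.subset_union_left
  have hsub : T₁ ∪ T₂ ⊆ F := Finset.union_subset h1 h2
  have hub := hF _ hsub hne
  have hEcard : (T₁ ∪ T₂).card + (T₁ ∩ T₂).card = T₁.card + T₂.card :=
    Finset.card_union_add_card_inter T₁ T₂
  have hVcard : (incVerts T₁ ∪ incVerts T₂).card + (incVerts T₁ ∩ incVerts T₂).card
      = (incVerts T₁).card + (incVerts T₂).card :=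
    Finset.card_union_add_card_inter _ _
  have hvu : incVerts (T₁ ∪ T₂) = incVerts T₁ ∪ incVerts T₂ := incVerts_union
  have hic := inter_card_le hk hl2 hF h1 h2 hv
  refine ⟨hne, ?_⟩
  have e1 := ht1.2; have e2 := ht2.2
  rw [hvu]
  have hEcard' : ((T₁ ∪ T₂).card : ℤ) + ((T₁ ∩ T₂).card : ℤ) = (T₁.card : ℤ) + T₂.card := by
    exact_mod_cast hEcard
  have hVcard' : (((incVerts T₁ ∪ incVerts T₂).card : ℤ)) + ((incVerts T₁ ∩ incVerts T₂).card : ℤ)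
      = ((incVerts T₁).card : ℤ) + ((incVerts T₂).card : ℤ) := by exact_mod_cast hVcard
  rw [hvu] at hub
  nlinarith

lemma blocker_inter {F B₁ B₂ : Finset (Sym2 V)} {e : Sym2 V} (hF : CountSparse k ℓ F)
    (hnd : ¬ e.IsDiag) (hb1 : IsBlocker k ℓ F e B₁) (hb2 : IsBlocker k ℓ F e B₂) :
    IsBlocker k ℓ F e (B₁ ∩ B₂) := by
  obtain ⟨hs1, ⟨hne1, ht1⟩, hev1⟩ := hb1
  obtain ⟨hs2, ⟨hne2, ht2⟩, hev2⟩ := hb2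
  have hev : eVerts e ⊆ incVerts B₁ ∩ incVerts B₂ := fun v hv =>
    Finset.mem_inter.2 ⟨hev1 hv, hev2 hv⟩
  have hvcard : 2 ≤ (incVerts B₁ ∩ incVerts B₂).card := by
    have := Finset.card_le_card hev; rwa [eVerts_card hnd] at this
  -- counting
  have hEcard : ((B₁ ∪ B₂).card : ℤ) + ((B₁ ∩ B₂).card : ℤ) = (B₁.card : ℤ) + B₂.card := by
    exact_mod_cast Finset.card_union_add_card_inter B₁ B₂
  have hVcard : (((incVerts B₁ ∪ incVerts B₂).card : ℤ)) + ((incVerts B₁ ∩ incVerts B₂).card : ℤ)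
      = ((incVerts B₁).card : ℤ) + ((incVerts B₂).card : ℤ) := by
    exact_mod_cast Finset.card_union_add_card_inter (incVerts B₁) (incVerts B₂)
  have hub := hF _ (Finset.union_subset hs1 hs2) (hne1.mono Finset.subset_union_left)
  rw [incVerts_union] at hub
  -- lower bound on card of intersection
  have hlow : (k * ((incVerts B₁ ∩ incVerts B₂).card : ℤ) - ℓ) ≤ ((B₁ ∩ B₂).card : ℤ) := by
    nlinarith
  have hpos : (0:ℤ) < ((B₁ ∩ B₂).card : ℤ) := by
    have : (2:ℤ) ≤ ((incVerts B₁ ∩ incVerts B₂).card : ℤ) := by exact_mod_cast hvcard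
    nlinarith
  have hne : (B₁ ∩ B₂).Nonempty := by
    rw [← Finset.card_pos]; exact_mod_cast hpos
  have hsub : B₁ ∩ B₂ ⊆ F := fun x hx => hs1 (Finset.mem_inter.1 hx).1
  have hup := hF _ hsub hne
  have hmono : incVerts (B₁ ∩ B₂) ⊆ incVerts B₁ ∩ incVerts B₂ := incVerts_inter_subset
  have hmono' : ((incVerts (B₁ ∩ B₂)).card : ℤ) ≤ ((incVerts B₁ ∩ incVerts B₂).card : ℤ) := by
    exact_mod_cast Finset.card_le_card hmono
  have hveq : incVerts (B₁ ∩ B₂) = incVerts B₁ ∩ incVerts B₂ := by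
    apply Finset.eq_of_subset_of_card_le hmono
    -- need card (B₁∩B₂ verts) ≥ card inter
    by_contra hlt
    push_neg at hlt
    have : ((incVerts (B₁ ∩ B₂)).card : ℤ) + 1 ≤ ((incVerts B₁ ∩ incVerts B₂).card : ℤ) := by
      exact_mod_cast hlt
    nlinarith
  rw [hveq] at hup
  refine ⟨hsub, ⟨hne, ?_⟩, ?_⟩
  · rw [hveq]; omega
  · rw [hveq]; exact hev

lemma blocker_of_violation {F W : Finset (Sym2 V)} {e : Sym2 V} (hF : CountSparse k ℓ F)
    (hnd : ¬ e.IsDiag) (hW : W ⊆ F)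
    (hc : k * ((incVerts (insert e W)).card : ℤ) - ℓ ≤ (W.card : ℤ)) : IsBlocker k ℓ F e W := by
  by_cases hsub : eVerts e ⊆ incVerts W
  · have hA : incVerts (insert e W) = incVerts W := by
      rw [incVerts_insert, Finset.union_eq_right.2 hsub]
    rw [hA] at hc
    have hne : W.Nonempty := by
      rw [← Finset.card_pos]
      by_contra h0
      push_neg at h0
      interval_cases hW0 : W.card
      · simp only [Finset.card_eq_zero] at hW0
        subst hW0
        have h2 : (eVerts e).card ≤ (incVerts (∅ : Finset (Sym2 V))).card := Finset.card_le_card hsub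
        rw [eVerts_card hnd] at h2
        have : incVerts (∅ : Finset (Sym2 V)) = ∅ := by
          ext v; simp [mem_incVerts]
        rw [this] at h2; simp at h2
    have hup := hF _ hW hne
    exact ⟨hW, ⟨hne, le_antisymm hup hc⟩, hsub⟩
  · exfalso
    -- some endpoint missing
    obtain ⟨v, hv, hvn⟩ := Finset.not_subset.1 hsub
    have hsubA : insert v (incVerts W) ⊆ incVerts (insert e W) := by
      intro w hw
      rcases Finset.mem_insert.1 hw with rfl | hw
      · rw [incVerts_insert]; exact Finset.mem_union_left _ hv
      · exact incVerts_mono (Finset.subset_insert _ _) hw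
    have hcard : (incVerts W).card + 1 ≤ (incVerts (insert e W)).card := by
      have := Finset.card_le_card hsubA
      rwa [Finset.card_insert_of_notMem hvn] at this
    have hcard' : ((incVerts W).card : ℤ) + 1 ≤ ((incVerts (insert e W)).card : ℤ) := by
      exact_mod_cast hcard
    rcases W.eq_empty_or_nonempty with rfl | hne
    · have : incVerts (insert e (∅ : Finset (Sym2 V))) = eVerts e := by
        rw [incVerts_insert]
        have : incVerts (∅ : Finset (Sym2 V)) = ∅ := by ext v; simp [mem_incVerts]
        rw [this, Finset.union_empty]
      rw [this, eVerts_card hnd] at hc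
      simp at hc; omega
    · have hup := hF _ hW hne
      nlinarith

lemma exists_blocker_of_not_sparse {F : Finset (Sym2 V)} {e : Sym2 V} (hF : CountSparse k ℓ F)
    (he : e ∉ F) (hnd : ¬ e.IsDiag) (hns : ¬ CountSparse k ℓ (insert e F)) :
    ∃ B, IsBlocker k ℓ F e B := by
  rw [CountSparse] at hns
  push_neg at hns
  obtain ⟨W, hWsub, hWne, hWv⟩ := hns
  have heW : e ∈ W := by
    by_contra heW
    have : W ⊆ F := fun x hx => by
      rcases Finset.mem_insert.1 (hWsub hx) with rfl | h
      · exact absurd hx heW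
      · exact h
    exact absurd (hF W this hWne) (not_le.2 hWv)
  refine ⟨W.erase e, blocker_of_violation hk hl2 hF hnd ?_ ?_⟩
  · intro x hx
    have hx' := Finset.mem_of_mem_erase hx
    rcases Finset.mem_insert.1 (hWsub hx') with rfl | h
    · exact absurd rfl (Finset.ne_of_mem_erase hx)
    · exact h
  · have hins : insert e (W.erase e) = W := Finset.insert_erase heW
    rw [hins]
    have : (W.erase e).card = W.card - 1 := Finset.card_erase_of_mem heW
    have hWpos : 1 ≤ W.card := Finset.card_pos.2 hWne
    have : ((W.erase e).card : ℤ) = (W.card : ℤ) - 1 := by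
      rw [this]; push_cast [hWpos]; omega
    omega

omit hk hl2 in
lemma insert_blocker_not_sparse {F B : Finset (Sym2 V)} {e : Sym2 V}
    (hb : IsBlocker k ℓ F e B) (he : e ∉ F) : ¬ CountSparse k ℓ (insert e F) := by
  obtain ⟨hsub, ⟨hne, ht⟩, hev⟩ := hb
  intro hsp
  have hBsub : insert e B ⊆ insert e F := Finset.insert_subset_insert _ hsub
  have hBne : (insert e B).Nonempty := Finset.insert_nonempty _ _
  have := hsp _ hBsub hBne
  have hveq : incVerts (insert e B) = incVerts B := by
    rw [incVerts_insert, Finset.union_eq_right.2 hev]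
  rw [hveq] at this
  have heB : e ∉ B := fun h => he (hsub h)
  rw [Finset.card_insert_of_notMem heB] at this
  push_cast at this
  omega

lemma exists_minBlocker {F : Finset (Sym2 V)} {e : Sym2 V} (hF : CountSparse k ℓ F)
    (hnd : ¬ e.IsDiag) (hex : ∃ B, IsBlocker k ℓ F e B) :
    ∃ B, MinBlocker k ℓ F e B := by
  classical
  obtain ⟨B₀, hB₀⟩ := hex
  have hmem : B₀ ∈ F.powerset.filter (fun B => IsBlocker k ℓ F e B) := by
    simp only [Finset.mem_filter, Finset.mem_powerset]; exact ⟨hB₀.1, hB₀⟩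
  obtain ⟨B, hBmem, hBmin⟩ := Finset.exists_min_image _ Finset.card ⟨B₀, hmem⟩
  simp only [Finset.mem_filter, Finset.mem_powerset] at hBmem
  refine ⟨B, hBmem.2, fun B' hB' => ?_⟩
  have hint := blocker_inter hk hl2 hF hnd hBmem.2 hB'
  have hmem' : B ∩ B' ∈ F.powerset.filter (fun B => IsBlocker k ℓ F e B) := by
    simp only [Finset.mem_filter, Finset.mem_powerset]; exact ⟨hint.1, hint⟩
  have hle := hBmin _ hmem'
  have heq : B ∩ B' = B := by
    apply Finset.eq_of_subset_of_card_le Finset.inter_subset_left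
    omega
  intro x hx
  rw [← heq] at hx
  exact (Finset.mem_inter.1 hx).2

lemma sparse_insert_erase {F B : Finset (Sym2 V)} {e y : Sym2 V} (hF : CountSparse k ℓ F)
    (he : e ∉ F) (hnd : ¬ e.IsDiag) (hmb : MinBlocker k ℓ F e B) (hy : y ∈ B) :
    CountSparse k ℓ ((insert e F).erase y) := by
  by_contra hns
  rw [CountSparse] at hns
  push_neg at hns
  obtain ⟨W, hWsub, hWne, hWv⟩ := hns
  have hyW : y ∉ W := fun h => Finset.notMem_erase y _ (hWsub h)
  by_cases heW : e ∈ W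
  · have hW'sub : W.erase e ⊆ F := by
      intro x hx
      have hx1 := Finset.mem_of_mem_erase hx
      have hx2 := Finset.mem_of_mem_erase (hWsub hx1)
      rcases Finset.mem_insert.1 hx2 with rfl | h
      · exact absurd rfl (Finset.ne_of_mem_erase hx)
      · exact h
    have hblk : IsBlocker k ℓ F e (W.erase e) := by
      apply blocker_of_violation hk hl2 hF hnd hW'sub
      rw [Finset.insert_erase heW]
      have hWpos : 1 ≤ W.card := Finset.card_pos.2 hWne
      have : ((W.erase e).card : ℤ) = (W.card : ℤ) - 1 := by
        rw [Finset.card_erase_of_mem heW]; push_cast [hWpos]; omega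
      omega
    have := hmb.2 _ hblk hy
    exact hyW (Finset.mem_of_mem_erase this)
  · have : W ⊆ F := by
      intro x hx
      rcases Finset.mem_insert.1 (Finset.mem_of_mem_erase (hWsub hx)) with rfl | h
      · exact absurd hx heW
      · exact h
    exact absurd (hF W this hWne) (not_le.2 hWv)

end Blk

/-- maximal tight subsets of F -/
def MaxTt (k ℓ : ℤ) (F T : Finset (Sym2 V)) : Prop :=
  T ⊆ F ∧ Tt k ℓ T ∧ ∀ T', T' ⊆ F → Tt k ℓ T' → T ⊆ T' → T = T'

lemma exists_maxTt {k ℓ : ℤ} {F T : Finset (Sym2 V)} (hTF : T ⊆ F) (ht : Tt k ℓ T) :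
    ∃ M, MaxTt k ℓ F M ∧ T ⊆ M := by
  classical
  have hmem : T ∈ F.powerset.filter (fun M => Tt k ℓ M ∧ T ⊆ M) := by
    simp only [Finset.mem_filter, Finset.mem_powerset]; exact ⟨hTF, ht, Finset.Subset.refl T⟩
  obtain ⟨M, hMmem, hMmax⟩ := Finset.exists_max_image _ Finset.card ⟨T, hmem⟩
  simp only [Finset.mem_filter, Finset.mem_powerset] at hMmem
  refine ⟨M, ⟨hMmem.1, hMmem.2.1, fun T' hT'F ht' hMT' => ?_⟩, hMmem.2.2⟩
  have hmem' : T' ∈ F.powerset.filter (fun M => Tt k ℓ M ∧ T ⊆ M) := by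
    simp only [Finset.mem_filter, Finset.mem_powerset]
    exact ⟨hT'F, ht', hMmem.2.2.trans hMT'⟩
  exact Finset.eq_of_subset_of_card_le hMT' (hMmax _ hmem')

section C
variable {k ℓ : ℤ} (hk : 2 ≤ k) (hl2 : ℓ ≤ 2*k - 1)
include hk hl2

lemma maxTt_thin {F T₁ T₂ : Finset (Sym2 V)} (hF : CountSparse k ℓ F)
    (h1 : MaxTt k ℓ F T₁) (h2 : MaxTt k ℓ F T₂) (hne : T₁ ≠ T₂) :
    (incVerts T₁ ∩ incVerts T₂).card ≤ 1 := by
  by_contra h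
  push_neg at h
  have hu := tight_union hk hl2 hF h1.1 h2.1 h1.2.1 h2.2.1 h
  have husub : T₁ ∪ T₂ ⊆ F := Finset.union_subset h1.1 h2.1
  have e1 := h1.2.2 _ husub hu Finset.subset_union_left
  have e2 := h2.2.2 _ husub hu Finset.subset_union_right
  exact hne (e1.trans e2.symm)

omit hk hl2 in
lemma edge_in_tight {F T : Finset (Sym2 V)} {e : Sym2 V} (hF : CountSparse k ℓ F)
    (hTF : T ⊆ F) (ht : Tt k ℓ T) (he : e ∈ F) (hev : eVerts e ⊆ incVerts T) : e ∈ T := by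
  by_contra heT
  have hsub : insert e T ⊆ F := Finset.insert_subset he hTF
  have hne : (insert e T).Nonempty := Finset.insert_nonempty _ _
  have := hF _ hsub hne
  have hveq : incVerts (insert e T) = incVerts T := by
    apply Finset.Subset.antisymm
    · intro v hv
      rcases mem_incVerts.1 hv with ⟨f, hf, hvf⟩
      rcases Finset.mem_insert.1 hf with rfl | hf
      · exact hev (mem_eVerts.2 hvf)
      · exact mem_incVerts.2 ⟨f, hf, hvf⟩
    · exact incVerts_mono (Finset.subset_insert _ _)
  rw [hveq, Finset.card_insert_of_notMem heT] at this
  push_cast at this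
  have h2 := ht.2
  omega

omit hk hl2 in
lemma sym2_eq_of_everts_subset {e f : Sym2 V} (hnde : ¬ e.IsDiag) (hndf : ¬ f.IsDiag)
    (h : eVerts f ⊆ eVerts e) : f = e := by
  induction e using Sym2.inductionOn with
  | hf a b =>
    induction f using Sym2.inductionOn with
    | hf c d =>
      rw [Sym2.isDiag_iff_proj_eq] at hnde hndf
      have hc : c ∈ eVerts (s(a, b)) := h (mem_eVerts.2 (by simp))
      have hd : d ∈ eVerts (s(a, b)) := h (mem_eVerts.2 (by simp [Sym2.mem_iff]))
      rw [mem_eVerts, Sym2.mem_iff] at hc hd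
      rcases hc with rfl | rfl <;> rcases hd with rfl | rfl
      · simp at hndf
      · rfl
      · exact Sym2.eq_swap
      · simp at hndf

/-- the family of maximal tight sets with at least 3 vertices -/
noncomputable def TTfam (k ℓ : ℤ) (F : Finset (Sym2 V)) : Finset (Finset (Sym2 V)) :=
  F.powerset.filter (fun T => MaxTt k ℓ F T ∧ 3 ≤ (incVerts T).card)

/-- the edges of F in no member of TTfam -/
noncomputable def Ufree (k ℓ : ℤ) (F : Finset (Sym2 V)) : Finset (Sym2 V) :=
  F.filter (fun e => ∀ T ∈ TTfam k ℓ F, e ∉ T)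

omit hk hl2 in
lemma mem_TTfam {F T : Finset (Sym2 V)} :
    T ∈ TTfam k ℓ F ↔ MaxTt k ℓ F T ∧ 3 ≤ (incVerts T).card := by
  simp only [TTfam, Finset.mem_filter, Finset.mem_powerset]
  exact ⟨fun h => h.2, fun h => ⟨h.1.1, h⟩⟩

lemma TTfam_disjoint {F T₁ T₂ : Finset (Sym2 V)} (hF : CountSparse k ℓ F)
    (hnd : ∀ e ∈ F, ¬ e.IsDiag)
    (h1 : T₁ ∈ TTfam k ℓ F) (h2 : T₂ ∈ TTfam k ℓ F) (hne : T₁ ≠ T₂) : Disjoint T₁ T₂ := by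
  rw [Finset.disjoint_left]
  intro e he1 he2
  have hthin := maxTt_thin hk hl2 hF (mem_TTfam.1 h1).1 (mem_TTfam.1 h2).1 hne
  have hsub : eVerts e ⊆ incVerts T₁ ∩ incVerts T₂ := fun v hv =>
    Finset.mem_inter.2 ⟨eVerts_subset_incVerts he1 hv, eVerts_subset_incVerts he2 hv⟩
  have := Finset.card_le_card hsub
  rw [eVerts_card (hnd e ((mem_TTfam.1 h1).1.1 he1))] at this
  omega

lemma card_decomp {F : Finset (Sym2 V)} (hF : CountSparse k ℓ F) (hnd : ∀ e ∈ F, ¬ e.IsDiag) :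
    F.card = (∑ T ∈ TTfam k ℓ F, T.card) + (Ufree k ℓ F).card := by
  classical
  have hdisj : ∀ T₁ ∈ TTfam k ℓ F, ∀ T₂ ∈ TTfam k ℓ F, T₁ ≠ T₂ → Disjoint (id T₁) (id T₂) :=
    fun T₁ h1 T₂ h2 hne => TTfam_disjoint hk hl2 hF hnd h1 h2 hne
  have hcover : F = (TTfam k ℓ F).biUnion id ∪ Ufree k ℓ F := by
    apply Finset.Subset.antisymm
    · intro e he
      by_cases h : ∀ T ∈ TTfam k ℓ F, e ∉ T
      · exact Finset.mem_union_right _ (Finset.mem_filter.2 ⟨he, h⟩)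
      · push_neg at h
        obtain ⟨T, hT, heT⟩ := h
        exact Finset.mem_union_left _ (Finset.mem_biUnion.2 ⟨T, hT, heT⟩)
    · intro e he
      rcases Finset.mem_union.1 he with h | h
      · obtain ⟨T, hT, heT⟩ := Finset.mem_biUnion.1 h
        exact (mem_TTfam.1 hT).1.1 heT
      · exact (Finset.mem_filter.1 h).1
  have hdisj2 : Disjoint ((TTfam k ℓ F).biUnion id) (Ufree k ℓ F) := by
    rw [Finset.disjoint_left]
    intro e he hU
    obtain ⟨T, hT, heT⟩ := Finset.mem_biUnion.1 he
    exact (Finset.mem_filter.1 hU).2 T hT heT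
  have hc : ((TTfam k ℓ F).biUnion id ∪ Ufree k ℓ F).card
      = (∑ T ∈ TTfam k ℓ F, T.card) + (Ufree k ℓ F).card := by
    rw [Finset.card_union_of_disjoint hdisj2, Finset.card_biUnion hdisj]
    simp only [id]
  rw [← hcover] at hc
  exact hc

lemma coverage {F : Finset (Sym2 V)} {e : Sym2 V} (hF : CountSparse k ℓ F)
    (hnd : ∀ f ∈ F, ¬ f.IsDiag) (hnde : ¬ e.IsDiag) (he : e ∉ F)
    (hns : ¬ CountSparse k ℓ (insert e F)) :
    ∃ T ∈ TTfam k ℓ F, eVerts e ⊆ incVerts T := by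
  obtain ⟨B, hB⟩ := exists_blocker_of_not_sparse hk hl2 hF he hnde hns
  obtain ⟨hBF, hBt, hBev⟩ := hB
  have h3 : 3 ≤ (incVerts B).card := by
    by_contra h3
    push_neg at h3
    have h2 : (eVerts e).card ≤ (incVerts B).card := Finset.card_le_card hBev
    rw [eVerts_card hnde] at h2
    have hveq : incVerts B = eVerts e := by
      apply (Finset.eq_of_subset_of_card_le hBev (by rw [eVerts_card hnde]; omega)).symm
    obtain ⟨f, hf⟩ := hBt.1
    have hfev : eVerts f ⊆ incVerts B := eVerts_subset_incVerts hf
    rw [hveq] at hfev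
    have := sym2_eq_of_everts_subset hnde (hnd f (hBF hf)) hfev
    exact he (this ▸ hBF hf)
  obtain ⟨M, hM, hBM⟩ := exists_maxTt hBF hBt
  refine ⟨M, mem_TTfam.2 ⟨hM, le_trans h3 (Finset.card_le_card (incVerts_mono hBM))⟩,
    hBev.trans (incVerts_mono hBM)⟩

omit hk hl2 in
lemma inside_card_le {k' ℓ' : ℤ} (hk' : 0 ≤ k') {W T : Finset (Sym2 V)}
    (hsp : CountSparse k' ℓ' W) (hnn : 0 ≤ k' * ((incVerts T).card : ℤ) - ℓ') :
    ((W.filter (fun e => eVerts e ⊆ incVerts T)).card : ℤ) ≤ k' * ((incVerts T).card : ℤ) - ℓ' := by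
  set W' := W.filter (fun e => eVerts e ⊆ incVerts T) with hW'
  rcases W'.eq_empty_or_nonempty with h | h
  · rw [h]; simpa using hnn
  · have hle := hsp W' (Finset.filter_subset _ _) h
    have hsub : incVerts W' ⊆ incVerts T := by
      intro v hv
      rcases mem_incVerts.1 hv with ⟨f, hf, hvf⟩
      exact (Finset.mem_filter.1 hf).2 (mem_eVerts.2 hvf)
    have := Finset.card_le_card hsub
    have : ((incVerts W').card : ℤ) ≤ ((incVerts T).card : ℤ) := by exact_mod_cast this
    nlinarith

/-- every edge of A is inside some maximal tight set of F or in Ufree -/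
lemma classify {F A : Finset (Sym2 V)} (hF : CountSparse k ℓ F)
    (hnd : ∀ f ∈ A, ¬ f.IsDiag) (hndF : ∀ f ∈ F, ¬ f.IsDiag) (hFA : F ⊆ A)
    (hmax : ∀ e ∈ A, e ∉ F → ¬ CountSparse k ℓ (insert e F)) :
    ∀ e ∈ A, (∃ T ∈ TTfam k ℓ F, eVerts e ⊆ incVerts T) ∨ e ∈ Ufree k ℓ F := by
  intro e he
  by_cases heF : e ∈ F
  · by_cases h : ∀ T ∈ TTfam k ℓ F, e ∉ T
    · exact Or.inr (Finset.mem_filter.2 ⟨heF, h⟩)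
    · push_neg at h
      obtain ⟨T, hT, heT⟩ := h
      exact Or.inl ⟨T, hT, eVerts_subset_incVerts heT⟩
  · exact Or.inl (coverage hk hl2 hF hndF (hnd e he) heF (hmax e he heF))

/-- the master counting bound -/
lemma master_bound {F A : Finset (Sym2 V)} (hF : CountSparse k ℓ F)
    (hnd : ∀ f ∈ A, ¬ f.IsDiag) (hFA : F ⊆ A)
    (hmax : ∀ e ∈ A, e ∉ F → ¬ CountSparse k ℓ (insert e F))
    {k' ℓ' : ℤ} (hk' : 0 ≤ k') {W : Finset (Sym2 V)} (hWA : W ⊆ A) (hsp : CountSparse k' ℓ' W)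
    (hnn : ∀ T ∈ TTfam k ℓ F, 0 ≤ k' * ((incVerts T).card : ℤ) - ℓ') :
    (W.card : ℤ) ≤ (∑ T ∈ TTfam k ℓ F, (k' * ((incVerts T).card : ℤ) - ℓ')) + (Ufree k ℓ F).card := by
  classical
  have hndF : ∀ f ∈ F, ¬ f.IsDiag := fun f hf => hnd f (hFA hf)
  have hcl := classify hk hl2 hF hnd hndF hFA hmax
  have hsubset : W ⊆ ((TTfam k ℓ F).biUnion (fun T => W.filter (fun e => eVerts e ⊆ incVerts T)))
      ∪ (W ∩ Ufree k ℓ F) := by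
    intro e he
    rcases hcl e (hWA he) with ⟨T, hT, hev⟩ | hU
    · exact Finset.mem_union_left _ (Finset.mem_biUnion.2 ⟨T, hT, Finset.mem_filter.2 ⟨he, hev⟩⟩)
    · exact Finset.mem_union_right _ (Finset.mem_inter.2 ⟨he, hU⟩)
  have hc1 : W.card ≤ (∑ T ∈ TTfam k ℓ F, (W.filter (fun e => eVerts e ⊆ incVerts T)).card)
      + (W ∩ Ufree k ℓ F).card := by
    calc W.card ≤ _ := Finset.card_le_card hsubset
    _ ≤ _ := Finset.card_union_le _ _
    _ ≤ _ := by
        gcongr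
        exact Finset.card_biUnion_le
  have hc2 : ((W ∩ Ufree k ℓ F).card : ℤ) ≤ ((Ufree k ℓ F).card : ℤ) := by
    exact_mod_cast Finset.card_le_card Finset.inter_subset_right
  have hc3 : ∀ T ∈ TTfam k ℓ F, ((W.filter (fun e => eVerts e ⊆ incVerts T)).card : ℤ)
      ≤ k' * ((incVerts T).card : ℤ) - ℓ' := fun T hT => inside_card_le hk' hsp (hnn T hT)
  have hc1' : (W.card : ℤ) ≤ (∑ T ∈ TTfam k ℓ F, ((W.filter (fun e => eVerts e ⊆ incVerts T)).card : ℤ))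
      + ((W ∩ Ufree k ℓ F).card : ℤ) := by exact_mod_cast hc1
  calc (W.card : ℤ) ≤ _ := hc1'
  _ ≤ (∑ T ∈ TTfam k ℓ F, (k' * ((incVerts T).card : ℤ) - ℓ')) + ((Ufree k ℓ F).card : ℤ) := by
      gcongr with T hT
      exact hc3 T hT

/-- augmentation: a maximal sparse subset of A has maximum cardinality -/
lemma aug_max {F A W : Finset (Sym2 V)} (hF : CountSparse k ℓ F)
    (hnd : ∀ f ∈ A, ¬ f.IsDiag) (hFA : F ⊆ A)
    (hmax : ∀ e ∈ A, e ∉ F → ¬ CountSparse k ℓ (insert e F))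
    (hWA : W ⊆ A) (hsp : CountSparse k ℓ W) : W.card ≤ F.card := by
  have hndF : ∀ f ∈ F, ¬ f.IsDiag := fun f hf => hnd f (hFA hf)
  have h := master_bound hk hl2 hF hnd hFA hmax (by omega : (0:ℤ) ≤ k) hWA hsp
    (fun T hT => by
      have := (mem_TTfam.1 hT).1.2.1.2
      have hc : (0:ℤ) ≤ (T.card : ℤ) := by positivity
      omega)
  have hdec := card_decomp hk hl2 hF hndF
  have : (∑ T ∈ TTfam k ℓ F, (k * ((incVerts T).card : ℤ) - ℓ)) = ∑ T ∈ TTfam k ℓ F, (T.card : ℤ) := by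
    apply Finset.sum_congr rfl
    intro T hT
    exact ((mem_TTfam.1 hT).1.2.1.2).symm
  rw [this] at h
  have hdec' : (F.card : ℤ) = (∑ T ∈ TTfam k ℓ F, (T.card : ℤ)) + ((Ufree k ℓ F).card : ℤ) := by
    rw [hdec]; push_cast; ring
  have : (W.card : ℤ) ≤ (F.card : ℤ) := by omega
  exact_mod_cast this

/-- KEY: the matroid-union rank inequality -/
lemma key_bound {F A : Finset (Sym2 V)} (hF : CountSparse k ℓ F)
    (hnd : ∀ f ∈ A, ¬ f.IsDiag) (hFA : F ⊆ A)
    (hmax : ∀ e ∈ A, e ∉ F → ¬ CountSparse k ℓ (insert e F))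
    {t : ℕ} (ht : 1 ≤ t) (hA : CountSparse (k * t) (ℓ * t) A) :
    (A.card : ℤ) ≤ (t : ℤ) * F.card := by
  have hndF : ∀ f ∈ F, ¬ f.IsDiag := fun f hf => hnd f (hFA hf)
  have ht' : (1:ℤ) ≤ (t:ℤ) := by exact_mod_cast ht
  have h := master_bound hk hl2 hF hnd hFA hmax
    (by nlinarith : (0:ℤ) ≤ k * t) (Finset.Subset.refl A) hA
    (fun T hT => by
      have h1 := (mem_TTfam.1 hT).1.2.1.2
      have hc : (0:ℤ) ≤ (T.card : ℤ) := by positivity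
      have : k * (t:ℤ) * ((incVerts T).card : ℤ) - ℓ * t = (t:ℤ) * (k * ((incVerts T).card : ℤ) - ℓ) := by ring
      rw [this]
      nlinarith)
  have heq : (∑ T ∈ TTfam k ℓ F, (k * (t:ℤ) * ((incVerts T).card : ℤ) - ℓ * t))
      = (t:ℤ) * ∑ T ∈ TTfam k ℓ F, (T.card : ℤ) := by
    rw [Finset.mul_sum]
    apply Finset.sum_congr rfl
    intro T hT
    rw [(mem_TTfam.1 hT).1.2.1.2]
    ring
  rw [heq] at h
  have hdec := card_decomp hk hl2 hF hndF
  have hdec' : (F.card : ℤ) = (∑ T ∈ TTfam k ℓ F, (T.card : ℤ)) + ((Ufree k ℓ F).card : ℤ) := by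
    rw [hdec]; push_cast; ring
  have hU : (0:ℤ) ≤ ((Ufree k ℓ F).card : ℤ) := by positivity
  nlinarith

end C

lemma sum_card_filter_mem {W : Finset (Sym2 V)} (hnd : ∀ e ∈ W, ¬ e.IsDiag) :
    ∑ v ∈ Finset.univ, (W.filter (fun e => v ∈ e)).card = 2 * W.card := by
  calc ∑ v ∈ Finset.univ, (W.filter (fun e => v ∈ e)).card
      = ∑ v ∈ Finset.univ, ∑ e ∈ W, (if v ∈ e then 1 else 0) := by
        refine Finset.sum_congr rfl fun v _ => ?_
        exact Finset.card_filter _ _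
    _ = ∑ e ∈ W, ∑ v ∈ Finset.univ, (if v ∈ e then 1 else 0) := Finset.sum_comm
    _ = ∑ e ∈ W, (eVerts e).card := by
        refine Finset.sum_congr rfl fun e _ => ?_
        exact (Finset.card_filter _ _).symm
    _ = ∑ e ∈ W, 2 := Finset.sum_congr rfl fun e he => eVerts_card (hnd e he)
    _ = 2 * W.card := by rw [Finset.sum_const, smul_eq_mul, mul_comm]

lemma sum_incVerts_card (TT : Finset (Finset (Sym2 V))) :
    ∑ T ∈ TT, (incVerts T).card
      = ∑ v ∈ Finset.univ, (TT.filter (fun T => v ∈ incVerts T)).card := by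
  calc ∑ T ∈ TT, (incVerts T).card
      = ∑ T ∈ TT, ∑ v ∈ Finset.univ, (if v ∈ incVerts T then 1 else 0) := by
        refine Finset.sum_congr rfl fun T _ => ?_
        have h : (Finset.univ.filter (fun v => v ∈ incVerts T)).card
            = ∑ v ∈ Finset.univ, (if v ∈ incVerts T then 1 else 0) := Finset.card_filter _ _
        rw [← h]
        congr 1
        ext v; simp
    _ = ∑ v ∈ Finset.univ, ∑ T ∈ TT, (if v ∈ incVerts T then 1 else 0) := Finset.sum_comm
    _ = _ := by
        refine Finset.sum_congr rfl fun v _ => ?_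
        exact (Finset.card_filter _ _).symm

lemma card_at_le {W : Finset (Sym2 V)} (hnd : ∀ e ∈ W, ¬ e.IsDiag) (v : V) (Y : Finset V) :
    (W.filter (fun e => v ∈ e ∧ eVerts e ⊆ Y)).card ≤ (Y.erase v).card := by
  classical
  apply Finset.card_le_card_of_injOn (fun e => if h : v ∈ e then Sym2.Mem.other' h else v)
  · intro e he
    obtain ⟨heW, hve, hsub⟩ := Finset.mem_filter.1 he
    simp only [dif_pos hve, Finset.mem_coe]
    refine Finset.mem_erase.2 ⟨?_, hsub (mem_eVerts.2 (Sym2.other_mem' hve))⟩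
    intro hcontra
    have hdiag : (s(v, v)).IsDiag := Sym2.mk_isDiag_iff.2 rfl
    have := Sym2.other_spec' hve
    rw [hcontra] at this
    exact hnd e heW (by rw [← this]; exact hdiag)
  · intro e₁ h₁ e₂ h₂ heq
    obtain ⟨_, hv1, _⟩ := Finset.mem_filter.1 h₁
    obtain ⟨_, hv2, _⟩ := Finset.mem_filter.1 h₂
    simp only [dif_pos hv1, dif_pos hv2] at heq
    rw [← Sym2.other_spec' hv1, ← Sym2.other_spec' hv2, heq]

lemma filter_eq_of_subset {T : Finset (Sym2 V)} (v : V) (hT : ∀ e ∈ T, eVerts e ⊆ incVerts T) :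
    T.filter (fun e => v ∈ e) = T.filter (fun e => v ∈ e ∧ eVerts e ⊆ incVerts T) := by
  apply Finset.filter_congr
  intro e he
  simp only [iff_self_and]
  exact fun _ => hT e he


-- PART I
theorem partI {K L : ℤ} (hK : 2 ≤ K) (hKL : K + 1 ≤ L) (hL2 : L ≤ 2*K - 1)
    (EE : Finset (Sym2 V)) (hnd : ∀ e ∈ EE, ¬ e.IsDiag)
    (hdeg : ∀ v : V, 2*L ≤ ((EE.filter (fun e => v ∈ e)).card : ℤ))
    (hn : 2*L < (Fintype.card V : ℤ))
    (hsep : ∀ P S : Finset V, Disjoint P S → P.Nonempty → P ∪ S ≠ Finset.univ →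
      (∀ a ∈ P, ∀ e ∈ EE, a ∈ e → eVerts e ⊆ P ∪ S) → 2*L ≤ (S.card : ℤ)) :
    ∃ T, T ⊆ EE ∧ CountSparse K L T ∧ (T.card : ℤ) = K * (Fintype.card V) - L := by
  classical
  have hL3 : (3:ℤ) ≤ L := by omega
  -- maximum sparse subset
  have hmem0 : (∅ : Finset (Sym2 V)) ∈ EE.powerset.filter (fun F => CountSparse K L F) := by
    simp only [Finset.mem_filter, Finset.mem_powerset]
    exact ⟨Finset.empty_subset _, sparse_empty K L⟩
  obtain ⟨Fs, hFsmem, hFsmax⟩ :=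
    Finset.exists_max_image (EE.powerset.filter (fun F => CountSparse K L F)) Finset.card ⟨∅, hmem0⟩
  simp only [Finset.mem_filter, Finset.mem_powerset] at hFsmem
  obtain ⟨hFsE, hFs⟩ := hFsmem
  have hndFs : ∀ e ∈ Fs, ¬ e.IsDiag := fun e he => hnd e (hFsE he)
  have hedge : ∀ e ∈ EE, e ∉ Fs → ¬ CountSparse K L (insert e Fs) := by
    intro e he heF hsp
    have hmem : insert e Fs ∈ EE.powerset.filter (fun F => CountSparse K L F) := by
      simp only [Finset.mem_filter, Finset.mem_powerset]
      exact ⟨Finset.insert_subset he hFsE, hsp⟩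
    have hle := hFsmax _ hmem
    rw [Finset.card_insert_of_notMem heF] at hle; omega
  by_contra hno
  push_neg at hno
  set n := Fintype.card V with hndef
  have hnovs : ∀ T, T ⊆ Fs → Tt K L T → incVerts T ≠ Finset.univ := by
    intro T hT ht hvu
    refine hno T (hT.trans hFsE) (sparse_subset hFs hT) ?_
    rw [ht.2, hvu, Finset.card_univ]
  have hnpos : 0 < n := by
    have : (0:ℤ) < (n:ℤ) := by omega
    exact_mod_cast this
  have hVne : Nonempty V := Fintype.card_pos_iff.1 hnpos
  -- Fs nonempty
  have hFs_ne : Fs.Nonempty := by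
    obtain ⟨v₀⟩ := hVne
    have hdg := hdeg v₀
    have hfne : (EE.filter (fun e => v₀ ∈ e)).Nonempty := by
      rw [← Finset.card_pos]
      have : (0:ℤ) < ((EE.filter (fun e => v₀ ∈ e)).card : ℤ) := by omega
      exact_mod_cast this
    obtain ⟨e₀, he₀⟩ := hfne
    have he₀E : e₀ ∈ EE := (Finset.mem_filter.1 he₀).1
    have hs : CountSparse K L {e₀} := by
      intro W hW hne
      rcases Finset.subset_singleton_iff.1 hW with rfl | rfl
      · exact absurd hne (by simp)
      · rw [incVerts_singleton, eVerts_card (hnd e₀ he₀E)]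
        simp only [Finset.card_singleton, Nat.cast_one, Nat.cast_ofNat]
        omega
    have hmem : {e₀} ∈ EE.powerset.filter (fun F => CountSparse K L F) := by
      simp only [Finset.mem_filter, Finset.mem_powerset]
      exact ⟨Finset.singleton_subset_iff.2 he₀E, hs⟩
    have := hFsmax _ hmem
    rw [Finset.card_singleton] at this
    rw [← Finset.card_pos]; omega
  have hFs_ub : (Fs.card : ℤ) ≤ K * n - L := by
    have h1 := sparse_card_le hFs hFs_ne
    have h2 : (incVerts Fs).card ≤ n := by
      rw [hndef, ← Finset.card_univ]; exact Finset.card_le_univ _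
    have h2' : ((incVerts Fs).card : ℤ) ≤ (n:ℤ) := by exact_mod_cast h2
    nlinarith
  set TT := TTfam K L Fs with hTTdef
  set U := Ufree K L Fs with hUdef
  set p := TT.card with hpdef
  set m : V → ℕ := fun v => (TT.filter (fun T => v ∈ incVerts T)).card with hm
  set u : V → ℕ := fun v => (U.filter (fun e => v ∈ e)).card with hu
  have hcl : ∀ e ∈ EE, (∃ T ∈ TT, eVerts e ⊆ incVerts T) ∨ e ∈ U :=
    classify hK hL2 hFs hnd hndFs hFsE hedge
  have hUsub : U ⊆ Fs := Finset.filter_subset _ _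
  have hUnd : ∀ e ∈ U, ¬ e.IsDiag := fun e he => hndFs e (hUsub he)
  have hTTfacts : ∀ T ∈ TT, T ⊆ Fs ∧ Tt K L T ∧ 3 ≤ (incVerts T).card := fun T hT =>
    ⟨(mem_TTfam.1 hT).1.1, (mem_TTfam.1 hT).1.2.1, (mem_TTfam.1 hT).2⟩
  have hm1 : ∀ T ∈ TT, ∀ v ∈ incVerts T, 1 ≤ m v := by
    intro T hT v hv
    exact Finset.card_pos.2 ⟨T, Finset.mem_filter.2 ⟨hT, hv⟩⟩
  have hmuniq : ∀ v, m v = 1 → ∀ T ∈ TT, v ∈ incVerts T → ∀ T' ∈ TT, v ∈ incVerts T' → T' = T := by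
    intro v hv T hT hvT T' hT' hvT'
    obtain ⟨a, ha⟩ := Finset.card_eq_one.1 hv
    have h1 : T ∈ TT.filter (fun T => v ∈ incVerts T) := Finset.mem_filter.2 ⟨hT, hvT⟩
    have h2 : T' ∈ TT.filter (fun T => v ∈ incVerts T) := Finset.mem_filter.2 ⟨hT', hvT'⟩
    rw [ha, Finset.mem_singleton] at h1 h2
    rw [h1, h2]
  have hm0 : ∀ v, m v = 0 → ∀ e ∈ EE, v ∈ e → e ∈ U := by
    intro v h0 e he hve
    rcases hcl e he with ⟨T, hT, hev⟩ | hU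
    · exfalso
      have : 1 ≤ m v := hm1 T hT v (hev (mem_eVerts.2 hve))
      omega
    · exact hU
  have hm1edge : ∀ v, m v = 1 → ∀ T ∈ TT, v ∈ incVerts T →
      ∀ e ∈ EE, v ∈ e → e ∈ U ∨ eVerts e ⊆ incVerts T := by
    intro v hv T hT hvT e he hve
    rcases hcl e he with ⟨T', hT', hev⟩ | hU
    · right
      rwa [hmuniq v hv T hT hvT T' hT' (hev (mem_eVerts.2 hve))] at hev
    · exact Or.inl hU
  set σ : V → ℚ := fun v => (K:ℚ) * (m v) + (u v : ℚ)/2 - K with hσdef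
  have hKQ : (2:ℚ) ≤ (K:ℚ) := by exact_mod_cast hK
  have hKLQ : (K:ℚ) + 1 ≤ (L:ℚ) := by exact_mod_cast hKL
  have hL2Q : (L:ℚ) ≤ 2*(K:ℚ) - 1 := by exact_mod_cast hL2
  have hσ0 : ∀ v, 0 ≤ σ v := by
    intro v
    rcases Nat.eq_zero_or_pos (m v) with h0 | hpos
    · have hsubU : EE.filter (fun e => v ∈ e) ⊆ U.filter (fun e => v ∈ e) := by
        intro e he
        obtain ⟨heE, hve⟩ := Finset.mem_filter.1 he
        exact Finset.mem_filter.2 ⟨hm0 v h0 e heE hve, hve⟩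
      have hcard := Finset.card_le_card hsubU
      have hdg := hdeg v
      have huv : 2*(L:ℚ) ≤ (u v : ℚ) := by
        have : (2*L : ℤ) ≤ ((u v : ℕ) : ℤ) := le_trans hdg (by exact_mod_cast hcard)
        exact_mod_cast this
      simp only [hσdef, h0, Nat.cast_zero, mul_zero, zero_add]
      nlinarith
    · have hm' : (1:ℚ) ≤ (m v : ℚ) := by exact_mod_cast hpos
      have hu' : (0:ℚ) ≤ (u v : ℚ) := Nat.cast_nonneg _
      simp only [hσdef]
      nlinarith
  -- per-T lower bound
  have hC2 : ∀ T ∈ TT, (L:ℚ) ≤ ∑ v ∈ incVerts T, σ v / (m v) := by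
    intro T hT
    obtain ⟨hTFs, hTt, hT3⟩ := hTTfacts T hT
    set X := incVerts T with hXdef
    set x := X.card with hxdef
    have hTsubEE : T ⊆ EE := hTFs.trans hFsE
    have hndT : ∀ e ∈ T, ¬ e.IsDiag := fun e he => hnd e (hTsubEE he)
    have hein : ∀ e ∈ T, eVerts e ⊆ X := fun e he => eVerts_subset_incVerts he
    -- handshake
    have hhs : 2 * T.card ≤ x * (x - 1) := by
      have h1 := sum_card_filter_mem hndT
      have h2 : ∀ v ∈ X, (T.filter (fun e => v ∈ e)).card ≤ x - 1 := by
        intro v hv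
        rw [filter_eq_of_subset v hein]
        have h3 := card_at_le hndT v X
        rwa [Finset.card_erase_of_mem hv] at h3
      have h3 : ∑ v ∈ Finset.univ, (T.filter (fun e => v ∈ e)).card
          = ∑ v ∈ X, (T.filter (fun e => v ∈ e)).card := by
        symm
        apply Finset.sum_subset (Finset.subset_univ X)
        intro v _ hvX
        rw [Finset.card_eq_zero]
        apply Finset.filter_eq_empty_iff.2
        intro e he hve
        exact hvX (eVerts_subset_incVerts he (mem_eVerts.2 hve))
      calc 2 * T.card = ∑ v ∈ X, (T.filter (fun e => v ∈ e)).card := by rw [← h3, h1]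
        _ ≤ ∑ _v ∈ X, (x - 1) := Finset.sum_le_sum h2
        _ = x * (x-1) := by rw [Finset.sum_const, smul_eq_mul]
    have hx3 : (3:ℤ) ≤ (x:ℤ) := by exact_mod_cast hT3
    have htight : (T.card:ℤ) = K * x - L := hTt.2
    have hhsZ : 2 * (T.card:ℤ) ≤ (x:ℤ) * ((x:ℤ) - 1) := by
      have hx1 : 1 ≤ x := by omega
      have : ((x * (x-1) : ℕ) : ℤ) = (x:ℤ) * ((x:ℤ) - 1) := by
        push_cast [Nat.cast_sub hx1]; ring
      rw [← this]; exact_mod_cast hhs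
    have hx2K : 2*K - 1 ≤ (x:ℤ) := by
      by_contra hxlt
      push_neg at hxlt
      have hprod : (0:ℤ) ≤ ((x:ℤ) - 3) * ((2*K - 2) - (x:ℤ)) :=
        mul_nonneg (by omega) (by omega)
      nlinarith
    have hx2KQ : 2*(K:ℚ) - 1 ≤ (x:ℚ) := by exact_mod_cast hx2K
    have hx3Q : (3:ℚ) ≤ (x:ℚ) := by exact_mod_cast hx3
    set Sh := X.filter (fun v => 2 ≤ m v ∨ 1 ≤ u v) with hShdef
    have hpay0 : ∀ v ∈ X, 0 ≤ σ v / (m v) := fun v _ => div_nonneg (hσ0 v) (Nat.cast_nonneg _)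
    have hpayhalf : ∀ v ∈ Sh, (1:ℚ)/2 ≤ σ v / (m v) := by
      intro v hv
      obtain ⟨hvX, hcase⟩ := Finset.mem_filter.1 hv
      have hm1' : 1 ≤ m v := hm1 T hT v hvX
      have hmQ : (1:ℚ) ≤ (m v : ℚ) := by exact_mod_cast hm1'
      have huQ : (0:ℚ) ≤ (u v : ℚ) := Nat.cast_nonneg _
      rcases le_or_gt 2 (m v) with hm2 | hmlt
      · have hm2Q : (2:ℚ) ≤ (m v : ℚ) := by exact_mod_cast hm2
        rw [le_div_iff₀ (by linarith)]
        simp only [hσdef]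
        nlinarith
      · have hmeq : m v = 1 := by omega
        have hu1 : 1 ≤ u v := by
          rcases hcase with h2 | h1
          · omega
          · exact h1
        have hu1Q : (1:ℚ) ≤ (u v : ℚ) := by exact_mod_cast hu1
        rw [le_div_iff₀ (by linarith)]
        simp only [hσdef, hmeq, Nat.cast_one, mul_one]
        nlinarith
    by_cases hall : X ⊆ Sh
    · -- all shared
      have hpayc : ∀ v ∈ X,
          min ((K:ℚ)/2) ((max 1 (2*(L:ℚ) - (x:ℚ) + 1))/2) ≤ σ v / (m v) := by
        intro v hv
        have hvSh := hall hv
        obtain ⟨_, hcase⟩ := Finset.mem_filter.1 hvSh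
        have hm1' : 1 ≤ m v := hm1 T hT v hv
        have hmQ : (1:ℚ) ≤ (m v : ℚ) := by exact_mod_cast hm1'
        have huQ : (0:ℚ) ≤ (u v : ℚ) := Nat.cast_nonneg _
        rcases le_or_gt 2 (m v) with hm2 | hmlt
        · refine le_trans (min_le_left _ _) ?_
          have hm2Q : (2:ℚ) ≤ (m v : ℚ) := by exact_mod_cast hm2
          rw [le_div_iff₀ (by linarith)]
          simp only [hσdef]
          nlinarith
        · have hmeq : m v = 1 := by omega
          have hu1 : 1 ≤ u v := by
            rcases hcase with h2 | h1
            · omega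
            · exact h1
          -- degree bound : 2L ≤ (x-1) + u v
          have hdegv : 2*L ≤ ((x:ℤ) - 1) + (u v : ℤ) := by
            have hsplit : EE.filter (fun e => v ∈ e) ⊆
                (EE.filter (fun e => v ∈ e ∧ eVerts e ⊆ X)) ∪ (U.filter (fun e => v ∈ e)) := by
              intro e he
              obtain ⟨heE, hve⟩ := Finset.mem_filter.1 he
              rcases hm1edge v hmeq T hT hv e heE hve with hU | hin
              · exact Finset.mem_union_right _ (Finset.mem_filter.2 ⟨hU, hve⟩)
              · exact Finset.mem_union_left _ (Finset.mem_filter.2 ⟨heE, hve, hin⟩)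
            have hc := le_trans (Finset.card_le_card hsplit) (Finset.card_union_le _ _)
            have hc1 := card_at_le hnd v X
            rw [Finset.card_erase_of_mem hv] at hc1
            have hx1 : 1 ≤ x := by omega
            have : ((EE.filter (fun e => v ∈ e)).card : ℤ) ≤ ((x:ℤ) - 1) + (u v : ℤ) := by
              have huveq : u v = (U.filter (fun e => v ∈ e)).card := rfl
              have hc' : (EE.filter (fun e => v ∈ e)).card ≤ (x - 1) + u v := by omega
              calc ((EE.filter (fun e => v ∈ e)).card : ℤ) ≤ (((x-1) + u v : ℕ) : ℤ) := by
                    exact_mod_cast hc'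
                _ = ((x:ℤ) - 1) + (u v : ℤ) := by push_cast [Nat.cast_sub hx1]; ring
            exact le_trans (hdeg v) this
          have hdegvQ : 2*(L:ℚ) ≤ ((x:ℚ) - 1) + (u v : ℚ) := by exact_mod_cast hdegv
          have hu1Q : (1:ℚ) ≤ (u v : ℚ) := by exact_mod_cast hu1
          refine le_trans (min_le_right _ _) ?_
          have hpay_eq : σ v / (m v) = (u v : ℚ)/2 := by
            simp only [hσdef, hmeq, Nat.cast_one, mul_one, div_one]
            ring
          rw [hpay_eq]
          apply div_le_div_of_nonneg_right ?_ (by norm_num)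
          · exact max_le hu1Q (by linarith)
      have hsum : (x:ℚ) * min ((K:ℚ)/2) ((max 1 (2*(L:ℚ) - (x:ℚ) + 1))/2)
          ≤ ∑ v ∈ X, σ v / (m v) := by
        calc (x:ℚ) * _ = ∑ _v ∈ X, min ((K:ℚ)/2) ((max 1 (2*(L:ℚ) - (x:ℚ) + 1))/2) := by
              rw [Finset.sum_const, nsmul_eq_mul]
          _ ≤ _ := Finset.sum_le_sum hpayc
      refine le_trans ?_ hsum
      -- arithmetic
      rcases le_total ((K:ℚ)/2) ((max 1 (2*(L:ℚ) - (x:ℚ) + 1))/2) with hmin | hmin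
      · rw [min_eq_left hmin]
        rcases le_total (2*(L:ℚ) - (x:ℚ) + 1) 1 with hmx | hmx
        · rw [max_eq_left hmx] at hmin
          nlinarith
        · rw [max_eq_right hmx] at hmin
          nlinarith
      · rw [min_eq_right hmin]
        rcases le_total (2*(L:ℚ) - (x:ℚ) + 1) 1 with hmx | hmx
        · rw [max_eq_left hmx]
          nlinarith
        · rw [max_eq_right hmx]
          nlinarith
    · -- private vertex exists
      obtain ⟨a, haX, haSh⟩ := Finset.not_subset.1 hall
      set P := X \ Sh with hPdef
      have hPne : P.Nonempty := ⟨a, Finset.mem_sdiff.2 ⟨haX, haSh⟩⟩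
      have hdisj : Disjoint P Sh := Finset.sdiff_disjoint
      have hunion : P ∪ Sh = X := Finset.sdiff_union_of_subset (Finset.filter_subset _ _)
      have hne_univ : P ∪ Sh ≠ Finset.univ := by rw [hunion]; exact hnovs T hTFs hTt
      have hclosure : ∀ a' ∈ P, ∀ e ∈ EE, a' ∈ e → eVerts e ⊆ P ∪ Sh := by
        intro a' ha' e he hae
        rw [hunion]
        obtain ⟨haX', haSh'⟩ := Finset.mem_sdiff.1 ha'
        have hnotsh : ¬ (2 ≤ m a' ∨ 1 ≤ u a') := by
          intro hc; exact haSh' (Finset.mem_filter.2 ⟨haX', hc⟩)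
        push_neg at hnotsh
        have hm' : m a' = 1 := by
          have := hm1 T hT a' haX'; omega
        have hu' : u a' = 0 := by omega
        rcases hm1edge a' hm' T hT haX' e he hae with hU | hin
        · exfalso
          have : e ∈ U.filter (fun e => a' ∈ e) := Finset.mem_filter.2 ⟨hU, hae⟩
          have : 1 ≤ u a' := Finset.card_pos.2 ⟨e, this⟩
          omega
        · exact hin
      have hSh2L := hsep P Sh hdisj hPne hne_univ hclosure
      have hSh2LQ : 2*(L:ℚ) ≤ (Sh.card : ℚ) := by exact_mod_cast hSh2L
      calc (L:ℚ) ≤ (Sh.card:ℚ) * (1/2) := by linarith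
        _ = ∑ _v ∈ Sh, (1:ℚ)/2 := by rw [Finset.sum_const, nsmul_eq_mul]
        _ ≤ ∑ v ∈ Sh, σ v / (m v) := Finset.sum_le_sum hpayhalf
        _ ≤ ∑ v ∈ X, σ v / (m v) :=
            Finset.sum_le_sum_of_subset_of_nonneg (Finset.filter_subset _ _)
              (fun v hv _ => hpay0 v hv)
  -- C3 : double counting the payments
  have hC3 : ∑ T ∈ TT, ∑ v ∈ incVerts T, σ v / (m v) ≤ ∑ v ∈ Finset.univ, σ v := by
    have hswap : ∑ T ∈ TT, ∑ v ∈ incVerts T, σ v / (m v)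
        = ∑ v ∈ Finset.univ, (m v : ℚ) * (σ v / (m v)) := by
      have h1 : ∀ T ∈ TT, ∑ v ∈ incVerts T, σ v / (m v)
          = ∑ v ∈ Finset.univ, (if v ∈ incVerts T then σ v / (m v) else 0) := by
        intro T _
        rw [← Finset.sum_filter]
        congr 1
        ext v; simp
      rw [Finset.sum_congr rfl h1, Finset.sum_comm]
      refine Finset.sum_congr rfl fun v _ => ?_
      rw [← Finset.sum_filter, Finset.sum_const, nsmul_eq_mul]
    rw [hswap]
    apply Finset.sum_le_sum
    intro v _
    rcases Nat.eq_zero_or_pos (m v) with h0 | hpos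
    · rw [h0]; simpa using hσ0 v
    · have : (m v : ℚ) ≠ 0 := Nat.cast_ne_zero.2 (by omega)
      rw [mul_div_cancel₀ _ this]
  have hLp : (L:ℚ) * p ≤ ∑ v ∈ Finset.univ, σ v := by
    calc (L:ℚ) * p = ∑ _T ∈ TT, (L:ℚ) := by rw [Finset.sum_const, nsmul_eq_mul, mul_comm]
      _ ≤ ∑ T ∈ TT, ∑ v ∈ incVerts T, σ v / (m v) := Finset.sum_le_sum hC2
      _ ≤ _ := hC3
  -- the master identity
  have hid : (Fs.card : ℚ) = (K:ℚ)*(n:ℚ) + (∑ v ∈ Finset.univ, σ v) - (L:ℚ)*(p:ℚ) := by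
    have hdec := card_decomp hK hL2 hFs hndFs
    have hS1 : (∑ T ∈ TT, ((incVerts T).card : ℚ)) = ∑ v ∈ Finset.univ, (m v : ℚ) := by
      have := sum_incVerts_card TT
      push_cast
      exact_mod_cast congrArg (Nat.cast : ℕ → ℚ) this
    have hS2 : (∑ v ∈ Finset.univ, (u v : ℚ)) = 2 * (U.card : ℚ) := by
      have := sum_card_filter_mem hUnd
      exact_mod_cast congrArg (Nat.cast : ℕ → ℚ) this
    have hTight : (∑ T ∈ TT, (T.card : ℚ)) = (K:ℚ) * (∑ T ∈ TT, ((incVerts T).card:ℚ)) - (L:ℚ)*(p:ℚ) := by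
      rw [Finset.mul_sum]
      have : ∀ T ∈ TT, (T.card : ℚ) = (K:ℚ) * ((incVerts T).card:ℚ) - (L:ℚ) := by
        intro T hT
        have := (hTTfacts T hT).2.1.2
        exact_mod_cast this
      rw [Finset.sum_congr rfl this, Finset.sum_sub_distrib, Finset.sum_const, nsmul_eq_mul, mul_comm]
    have hσsum : ∑ v ∈ Finset.univ, σ v
        = (K:ℚ)*(∑ v ∈ Finset.univ, (m v:ℚ)) + (∑ v ∈ Finset.univ, (u v:ℚ))/2 - (K:ℚ)*(n:ℚ) := by
      simp only [hσdef]
      rw [Finset.sum_sub_distrib, Finset.sum_add_distrib]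
      rw [← Finset.mul_sum, ← Finset.sum_div, Finset.sum_const, nsmul_eq_mul]
      rw [Finset.card_univ, ← hndef, mul_comm (n:ℚ) (K:ℚ)]
    have hdecQ : (Fs.card : ℚ) = (∑ T ∈ TT, (T.card:ℚ)) + (U.card : ℚ) := by
      rw [hdec]; push_cast; ring
    rw [hdecQ, hTight, hS1, hσsum, hS2]
    ring
  have hubQ : (Fs.card:ℚ) ≤ (K:ℚ)*(n:ℚ) - (L:ℚ) := by exact_mod_cast hFs_ub
  have hLQ : (0:ℚ) < (L:ℚ) := by exact_mod_cast (by omega : (0:ℤ) < L)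
  linarith

lemma vconn_degree {G : SimpleGraph V} {c : ℕ} (h : VConn G c) (v : V) :
    c ≤ (G.edgeFinset.filter (fun e => v ∈ e)).card := by
  classical
  have heq : G.edgeFinset.filter (fun e => v ∈ e) = G.incidenceFinset v := by
    ext e
    simp [SimpleGraph.mem_incidenceFinset, SimpleGraph.incidenceSet,
      SimpleGraph.mem_edgeFinset, and_comm]
  rw [heq, SimpleGraph.card_incidenceFinset_eq_degree]
  by_contra hlt
  push_neg at hlt
  set S := G.neighborFinset v with hS
  have hScard : S.card < c := by rwa [hS, SimpleGraph.card_neighborFinset_eq_degree]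
  have hcon := h.2 S hScard
  have hvS : v ∉ S := by simp [hS]
  have hv : v ∈ ((↑S : Set V))ᶜ := by simpa using hvS
  -- find another vertex outside S ∪ {v}
  have hcard : (insert v S).card < Fintype.card V := by
    have := Finset.card_insert_le v S
    have hc := h.1
    omega
  have : (Finset.univ \ insert v S).Nonempty := by
    rw [← Finset.card_pos, Finset.card_sdiff_of_subset (Finset.subset_univ _), Finset.card_univ]
    omega
  obtain ⟨w, hw⟩ := this
  rw [Finset.mem_sdiff, Finset.mem_insert] at hw
  push_neg at hw
  obtain ⟨-, hwv, hwS⟩ := hw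
  have hw' : w ∈ ((↑S : Set V))ᶜ := by simpa using hwS
  have hreach := hcon.preconnected ⟨v, hv⟩ ⟨w, hw'⟩
  obtain ⟨p⟩ := hreach
  cases p with
  | nil => exact hwv rfl
  | cons hadj q =>
    rename_i b
    have hGadj : G.Adj v b.val := hadj
    have hbS : b.val ∈ S := (SimpleGraph.mem_neighborFinset _ _ _).2 hGadj
    have hb2 := b.property
    simp only [Set.mem_compl_iff, Finset.mem_coe] at hb2
    exact hb2 hbS

lemma vconn_sep {G : SimpleGraph V} {c : ℕ} (h : VConn G c) (P S : Finset V)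
    (hdisj : Disjoint P S) (hPne : P.Nonempty) (hne : P ∪ S ≠ Finset.univ)
    (hclosure : ∀ a ∈ P, ∀ e ∈ G.edgeFinset, a ∈ e → eVerts e ⊆ P ∪ S) :
    c ≤ S.card := by
  classical
  by_contra hlt
  push_neg at hlt
  have hcon := h.2 S hlt
  obtain ⟨a, ha⟩ := hPne
  have haS : a ∉ S := Finset.disjoint_left.1 hdisj ha
  have hb : ∃ b, b ∉ P ∪ S := by
    by_contra hb
    push_neg at hb
    exact hne (Finset.eq_univ_iff_forall.2 hb)
  obtain ⟨b, hbPS⟩ := hb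
  have hbS : b ∉ S := fun hc => hbPS (Finset.mem_union_right _ hc)
  set sc : Set V := ((↑S : Set V))ᶜ with hscdef
  have ha' : a ∈ sc := by simpa [hscdef] using haS
  have hb' : b ∈ sc := by simpa [hscdef] using hbS
  -- walks starting in P stay in P
  have hkey : ∀ (x y : sc) (q : (G.induce sc).Walk x y),
      x.val ∈ P → y.val ∈ P := by
    intro x y q
    induction q with
    | nil => exact id
    | cons hadj q ih =>
      rename_i x' z w'
      intro hx
      apply ih
      have hGadj : G.Adj x'.val z.val := hadj
      have hedge : s(x'.val, z.val) ∈ G.edgeFinset := by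
        rw [SimpleGraph.mem_edgeFinset]
        exact hGadj
      have hz := hclosure x'.val hx _ hedge (by simp)
      have hzmem : z.val ∈ P ∪ S := hz (mem_eVerts.2 (by simp [Sym2.mem_iff]))
      have hzS : z.val ∉ S := by
        have hz2 := z.property
        simp only [hscdef, Set.mem_compl_iff, Finset.mem_coe] at hz2
        exact hz2
      rcases Finset.mem_union.1 hzmem with hp | hs
      · exact hp
      · exact absurd hs hzS
  obtain ⟨p⟩ := hcon.preconnected ⟨a, ha'⟩ ⟨b, hb'⟩
  have := hkey _ _ p ha
  exact hbPS (Finset.mem_union_left _ this)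


theorem augpath {k ℓ : ℤ} (hk : 2 ≤ k) (hl2 : ℓ ≤ 2*k - 1) {t' : ℕ}
    (Fam : Fin t' → Finset (Sym2 V)) (hspars : ∀ i, CountSparse k ℓ (Fam i)) :
    ∀ (q : ℕ) (x : ℕ → Sym2 V) (ii : ℕ → Fin t') (B : ℕ → Finset (Sym2 V)),
    (∀ a, a ≤ q → ¬ (x a).IsDiag) →
    (∀ a, a < q → x a ∉ Fam (ii a) ∧ MinBlocker k ℓ (Fam (ii a)) (x a) (B a) ∧ x (a+1) ∈ B a) →
    (x q ∉ Fam (ii q) ∧ CountSparse k ℓ (insert (x q) (Fam (ii q)))) →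
    (∀ a b, a < q → a + 1 < b → b ≤ q → x b ∉ B a) →
    (∀ a b, a < b → b ≤ q → x a ≠ x b) →
    ∃ Fam' : Fin t' → Finset (Sym2 V),
      (∀ i, CountSparse k ℓ (Fam' i)) ∧
      (∀ i, Fam' i ⊆ Fam i ∪ (Finset.range (q+1)).image x) ∧
      ((∑ i, (Fam' i).card) = (∑ i, (Fam i).card) + 1) ∧
      (∀ a, a ≤ q → ∀ j, x a ∈ Fam' j → (x a ∈ Fam j ∨ j = ii a)) ∧
      (∀ i, ∀ z ∈ Fam i, (∀ b, 1 ≤ b → b ≤ q → z ≠ x b) → z ∈ Fam' i) ∧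
      (∀ b, 1 ≤ b → b ≤ q → x b ∉ Fam' (ii (b-1))) := by
  classical
  intro q
  induction q with
  | zero =>
    intro x ii B hndx harc hexit hns hdist
    refine ⟨Function.update Fam (ii 0) (insert (x 0) (Fam (ii 0))), ?_, ?_, ?_, ?_, ?_, ?_⟩
    · intro i
      by_cases h : i = ii 0
      · subst h; rw [Function.update_self]; exact hexit.2
      · rw [Function.update_of_ne h]; exact hspars i
    · intro i z hz
      by_cases h : i = ii 0
      · subst h; rw [Function.update_self] at hz
        rcases Finset.mem_insert.1 hz with rfl | hz
        · exact Finset.mem_union_right _ (Finset.mem_image.2 ⟨0, by simp⟩)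
        · exact Finset.mem_union_left _ hz
      · rw [Function.update_of_ne h] at hz; exact Finset.mem_union_left _ hz
    · have hfun : (fun i => ((Function.update Fam (ii 0) (insert (x 0) (Fam (ii 0)))) i).card)
          = Function.update (fun i => (Fam i).card) (ii 0) ((insert (x 0) (Fam (ii 0))).card) := by
        ext i
        by_cases h : i = ii 0
        · subst h; simp
        · simp [Function.update_of_ne h]
      calc ∑ i, ((Function.update Fam (ii 0) (insert (x 0) (Fam (ii 0)))) i).card
          = ∑ i, (Function.update (fun i => (Fam i).card) (ii 0)
              ((insert (x 0) (Fam (ii 0))).card)) i := by rw [hfun]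
        _ = ((insert (x 0) (Fam (ii 0))).card)
              + ∑ i ∈ Finset.univ.erase (ii 0), (Fam i).card := by
            rw [Finset.sum_update_of_mem (Finset.mem_univ _), Finset.sdiff_singleton_eq_erase]
        _ = ((Fam (ii 0)).card + 1) + ∑ i ∈ Finset.univ.erase (ii 0), (Fam i).card := by
            rw [Finset.card_insert_of_notMem hexit.1]
        _ = (∑ i, (Fam i).card) + 1 := by
            rw [← Finset.add_sum_erase Finset.univ _ (Finset.mem_univ (ii 0))]
            ring
    · intro a ha j hj
      interval_cases a
      by_cases h : j = ii 0
      · exact Or.inr h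
      · rw [Function.update_of_ne h] at hj; exact Or.inl hj
    · intro i z hz _
      by_cases h : i = ii 0
      · subst h; rw [Function.update_self]; exact Finset.mem_insert_of_mem hz
      · rw [Function.update_of_ne h]; exact hz
    · intro b hb1 hb0; omega
  | succ q IH =>
    intro x ii B hndx harc hexit hns hdist
    obtain ⟨G, hGa, hGb, hGc, hGd, hGe, hGg⟩ := IH (fun n => x (n+1)) (fun n => ii (n+1))
      (fun n => B (n+1))
      (fun a ha => hndx (a+1) (by omega))
      (fun a ha => harc (a+1) (by omega))
      hexit
      (fun a b h1 h2 h3 => hns (a+1) (b+1) (by omega) (by omega) (by omega))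
      (fun a b h1 h2 => hdist (a+1) (b+1) (by omega) (by omega))
    set i0 := ii 0 with hi0
    obtain ⟨hx0F, hMB0, hx1B0⟩ := harc 0 (by omega)
    have hB0Fam : B 0 ⊆ Fam i0 := hMB0.1.1
    -- x 0 not in G i0
    have hx0G : x 0 ∉ G i0 := by
      intro h
      rcases Finset.mem_union.1 (hGb i0 h) with h' | h'
      · exact hx0F h'
      · obtain ⟨a, ha, haeq⟩ := Finset.mem_image.1 h'
        rw [Finset.mem_range] at ha
        exact hdist 0 (a+1) (by omega) (by omega) haeq.symm
    -- B 0 survives into G i0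
    have hB0G : B 0 ⊆ G i0 := by
      intro z hz
      refine hGe i0 z (hB0Fam hz) ?_
      intro b hb1 hbq heq
      exact hns 0 (b+1) (by omega) (by omega) (by omega) (heq ▸ hz)
    -- x 1 is in G i0
    have hx1G : x 1 ∈ G i0 := by
      refine hGe i0 (x 1) (hB0Fam hx1B0) ?_
      intro b hb1 hbq heq
      exact hdist 1 (b+1) (by omega) (by omega) heq
    -- B 0 is a minimal blocker for x 0 in G i0
    have hblkG : IsBlocker k ℓ (G i0) (x 0) (B 0) := ⟨hB0G, hMB0.1.2.1, hMB0.1.2.2⟩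
    have hMBG : MinBlocker k ℓ (G i0) (x 0) (B 0) := by
      obtain ⟨Bm, hBm⟩ := exists_minBlocker hk hl2 (hGa i0) (hndx 0 (by omega)) ⟨B 0, hblkG⟩
      have hBmB0 : Bm ⊆ B 0 := hBm.2 _ hblkG
      have hBmFam : IsBlocker k ℓ (Fam i0) (x 0) Bm :=
        ⟨hBmB0.trans hB0Fam, hBm.1.2.1, hBm.1.2.2⟩
      have hB0Bm : B 0 ⊆ Bm := hMB0.2 _ hBmFam
      have heq : Bm = B 0 := Finset.Subset.antisymm hBmB0 hB0Bm
      exact ⟨hblkG, fun B' hB' => heq ▸ hBm.2 B' hB'⟩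
    set H := Function.update G i0 ((insert (x 0) (G i0)).erase (x 1)) with hHdef
    have hHi0 : H i0 = (insert (x 0) (G i0)).erase (x 1) := Function.update_self _ _ _
    have hHne : ∀ i, i ≠ i0 → H i = G i := fun i h => Function.update_of_ne h _ _
    refine ⟨H, ?_, ?_, ?_, ?_, ?_, ?_⟩
    · -- sparsity
      intro i
      by_cases h : i = i0
      · subst h; rw [hHi0]
        exact sparse_insert_erase hk hl2 (hGa i0) hx0G (hndx 0 (by omega)) hMBG hx1B0
      · rw [hHne i h]; exact hGa i
    · -- subset
      intro i z hz
      have himg : ∀ w, w ∈ (Finset.range (q+1)).image (fun n => x (n+1)) →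
          w ∈ (Finset.range (q+2)).image x := by
        intro w hw
        obtain ⟨a, ha, haeq⟩ := Finset.mem_image.1 hw
        rw [Finset.mem_range] at ha
        exact Finset.mem_image.2 ⟨a+1, Finset.mem_range.2 (by omega), haeq⟩
      by_cases h : i = i0
      · subst h; rw [hHi0] at hz
        have hz' := Finset.mem_of_mem_erase hz
        rcases Finset.mem_insert.1 hz' with rfl | hz''
        · exact Finset.mem_union_right _ (Finset.mem_image.2 ⟨0, Finset.mem_range.2 (by omega), rfl⟩)
        · rcases Finset.mem_union.1 (hGb i0 hz'') with h' | h'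
          · exact Finset.mem_union_left _ h'
          · exact Finset.mem_union_right _ (himg z h')
      · rw [hHne i h] at hz
        rcases Finset.mem_union.1 (hGb i hz) with h' | h'
        · exact Finset.mem_union_left _ h'
        · exact Finset.mem_union_right _ (himg z h')
    · -- cardinality
      have hcard : (H i0).card = (G i0).card := by
        rw [hHi0, Finset.card_erase_of_mem (Finset.mem_insert_of_mem hx1G),
          Finset.card_insert_of_notMem hx0G]
        omega
      have : ∀ i, (H i).card = (G i).card := by
        intro i
        by_cases h : i = i0
        · subst h; exact hcard
        · rw [hHne i h]
      calc ∑ i, (H i).card = ∑ i, (G i).card := Finset.sum_congr rfl (fun i _ => this i)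
        _ = (∑ i, (Fam i).card) + 1 := hGc
    · -- placement
      intro a ha j hj
      cases a with
      | zero =>
        by_cases h : j = i0
        · exact Or.inr h
        · rw [hHne j h] at hj
          rcases Finset.mem_union.1 (hGb j hj) with h' | h'
          · exact Or.inl h'
          · obtain ⟨c, hc, hceq⟩ := Finset.mem_image.1 h'
            rw [Finset.mem_range] at hc
            exact absurd hceq.symm (hdist 0 (c+1) (by omega) (by omega))
      | succ c =>
        by_cases h : j = i0
        · subst h
          rw [hHi0] at hj
          have hne1 : x (c+1) ≠ x 1 := by
            intro heq
            have : c + 1 = 1 := by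
              by_contra hcc
              exact hdist 1 (c+1) (by omega) (by omega) heq.symm
            -- c+1 = 1 means c = 0, x 1 ∈ H i0 erased: contradiction
            have hc0 : c = 0 := by omega
            subst hc0
            exact (Finset.notMem_erase _ _) hj
          have hj' := Finset.mem_of_mem_erase hj
          rcases Finset.mem_insert.1 hj' with heq | hj'' 
          · exact absurd heq (hdist 0 (c+1) (by omega) (by omega)).symm
          · exact hGd c (by omega) i0 hj''
        · rw [hHne j h] at hj
          exact hGd c (by omega) j hj
    · -- survival
      intro i z hz hzx
      have hzG : z ∈ G i := by
        refine hGe i z hz ?_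
        intro b hb1 hbq
        exact hzx (b+1) (by omega) (by omega)
      by_cases h : i = i0
      · subst h; rw [hHi0]
        refine Finset.mem_erase.2 ⟨?_, Finset.mem_insert_of_mem hzG⟩
        exact hzx 1 (by omega) (by omega)
      · rw [hHne i h]; exact hzG
    · -- removal
      intro b hb1 hbq
      cases b with
      | zero => omega
      | succ c =>
        cases c with
        | zero =>
          -- b = 1 : x 1 ∉ H (ii 0)
          simp only [Nat.sub_self]
          rw [hHi0]
          exact Finset.notMem_erase _ _
        | succ d =>
          -- b = d+2
          have hrem := hGg (d+1) (by omega) (by omega)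
          -- x (d+2) ∉ G (ii (d+1))
          by_cases h : ii (d+2-1) = i0
          · rw [h, hHi0]
            intro hmem
            have h1 := Finset.mem_of_mem_erase hmem
            rcases Finset.mem_insert.1 h1 with heq | h2
            · exact hdist 0 (d+2) (by omega) (by omega) heq.symm
            · have : ii ((d+1)+1-1) = i0 := h
              simp only [Nat.add_sub_cancel] at this
              rw [← this] at h2
              exact hrem h2
          · rw [hHne _ h]
            intro hmem
            have : ii ((d+1)+1-1) = ii (d+2-1) := rfl
            simp only [Nat.add_sub_cancel] at hrem ⊢
            exact hrem hmem

-- path extraction from ReflTransGen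
lemma rtg_path {α : Type*} {r : α → α → Prop} {a b : α} (h : Relation.ReflTransGen r a b) :
    ∃ (q : ℕ) (f : ℕ → α), f 0 = a ∧ f q = b ∧ ∀ j, j < q → r (f j) (f (j+1)) := by
  induction h with
  | refl => exact ⟨0, fun _ => a, rfl, rfl, fun j hj => absurd hj (by omega)⟩
  | tail hbc hr ihstep =>
    rename_i c d
    obtain ⟨q, f, h0, hq, hstep⟩ := ihstep
    refine ⟨q+1, fun m => if m ≤ q then f m else d, by simp [h0], by simp, ?_⟩
    intro j hj
    rcases Nat.lt_or_ge j q with h | h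
    · simp only [if_pos (by omega : j ≤ q), if_pos (by omega : j + 1 ≤ q)]
      exact hstep j h
    · have hjq : j = q := by omega
      subst hjq
      simp only [if_pos (le_refl j), if_neg (by omega : ¬ j + 1 ≤ j)]
      rw [hq]
      exact hr

theorem partII {k ℓ : ℤ} (hk : 2 ≤ k) (hl2 : ℓ ≤ 2*k - 1) (t : ℕ) (ht : 1 ≤ t)
    (T₀ : Finset (Sym2 V)) (hnd : ∀ e ∈ T₀, ¬ e.IsDiag)
    (hT₀ : CountSparse (k * t) (ℓ * t) T₀) :
    ∃ Fam : Fin t → Finset (Sym2 V),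
      (∀ i, Fam i ⊆ T₀) ∧ (∀ i, CountSparse k ℓ (Fam i)) ∧
      (∀ i j, i ≠ j → Disjoint (Fam i) (Fam j)) ∧
      ((∑ i, (Fam i).card) = T₀.card) := by
  classical
  set P : ℕ → Prop := fun s => ∃ Fam : Fin t → Finset (Sym2 V),
    (∀ i, Fam i ⊆ T₀) ∧ (∀ i, CountSparse k ℓ (Fam i)) ∧
    (∀ i j, i ≠ j → Disjoint (Fam i) (Fam j)) ∧ ((∑ i, (Fam i).card) = s) with hPdef
  have hP0 : P 0 := ⟨fun _ => ∅, fun _ => Finset.empty_subset _, fun _ => sparse_empty k ℓ,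
    fun _ _ _ => Finset.disjoint_empty_left _, by simp⟩
  have hPbound : ∀ s, P s → s ≤ T₀.card := by
    rintro s ⟨Fam, hsub, hsp, hdisj, hsum⟩
    have h1 : Finset.univ.biUnion Fam ⊆ T₀ := by
      intro z hz; obtain ⟨i, _, hzi⟩ := Finset.mem_biUnion.1 hz; exact hsub i hzi
    have h2 : (Finset.univ.biUnion Fam).card = ∑ i, (Fam i).card :=
      Finset.card_biUnion (fun i _ j _ hij => hdisj i j hij)
    rw [← hsum, ← h2]
    exact Finset.card_le_card h1
  set s := Nat.findGreatest P T₀.card with hsdef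
  have hPs : P s := Nat.findGreatest_spec (Nat.zero_le _) hP0
  obtain ⟨Fam, hsub, hsp, hdisj, hsum⟩ := hPs
  by_cases hdone : s = T₀.card
  · exact ⟨Fam, hsub, hsp, hdisj, by rw [hsum, hdone]⟩
  -- otherwise, augment for a contradiction
  exfalso
  have hslt : s < T₀.card := lt_of_le_of_ne (hPbound s ⟨Fam, hsub, hsp, hdisj, hsum⟩) hdone
  have hbiU : (Finset.univ.biUnion Fam).card = s := by
    rw [← hsum]; exact Finset.card_biUnion (fun i _ j _ hij => hdisj i j hij)
  have hssubset : Finset.univ.biUnion Fam ⊆ T₀ := by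
    intro z hz; obtain ⟨i, _, hzi⟩ := Finset.mem_biUnion.1 hz; exact hsub i hzi
  have hex : ∃ e₀, e₀ ∈ T₀ ∧ e₀ ∉ Finset.univ.biUnion Fam := by
    by_contra hc
    push_neg at hc
    have : T₀ ⊆ Finset.univ.biUnion Fam := hc
    have := Finset.card_le_card this
    omega
  obtain ⟨e₀, he₀T, he₀F⟩ := hex
  have he₀Fam : ∀ i, e₀ ∉ Fam i := by
    intro i hi; exact he₀F (Finset.mem_biUnion.2 ⟨i, Finset.mem_univ _, hi⟩)
  -- the step relation
  set StepR : Sym2 V → Sym2 V → Prop := fun a b =>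
    ∃ (i : Fin t) (Bb : Finset (Sym2 V)), a ∉ Fam i ∧ MinBlocker k ℓ (Fam i) a Bb ∧ b ∈ Bb
    with hStepdef
  set Reach : Sym2 V → Prop := fun y => Relation.ReflTransGen StepR e₀ y with hReachdef
  have hreachT₀ : ∀ y, Reach y → y ∈ T₀ := by
    intro y hy
    induction hy with
    | refl => exact he₀T
    | tail hstep hr ih =>
      obtain ⟨i, Bb, _, hmb, hmem⟩ := hr
      exact hsub i (hmb.1.1 hmem)
  set ExitP : Sym2 V → Prop := fun y =>
    ∃ i, y ∉ Fam i ∧ CountSparse k ℓ (insert y (Fam i)) with hExitdef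
  by_cases hcaseA : ∃ y, Reach y ∧ ExitP y
  · -- CASE A : augment
    obtain ⟨y, hyR, hyE⟩ := hcaseA
    have hPath : ∃ (q : ℕ) (f : ℕ → Sym2 V), f 0 = e₀ ∧ (∀ j, j < q → StepR (f j) (f (j+1)))
        ∧ ExitP (f q) := by
      obtain ⟨q, f, h0, hq, hstep⟩ := rtg_path hyR
      exact ⟨q, f, h0, hstep, hq ▸ hyE⟩
    set PP : ℕ → Prop := fun q => ∃ f : ℕ → Sym2 V, f 0 = e₀ ∧
      (∀ j, j < q → StepR (f j) (f (j+1))) ∧ ExitP (f q) with hPPdef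
    have hPP : ∃ q, PP q := by obtain ⟨q, f, h⟩ := hPath; exact ⟨q, f, h⟩
    set Q := Nat.find hPP with hQdef
    obtain ⟨f, hf0, hfstep, hfexit⟩ := Nat.find_spec hPP
    rw [← hQdef] at hfstep hfexit
    -- distinctness
    have hdist : ∀ a b, a < b → b ≤ Q → f a ≠ f b := by
      intro a b hab hbQ heq
      have hPP' : PP (Q - (b - a)) := by
        refine ⟨fun m => if m ≤ a then f m else f (m + (b - a)), by simp [hf0], ?_, ?_⟩
        · intro j hj
          by_cases h1 : j + 1 ≤ a
          · simp only [if_pos (by omega : j ≤ a), if_pos h1]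
            exact hfstep j (by omega)
          · by_cases h2 : j = a
            · subst h2
              simp only [if_pos (le_refl j), if_neg h1]
              have h3 : j + 1 + (b - j) = b + 1 := by omega
              rw [h3, heq]
              exact hfstep b (by omega)
            · simp only [if_neg (by omega : ¬ j ≤ a), if_neg h1]
              have h3 : j + 1 + (b - a) = (j + (b-a)) + 1 := by omega
              rw [h3]
              exact hfstep (j + (b - a)) (by omega)
        · by_cases hc : Q - (b - a) ≤ a
          · simp only [if_pos hc]
            have ha2 : Q - (b - a) = a := by omega
            have hbQ2 : b = Q := by omega
            rw [ha2, heq, hbQ2]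
            exact hfexit
          · simp only [if_neg hc]
            have h3 : Q - (b - a) + (b - a) = Q := by omega
            rw [h3]; exact hfexit
      exact Nat.find_min hPP (by omega : Q - (b - a) < Q) hPP'
    -- choose parts and blockers
    have hchoice : ∀ j, ∃ (i : Fin t) (Bb : Finset (Sym2 V)),
        (j < Q → (f j ∉ Fam i ∧ MinBlocker k ℓ (Fam i) (f j) Bb ∧ f (j+1) ∈ Bb)) ∧
        (j = Q → (f j ∉ Fam i ∧ CountSparse k ℓ (insert (f j) (Fam i)))) := by
      intro j
      rcases Nat.lt_or_ge j Q with h | h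
      · obtain ⟨i, Bb, h1, h2, h3⟩ := hfstep j h
        exact ⟨i, Bb, fun _ => ⟨h1, h2, h3⟩, fun heq => by omega⟩
      · rcases Nat.eq_or_lt_of_le h with heq | h'
        · obtain ⟨i, h1, h2⟩ := hfexit
          exact ⟨i, ∅, fun hlt => by omega, fun _ => by rw [← heq]; exact ⟨h1, h2⟩⟩
        · exact ⟨⟨0, ht⟩, ∅, fun hlt => by omega, fun heq => by omega⟩
    choose ii Bf hii using hchoice
    -- path elements are in T₀
    have hfT₀ : ∀ a, a ≤ Q → f a ∈ T₀ := by
      intro a ha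
      cases a with
      | zero => rw [hf0]; exact he₀T
      | succ c =>
        have hc := (hii c).1 (by omega)
        exact hsub (ii c) (hc.2.1.1.1 hc.2.2)
    -- no shortcuts
    have hns : ∀ a b, a < Q → a + 1 < b → b ≤ Q → f b ∉ Bf a := by
      intro a b haQ hab hbQ hmem
      have harca := (hii a).1 haQ
      have hPP' : PP (Q - (b - a - 1)) := by
        refine ⟨fun m => if m ≤ a then f m else f (m + (b - a - 1)), by simp [hf0], ?_, ?_⟩
        · intro j hj
          by_cases h1 : j + 1 ≤ a
          · simp only [if_pos (by omega : j ≤ a), if_pos h1]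
            exact hfstep j (by omega)
          · by_cases h2 : j = a
            · subst h2
              simp only [if_pos (le_refl j), if_neg h1]
              have h3 : j + 1 + (b - j - 1) = b := by omega
              rw [h3]
              exact ⟨ii j, Bf j, harca.1, harca.2.1, hmem⟩
            · simp only [if_neg (by omega : ¬ j ≤ a), if_neg h1]
              have h3 : j + 1 + (b - a - 1) = (j + (b-a-1)) + 1 := by omega
              rw [h3]
              exact hfstep (j + (b - a - 1)) (by omega)
        · simp only [if_neg (by omega : ¬ Q - (b - a - 1) ≤ a)]
          have h3 : Q - (b - a - 1) + (b - a - 1) = Q := by omega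
          rw [h3]; exact hfexit
      exact Nat.find_min hPP (by omega : Q - (b - a - 1) < Q) hPP'
    -- apply augpath
    obtain ⟨Fam', hFa, hFb, hFc, hFd, hFe, hFg⟩ := augpath hk hl2 Fam hsp Q f ii Bf
      (fun a ha => hnd _ (hfT₀ a ha))
      (fun a ha => (hii a).1 ha)
      ((hii Q).2 rfl)
      hns hdist
    -- Fam' is a valid family with bigger sum : contradiction with findGreatest
    have hsub' : ∀ i, Fam' i ⊆ T₀ := by
      intro i z hz
      rcases Finset.mem_union.1 (hFb i hz) with h | h
      · exact hsub i h
      · obtain ⟨a, ha, haeq⟩ := Finset.mem_image.1 h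
        rw [Finset.mem_range] at ha
        exact haeq ▸ hfT₀ a (by omega)
    have hdisj' : ∀ i j, i ≠ j → Disjoint (Fam' i) (Fam' j) := by
      intro i j hij
      rw [Finset.disjoint_left]
      intro z hzi hzj
      by_cases hz : ∃ a, a ≤ Q ∧ f a = z
      · obtain ⟨a, haQ, rfl⟩ := hz
        have hdi := hFd a haQ i hzi
        have hdj := hFd a haQ j hzj
        have hkey : ∀ w, f a ∈ Fam w → f a ∈ Fam' w → False := by
          intro w hw hwmem
          cases a with
          | zero =>
            rw [hf0] at hw
            exact he₀Fam w hw
          | succ c =>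
            have harc := (hii c).1 (by omega)
            have hfc : f (c+1) ∈ Fam (ii c) := harc.2.1.1.1 harc.2.2
            have hwiic : w = ii c := by
              by_contra hne
              exact (Finset.disjoint_left.1 (hdisj w (ii c) hne) hw) hfc
            have hrem := hFg (c+1) (by omega) (by omega)
            simp only [Nat.add_sub_cancel] at hrem
            rw [← hwiic] at hrem
            exact hrem hwmem
        rcases hdi with hi' | hi'
        · exact hkey i hi' hzi
        · rcases hdj with hj' | hj'
          · exact hkey j hj' hzj
          · exact hij (hi'.trans hj'.symm)
      · push_neg at hz
        have hi' : z ∈ Fam i := by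
          rcases Finset.mem_union.1 (hFb i hzi) with h | h
          · exact h
          · obtain ⟨a, ha, haeq⟩ := Finset.mem_image.1 h
            rw [Finset.mem_range] at ha
            exact absurd haeq (hz a (by omega))
        have hj' : z ∈ Fam j := by
          rcases Finset.mem_union.1 (hFb j hzj) with h | h
          · exact h
          · obtain ⟨a, ha, haeq⟩ := Finset.mem_image.1 h
            rw [Finset.mem_range] at ha
            exact absurd haeq (hz a (by omega))
        exact (Finset.disjoint_left.1 (hdisj i j hij) hi') hj'
    have hPs1 : P (s + 1) := ⟨Fam', hsub', hFa, hdisj', by rw [hFc, hsum]⟩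
    have hgt : Nat.findGreatest P T₀.card < s + 1 := by rw [← hsdef]; omega
    have hgt2 := Nat.findGreatest_is_greatest hgt (by omega : s + 1 ≤ T₀.card)
    exact hgt2 hPs1
  · -- CASE B : closure contradiction
    push_neg at hcaseA
    set R := T₀.filter Reach with hRdef
    have he₀R : e₀ ∈ R := Finset.mem_filter.2 ⟨he₀T, Relation.ReflTransGen.refl⟩
    have hRT₀ : R ⊆ T₀ := Finset.filter_subset _ _
    have hndR : ∀ e ∈ R, ¬ e.IsDiag := fun e he => hnd e (hRT₀ he)
    have hclosed : ∀ x ∈ R, ∀ i, x ∉ Fam i → ∃ Bb, MinBlocker k ℓ (Fam i) x Bb ∧ Bb ⊆ R := by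
      intro x hx i hxi
      have hxR := (Finset.mem_filter.1 hx).2
      have hnexit : ¬ ExitP x := fun h => hcaseA x hxR h
      have hnsp : ¬ CountSparse k ℓ (insert x (Fam i)) := by
        intro h; exact hnexit ⟨i, hxi, h⟩
      obtain ⟨Bb0, hBb0⟩ := exists_blocker_of_not_sparse hk hl2 (hsp i) hxi
        (hnd x (hRT₀ hx)) hnsp
      obtain ⟨Bb, hBb⟩ := exists_minBlocker hk hl2 (hsp i) (hnd x (hRT₀ hx)) ⟨Bb0, hBb0⟩
      refine ⟨Bb, hBb, ?_⟩
      intro y hy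
      refine Finset.mem_filter.2 ⟨hsub i (hBb.1.1 hy), ?_⟩
      exact Relation.ReflTransGen.tail hxR ⟨i, Bb, hxi, hBb, hy⟩
    -- each Fam i ∩ R is a maximal sparse subset of R
    have hmaxR : ∀ i, ∀ x ∈ R, x ∉ Fam i ∩ R → ¬ CountSparse k ℓ (insert x (Fam i ∩ R)) := by
      intro i x hx hxFi
      have hxi : x ∉ Fam i := fun h => hxFi (Finset.mem_inter.2 ⟨h, hx⟩)
      obtain ⟨Bb, hBb, hBbR⟩ := hclosed x hx i hxi
      have hblk : IsBlocker k ℓ (Fam i ∩ R) x Bb :=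
        ⟨fun z hz => Finset.mem_inter.2 ⟨hBb.1.1 hz, hBbR hz⟩, hBb.1.2.1, hBb.1.2.2⟩
      exact insert_blocker_not_sparse hblk hxFi
    set i₀ : Fin t := ⟨0, ht⟩ with hi₀def
    have hspR : ∀ i, CountSparse k ℓ (Fam i ∩ R) :=
      fun i => sparse_subset (hsp i) Finset.inter_subset_left
    have hcardeq : ∀ i, (Fam i ∩ R).card = (Fam i₀ ∩ R).card := by
      intro i
      have h1 := aug_max hk hl2 (hspR i₀) hndR Finset.inter_subset_right
        (hmaxR i₀) (Finset.inter_subset_right : Fam i ∩ R ⊆ R) (hspR i)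
      have h2 := aug_max hk hl2 (hspR i) hndR Finset.inter_subset_right
        (hmaxR i) (Finset.inter_subset_right : Fam i₀ ∩ R ⊆ R) (hspR i₀)
      omega
    have hkey := key_bound hk hl2 (hspR i₀) hndR Finset.inter_subset_right (hmaxR i₀) ht
      (sparse_subset hT₀ hRT₀)
    -- lower bound on R.card
    have hlow : (∑ i, (Fam i ∩ R).card) + 1 ≤ R.card := by
      have h1 : Finset.univ.biUnion (fun i => Fam i ∩ R) ⊆ R.erase e₀ := by
        intro z hz
        obtain ⟨i, _, hzi⟩ := Finset.mem_biUnion.1 hz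
        obtain ⟨hz1, hz2⟩ := Finset.mem_inter.1 hzi
        exact Finset.mem_erase.2 ⟨fun heq => he₀Fam i (heq ▸ hz1), hz2⟩
      have h2 : (Finset.univ.biUnion (fun i => Fam i ∩ R)).card = ∑ i, (Fam i ∩ R).card :=
        Finset.card_biUnion (fun i _ j _ hij =>
          Finset.disjoint_of_subset_left Finset.inter_subset_left
            (Finset.disjoint_of_subset_right Finset.inter_subset_left (hdisj i j hij)))
      have h3 := Finset.card_le_card h1
      rw [h2] at h3
      have h4 : (R.erase e₀).card = R.card - 1 := Finset.card_erase_of_mem he₀R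
      have h5 : 1 ≤ R.card := Finset.card_pos.2 ⟨e₀, he₀R⟩
      omega
    have hsumt : (∑ i, (Fam i ∩ R).card) = t * (Fam i₀ ∩ R).card := by
      rw [Finset.sum_congr rfl (fun i _ => hcardeq i)]
      simp [Finset.sum_const, Finset.card_univ]
    have hkey' : R.card ≤ t * (Fam i₀ ∩ R).card := by
      have : ((R.card : ℤ)) ≤ (t : ℤ) * ((Fam i₀ ∩ R).card : ℤ) := hkey
      exact_mod_cast this
    omega


end S12


/-- For integers `2 ≤ k < ℓ ≤ 2k-1` and `t ≥ 1`, every `2ℓt`-connected graph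
contains `t` pairwise edge-disjoint `(k,ℓ)`-rigid spanning subgraphs. -/
theorem stmt_12 {V : Type} [Fintype V] (k ℓ t : ℕ)
    (hk : 2 ≤ k) (hkl : k < ℓ) (hl : ℓ ≤ 2 * k - 1) (ht : 1 ≤ t)
    (G : SimpleGraph V) (hconn : VConn G (2 * ℓ * t)) :
    ∃ F : Fin t → Finset (Sym2 V),
      (∀ i, F i ⊆ G.edgeFinset) ∧
      (∀ i j, i ≠ j → Disjoint (F i) (F j)) ∧
      (∀ i, (countRank (k : ℤ) (ℓ : ℤ) (F i) : ℤ) = (k : ℤ) * Fintype.card V - ℓ) := by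
  classical
  set n := Fintype.card V with hndef
  set kz : ℤ := (k : ℤ) with hkz
  set lz : ℤ := (ℓ : ℤ) with hlz
  set tz : ℤ := (t : ℤ) with htz
  have hkz2 : (2:ℤ) ≤ kz := by rw [hkz]; exact_mod_cast hk
  have hklz : kz + 1 ≤ lz := by
    have h1 : k + 1 ≤ ℓ := hkl
    rw [hkz, hlz]; exact_mod_cast h1
  have htz1 : (1:ℤ) ≤ tz := by rw [htz]; exact_mod_cast ht
  have hlz2 : lz ≤ 2*kz - 1 := by
    have h1 : ℓ + 1 ≤ 2*k := by omega
    have : lz + 1 ≤ 2*kz := by rw [hkz, hlz]; exact_mod_cast h1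
    omega
  set K : ℤ := kz * tz with hKdef
  set L : ℤ := lz * tz with hLdef
  have hK2 : 2 ≤ K := by nlinarith
  have hKL : K + 1 ≤ L := by nlinarith
  have hL2 : L ≤ 2*K - 1 := by nlinarith
  set EE := G.edgeFinset with hEEdef
  have hnd : ∀ e ∈ EE, ¬ e.IsDiag := fun e he =>
    G.not_isDiag_of_mem_edgeSet (SimpleGraph.mem_edgeFinset.1 he)
  have hcast : ((2*ℓ*t : ℕ) : ℤ) = 2*L := by push_cast [hLdef, hlz, htz]; ring
  have hdeg : ∀ v : V, 2*L ≤ ((EE.filter (fun e => v ∈ e)).card : ℤ) := by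
    intro v
    have := S12.vconn_degree hconn v
    rw [← hcast]
    exact_mod_cast this
  have hn : 2*L < (n : ℤ) := by
    have := hconn.1
    rw [← hcast]
    exact_mod_cast this
  have hsep : ∀ P S : Finset V, Disjoint P S → P.Nonempty → P ∪ S ≠ Finset.univ →
      (∀ a ∈ P, ∀ e ∈ EE, a ∈ e → S12.eVerts e ⊆ P ∪ S) → 2*L ≤ (S.card : ℤ) := by
    intro P S h1 h2 h3 h4
    have := S12.vconn_sep hconn P S h1 h2 h3 h4
    rw [← hcast]
    exact_mod_cast this
  obtain ⟨T₀, hT₀E, hT₀sp, hT₀card⟩ := S12.partI hK2 hKL hL2 EE hnd hdeg hn hsep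
  have hndT₀ : ∀ e ∈ T₀, ¬ e.IsDiag := fun e he => hnd e (hT₀E he)
  have hT₀sp' : CountSparse (kz * t) (lz * t) T₀ := hT₀sp
  obtain ⟨Fam, hFsub, hFsp, hFdisj, hFsum⟩ := S12.partII hkz2 hlz2 t ht T₀ hndT₀ hT₀sp'
  -- each part has exactly kn - ℓ edges
  have hbound : ∀ i, ((Fam i).card : ℤ) ≤ kz * n - lz := by
    intro i
    rcases (Fam i).eq_empty_or_nonempty with h | h
    · rw [h]
      simp only [Finset.card_empty, Nat.cast_zero]
      nlinarith
    · have h1 := S12.sparse_card_le (hFsp i) h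
      have h2 : ((incVerts (Fam i)).card : ℤ) ≤ (n:ℤ) := by
        have : (incVerts (Fam i)).card ≤ n := by
          rw [hndef, ← Finset.card_univ]; exact Finset.card_le_univ _
        exact_mod_cast this
      nlinarith
  have hsumZ : (∑ i : Fin t, ((Fam i).card : ℤ)) = ∑ i : Fin t, (kz * n - lz) := by
    have h1 : (∑ i : Fin t, ((Fam i).card : ℤ)) = (T₀.card : ℤ) := by
      rw [← hFsum]; push_cast; ring
    rw [h1, hT₀card]
    rw [Finset.sum_const, Finset.card_univ, Fintype.card_fin, nsmul_eq_mul]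
    rw [hKdef, hLdef]
    ring
  have hexact : ∀ i, ((Fam i).card : ℤ) = kz * n - lz := by
    intro i
    by_contra hne
    have hlt : ((Fam i).card : ℤ) < kz * n - lz := lt_of_le_of_ne (hbound i) hne
    have : (∑ j : Fin t, ((Fam j).card : ℤ)) < ∑ j : Fin t, (kz * n - lz) :=
      Finset.sum_lt_sum (fun j _ => hbound j) ⟨i, Finset.mem_univ i, hlt⟩
    omega
  refine ⟨Fam, fun i => (hFsub i).trans hT₀E, hFdisj, ?_⟩
  intro i
  -- countRank computation
  have hub : ∀ F' ∈ (Fam i).powerset.filter (CountSparse kz lz), (F'.card : ℤ) ≤ kz * n - lz := by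
    intro F' hF'
    obtain ⟨hF'sub, hF'sp⟩ := Finset.mem_filter.1 hF'
    rw [Finset.mem_powerset] at hF'sub
    rcases F'.eq_empty_or_nonempty with h | h
    · rw [h]; simp only [Finset.card_empty, Nat.cast_zero]; nlinarith
    · have h1 := S12.sparse_card_le hF'sp h
      have h2 : ((incVerts F').card : ℤ) ≤ (n:ℤ) := by
        have : (incVerts F').card ≤ n := by
          rw [hndef, ← Finset.card_univ]; exact Finset.card_le_univ _
        exact_mod_cast this
      nlinarith
  have hmem : Fam i ∈ (Fam i).powerset.filter (CountSparse kz lz) :=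
    Finset.mem_filter.2 ⟨Finset.mem_powerset.2 (Finset.Subset.refl _), hFsp i⟩
  have hge : ((Fam i).card : ℤ) ≤ (countRank kz lz (Fam i) : ℤ) := by
    have := Finset.le_sup (f := Finset.card) hmem
    exact_mod_cast this
  have hNnn : (0:ℤ) ≤ kz * n - lz := by
    rw [← hexact i]; positivity
  have hle : (countRank kz lz (Fam i) : ℤ) ≤ kz * n - lz := by
    have hsup : countRank kz lz (Fam i) ≤ (kz * n - lz).toNat := by
      apply Finset.sup_le
      intro F' hF'
      have h1 := hub F' hF'
      omega
    calc (countRank kz lz (Fam i) : ℤ) ≤ (((kz * n - lz).toNat : ℕ) : ℤ) := by exact_mod_cast hsup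
      _ = kz * n - lz := Int.toNat_of_nonneg hNnn
  have : (countRank kz lz (Fam i) : ℤ) = kz * n - lz := by
    have h1 := hexact i
    omega
  exact this
end

section
/- Let M₁,...,M_t be matroids on a common ground set E with rank functions r₁,...,r_t, and let M be their matroid union with rank function r. Then for every E' ⊆ E, r(E') = min over F ⊆ E' of (|F| + Σᵢ rᵢ(E'−F)). -/
open scoped Classical

noncomputable def mrank {E : Type} (M : Matroid E) (S : Finset E) : ℕ :=
  sSup {n : ℕ | ∃ I : Finset E, I ⊆ S ∧ M.Indep (↑I : Set E) ∧ n = I.card}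

section mrankLemmas
variable {E : Type} {M : Matroid E} {S A B : Finset E}

lemma mrank_set_nonempty (M : Matroid E) (S : Finset E) :
    {n : ℕ | ∃ I : Finset E, I ⊆ S ∧ M.Indep (↑I : Set E) ∧ n = I.card}.Nonempty :=
  ⟨0, ∅, by simp [M.empty_indep]⟩

lemma mrank_set_bdd (M : Matroid E) (S : Finset E) :
    BddAbove {n : ℕ | ∃ I : Finset E, I ⊆ S ∧ M.Indep (↑I : Set E) ∧ n = I.card} := by
  refine ⟨S.card, fun n hn => ?_⟩
  obtain ⟨I, hIS, -, rfl⟩ := hn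
  exact Finset.card_le_card hIS

lemma exists_mrank_witness (M : Matroid E) (S : Finset E) :
    ∃ I : Finset E, I ⊆ S ∧ M.Indep (↑I : Set E) ∧ I.card = mrank M S := by
  have h := Nat.sSup_mem (mrank_set_nonempty M S) (mrank_set_bdd M S)
  obtain ⟨I, hIS, hI, hc⟩ := h
  exact ⟨I, hIS, hI, hc.symm⟩

lemma le_mrank (hIS : A ⊆ S) (hI : M.Indep (↑A : Set E)) : A.card ≤ mrank M S :=
  le_csSup (mrank_set_bdd M S) ⟨A, hIS, hI, rfl⟩

lemma mrank_le_card : mrank M S ≤ S.card := by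
  obtain ⟨I, hIS, -, hc⟩ := exists_mrank_witness M S
  exact hc ▸ Finset.card_le_card hIS

lemma mrank_mono (h : A ⊆ B) : mrank M A ≤ mrank M B := by
  obtain ⟨I, hIS, hI, hc⟩ := exists_mrank_witness M A
  exact hc ▸ le_mrank (hIS.trans h) hI

lemma mrank_empty (M : Matroid E) : mrank M ∅ = 0 :=
  Nat.le_zero.mp (mrank_le_card)

lemma mrank_insert_le (e : E) : mrank M (insert e S) ≤ mrank M S + 1 := by
  obtain ⟨I, hIS, hI, hc⟩ := exists_mrank_witness M (insert e S)
  have h1 : I.erase e ⊆ S := by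
    intro x hx
    rcases Finset.mem_erase.mp hx with ⟨hne, hxI⟩
    rcases Finset.mem_insert.mp (hIS hxI) with h | h
    · exact absurd h hne
    · exact h
  have h2 : M.Indep (↑(I.erase e) : Set E) := hI.subset (by simp [Finset.erase_subset])
  have h3 := le_mrank h1 h2
  have h4 : I.card ≤ (I.erase e).card + 1 := by
    by_cases h : e ∈ I
    · have := Finset.card_erase_add_one h
      omega
    · rw [Finset.erase_eq_of_notMem h]; omega
  omega

lemma mrank_eq_card_of_indep (hI : M.Indep (↑S : Set E)) : mrank M S = S.card :=
  le_antisymm mrank_le_card (le_mrank (subset_refl S) hI)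

lemma indep_of_mrank_eq_card (h : mrank M S = S.card) : M.Indep (↑S : Set E) := by
  obtain ⟨I, hIS, hI, hc⟩ := exists_mrank_witness M S
  have : I = S := Finset.eq_of_subset_of_card_le hIS (by omega)
  exact this ▸ hI

end mrankLemmas
section mrank2
variable {E : Type} {M : Matroid E} {S A B : Finset E}

lemma exists_extension_aux (M : Matroid E) (A : Finset E) :
    ∀ (k : ℕ) (I : Finset E), I ⊆ A → M.Indep (↑I : Set E) → mrank M A - I.card ≤ k →
    ∃ J : Finset E, I ⊆ J ∧ J ⊆ A ∧ M.Indep (↑J : Set E) ∧ J.card = mrank M A := by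
  intro k
  induction k with
  | zero =>
    intro I hIA hI hk
    have := le_mrank hIA hI
    exact ⟨I, subset_refl I, hIA, hI, by omega⟩
  | succ k ih =>
    intro I hIA hI hk
    by_cases heq : I.card = mrank M A
    · exact ⟨I, subset_refl I, hIA, hI, heq⟩
    · have hlt : I.card < mrank M A := lt_of_le_of_ne (le_mrank hIA hI) heq
      obtain ⟨K, hKA, hK, hKc⟩ := exists_mrank_witness M A
      have hcard : (↑I : Set E).encard < (↑K : Set E).encard := by
        rw [Set.encard_coe_eq_coe_finsetCard, Set.encard_coe_eq_coe_finsetCard]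
        exact_mod_cast (by omega : I.card < K.card)
      obtain ⟨x, hx, hxI⟩ := hI.augment hK hcard
      have hxK : x ∈ K := by simpa using hx.1
      have hxnI : x ∉ I := by simpa using hx.2
      have h1 : (insert x I) ⊆ A := Finset.insert_subset (hKA hxK) hIA
      have h2 : M.Indep (↑(insert x I) : Set E) := by
        rwa [Finset.coe_insert]
      have h3 : (insert x I).card = I.card + 1 := Finset.card_insert_of_notMem hxnI
      obtain ⟨J, hJ1, hJ2, hJ3, hJ4⟩ := ih (insert x I) h1 h2 (by omega)
      exact ⟨J, (Finset.subset_insert x I).trans hJ1, hJ2, hJ3, hJ4⟩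

lemma exists_extension (M : Matroid E) (hIA : A ⊆ B) (hI : M.Indep (↑A : Set E)) :
    ∃ J : Finset E, A ⊆ J ∧ J ⊆ B ∧ M.Indep (↑J : Set E) ∧ J.card = mrank M B :=
  exists_extension_aux M B _ A hIA hI le_rfl

lemma mrank_submod (M : Matroid E) (A B : Finset E) :
    mrank M (A ∪ B) + mrank M (A ∩ B) ≤ mrank M A + mrank M B := by
  obtain ⟨I, hIS, hI, hIc⟩ := exists_mrank_witness M (A ∩ B)
  obtain ⟨J, hIJ, hJU, hJ, hJc⟩ :=
    exists_extension M (hIS.trans (Finset.inter_subset_union)) hI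
  have h1 : (J ∩ A).card ≤ mrank M A :=
    le_mrank Finset.inter_subset_right (hJ.subset (by simp [Finset.inter_subset_left]))
  have h2 : (J ∩ B).card ≤ mrank M B :=
    le_mrank Finset.inter_subset_right (hJ.subset (by simp [Finset.inter_subset_left]))
  have h3 : (J ∩ A) ∪ (J ∩ B) = J := by
    rw [← Finset.inter_union_distrib_left]
    exact Finset.inter_eq_left.mpr hJU
  have h4 : I ⊆ (J ∩ A) ∩ (J ∩ B) := by
    intro x hx
    have hxJ := hIJ hx
    have hxAB := hIS hx
    simp only [Finset.mem_inter] at hxAB ⊢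
    exact ⟨⟨hxJ, hxAB.1⟩, hxJ, hxAB.2⟩
  have h5 := Finset.card_union_add_card_inter (J ∩ A) (J ∩ B)
  have h6 : I.card ≤ ((J ∩ A) ∩ (J ∩ B)).card := Finset.card_le_card h4
  rw [h3] at h5
  omega

end mrank2
section Intersection
variable {E : Type} [DecidableEq E]

structure IsRk (r : Finset E → ℕ) : Prop where
  empty : r ∅ = 0
  mono : ∀ {A B : Finset E}, A ⊆ B → r A ≤ r B
  insert_le : ∀ (A : Finset E) (e : E), r (insert e A) ≤ r A + 1
  submod : ∀ A B : Finset E, r (A ∪ B) + r (A ∩ B) ≤ r A + r B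

namespace IsRk
variable {r : Finset E → ℕ} (hr : IsRk r)

lemma union_le_add_card (hr : IsRk r) (A : Finset E) :
    ∀ U : Finset E, r (A ∪ U) ≤ r A + U.card := by
  intro U
  induction U using Finset.induction_on with
  | empty => simp
  | @insert x U hx ih =>
    have h1 : A ∪ insert x U = insert x (A ∪ U) := by
      ext y; simp [or_comm, or_assoc, or_left_comm]
    rw [h1, Finset.card_insert_of_notMem hx]
    calc r (insert x (A ∪ U)) ≤ r (A ∪ U) + 1 := hr.insert_le _ _
      _ ≤ r A + U.card + 1 := by omega

lemma le_card (hr : IsRk r) (A : Finset E) : r A ≤ A.card := by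
  have := hr.union_le_add_card ∅ A
  simpa [hr.empty] using this

lemma subset_indep (hr : IsRk r) {S T : Finset E} (hTS : T ⊆ S) (hS : r S = S.card) :
    r T = T.card := by
  have h2 : r S ≤ r T + (S \ T).card := by
    have h1 : T ∪ (S \ T) = S := Finset.union_sdiff_of_subset hTS
    have := hr.union_le_add_card T (S \ T)
    rwa [h1] at this
  have h3 := Finset.card_sdiff_of_subset hTS
  have h4 := Finset.card_le_card hTS
  have h5 := hr.le_card T
  omega

lemma insert_eq_of_rank_zero (hr : IsRk r) {e : E} (he : r {e} = 0) (A : Finset E) :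
    r (insert e A) = r A := by
  have h1 := hr.submod A {e}
  have h2 : A ∪ {e} = insert e A := by ext x; simp [or_comm]
  have h3 := hr.mono (Finset.subset_insert (s := A) e)
  have h4 : r (A ∩ {e}) ≥ 0 := Nat.zero_le _
  rw [h2, he] at h1
  omega

end IsRk

/-- contraction of a rank function by a single non-loop element -/
lemma IsRk.contract {r : Finset E → ℕ} (hr : IsRk r) {e : E} (he : r {e} = 1) :
    IsRk (fun A => r (insert e A) - 1) := by
  have key : ∀ A : Finset E, 1 ≤ r (insert e A) := by
    intro A
    have : ({e} : Finset E) ⊆ insert e A := by simp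
    have := hr.mono this
    omega
  constructor
  · have : insert e (∅ : Finset E) = {e} := rfl
    simp only [this, he]
  · intro A B hAB
    have := hr.mono (Finset.insert_subset_insert e hAB)
    omega
  · intro A x
    by_cases hx : x = e
    · subst hx
      simp only [Finset.insert_idem]
      omega
    · have h1 : insert e (insert x A) = insert x (insert e A) := Finset.insert_comm _ _ _
      rw [h1]
      have := hr.insert_le (insert e A) x
      have := key A
      omega
  · intro A B
    have h1 : insert e A ∪ insert e B = insert e (A ∪ B) := by
      ext x; simp [or_assoc, or_left_comm]
    have h2 : insert e A ∩ insert e B = insert e (A ∩ B) := by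
      ext x; simp only [Finset.mem_inter, Finset.mem_insert]; tauto
    have h3 := hr.submod (insert e A) (insert e B)
    rw [h1, h2] at h3
    have := key (A ∪ B)
    have := key (A ∩ B)
    have := key A
    have := key B
    omega

end Intersection
section IntersectionThm
variable {E : Type} [DecidableEq E]

/-- the min-value set for matroid intersection -/
def interSet (r₁ r₂ : Finset E → ℕ) (X : Finset E) : Set ℕ :=
  {m : ℕ | ∃ A : Finset E, A ⊆ X ∧ m = r₁ A + r₂ (X \ A)}

lemma interSet_nonempty (r₁ r₂ : Finset E → ℕ) (X : Finset E) :
    (interSet r₁ r₂ X).Nonempty :=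
  ⟨r₁ ∅ + r₂ X, ∅, Finset.empty_subset X, by simp⟩

lemma interSet_attained (r₁ r₂ : Finset E → ℕ) (X : Finset E) :
    ∃ A : Finset E, A ⊆ X ∧ sInf (interSet r₁ r₂ X) = r₁ A + r₂ (X \ A) :=
  Nat.sInf_mem (interSet_nonempty r₁ r₂ X)

lemma interSet_le {r₁ r₂ : Finset E → ℕ} {X A : Finset E} (hA : A ⊆ X) :
    sInf (interSet r₁ r₂ X) ≤ r₁ A + r₂ (X \ A) :=
  Nat.sInf_le ⟨A, hA, rfl⟩

theorem matroid_intersection_aux :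
    ∀ (n : ℕ) (r₁ r₂ : Finset E → ℕ), IsRk r₁ → IsRk r₂ → ∀ X : Finset E, X.card ≤ n →
    ∃ S : Finset E, S ⊆ X ∧ r₁ S = S.card ∧ r₂ S = S.card ∧
      sInf (interSet r₁ r₂ X) ≤ S.card := by
  intro n
  induction n with
  | zero =>
    intro r₁ r₂ h₁ h₂ X hX
    have hXe : X = ∅ := Finset.card_eq_zero.mp (Nat.le_zero.mp hX)
    subst hXe
    refine ⟨∅, by simp [h₁.empty, h₂.empty], by simp [h₁.empty], by simp [h₂.empty], ?_⟩
    have : sInf (interSet r₁ r₂ ∅) ≤ r₁ ∅ + r₂ (∅ \ ∅) := interSet_le (by simp)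
    simp [h₁.empty, h₂.empty] at this
    simpa using this
  | succ n ih =>
    intro r₁ r₂ h₁ h₂ X hX
    rcases X.eq_empty_or_nonempty with hXe | ⟨e, he⟩
    · subst hXe
      exact ih r₁ r₂ h₁ h₂ ∅ (by simp)
    set X' := X.erase e with hX'def
    have hX'X : X' ⊆ X := Finset.erase_subset e X
    have hX'card : X'.card ≤ n := by
      have h : X'.card = X.card - 1 := Finset.card_erase_of_mem he
      omega
    have heX' : e ∉ X' := Finset.notMem_erase e X
    -- loop case in r₁
    by_cases hl1 : r₁ {e} = 0
    · obtain ⟨S, hS1, hS2, hS3, hS4⟩ := ih r₁ r₂ h₁ h₂ X' hX'card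
      refine ⟨S, hS1.trans hX'X, hS2, hS3, ?_⟩
      obtain ⟨A, hA1, hA2⟩ := interSet_attained r₁ r₂ X'
      have hdiff : X \ insert e A = X' \ A := by
        ext x
        simp only [Finset.mem_sdiff, Finset.mem_insert, Finset.mem_erase, hX'def]
        tauto
      have hins : r₁ (insert e A) = r₁ A := h₁.insert_eq_of_rank_zero hl1 A
      have hk : sInf (interSet r₁ r₂ X) ≤ r₁ (insert e A) + r₂ (X \ insert e A) :=
        interSet_le (Finset.insert_subset he (hA1.trans hX'X))
      rw [hins, hdiff, ← hA2] at hk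
      omega
    by_cases hl2 : r₂ {e} = 0
    · obtain ⟨S, hS1, hS2, hS3, hS4⟩ := ih r₁ r₂ h₁ h₂ X' hX'card
      refine ⟨S, hS1.trans hX'X, hS2, hS3, ?_⟩
      obtain ⟨A, hA1, hA2⟩ := interSet_attained r₁ r₂ X'
      have heA : e ∉ A := fun h => heX' (hA1 h)
      have hdiff : X \ A = insert e (X' \ A) := by
        ext x
        simp only [Finset.mem_sdiff, Finset.mem_insert, Finset.mem_erase, hX'def]
        constructor
        · rintro ⟨hx, hxA⟩
          by_cases hxe : x = e
          · exact Or.inl hxe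
          · exact Or.inr ⟨⟨hxe, hx⟩, hxA⟩
        · rintro (rfl | ⟨⟨-, hx⟩, hxA⟩)
          · exact ⟨he, heA⟩
          · exact ⟨hx, hxA⟩
      have hins : r₂ (insert e (X' \ A)) = r₂ (X' \ A) := h₂.insert_eq_of_rank_zero hl2 _
      have hk : sInf (interSet r₁ r₂ X) ≤ r₁ A + r₂ (X \ A) :=
        interSet_le (hA1.trans hX'X)
      rw [hdiff, hins, ← hA2] at hk
      omega
    -- non-loop: r₁ {e} = 1, r₂ {e} = 1
    have he1 : r₁ {e} = 1 := by
      have := h₁.le_card {e}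
      simp at this
      omega
    have he2 : r₂ {e} = 1 := by
      have := h₂.le_card {e}
      simp at this
      omega
    -- deletion attempt
    obtain ⟨Sd, hSd1, hSd2, hSd3, hSd4⟩ := ih r₁ r₂ h₁ h₂ X' hX'card
    by_cases hd : sInf (interSet r₁ r₂ X) ≤ Sd.card
    · exact ⟨Sd, hSd1.trans hX'X, hSd2, hSd3, hd⟩
    -- contraction
    obtain ⟨Sc, hSc1, hSc2, hSc3, hSc4⟩ :=
      ih _ _ (h₁.contract he1) (h₂.contract he2) X' hX'card
    have heSc : e ∉ Sc := fun h => heX' (hSc1 h)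
    have hScc : (insert e Sc).card = Sc.card + 1 := Finset.card_insert_of_notMem heSc
    have hkey1 : 1 ≤ r₁ (insert e Sc) := by
      have : ({e} : Finset E) ⊆ insert e Sc := by simp
      have := h₁.mono this; omega
    have hkey2 : 1 ≤ r₂ (insert e Sc) := by
      have : ({e} : Finset E) ⊆ insert e Sc := by simp
      have := h₂.mono this; omega
    refine ⟨insert e Sc, Finset.insert_subset he (hSc1.trans hX'X), by omega, by omega, ?_⟩
    by_contra hns
    push_neg at hns
    rw [hScc] at hns
    -- hns : sInf ... > Sc.card + 1
    set k := sInf (interSet r₁ r₂ X) with hkdef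
    -- from failed deletion: a set A ⊆ X' with r₁ A + r₂ (X' \ A) < k
    obtain ⟨A, hA1, hA2⟩ := interSet_attained r₁ r₂ X'
    have hAval : r₁ A + r₂ (X' \ A) ≤ k - 1 := by omega
    -- from contraction bound: B ⊆ X' with (r₁ (insert e B) - 1) + (r₂ (insert e (X'\B)) - 1) ≤ Sc.card
    obtain ⟨B, hB1, hB2⟩ :=
      interSet_attained (fun A => r₁ (insert e A) - 1) (fun A => r₂ (insert e A) - 1) X'
    have heB : e ∉ B := fun h => heX' (hB1 h)
    have hBkey1 : 1 ≤ r₁ (insert e B) := by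
      have : ({e} : Finset E) ⊆ insert e B := by simp
      have := h₁.mono this; omega
    have hBkey2 : 1 ≤ r₂ (insert e (X' \ B)) := by
      have : ({e} : Finset E) ⊆ insert e (X' \ B) := by simp
      have := h₂.mono this; omega
    have hXB : insert e (X' \ B) = X \ B := by
      ext x
      simp only [Finset.mem_insert, Finset.mem_sdiff, Finset.mem_erase, hX'def]
      constructor
      · rintro (rfl | ⟨⟨-, hx⟩, hxB⟩)
        · exact ⟨he, heB⟩
        · exact ⟨hx, hxB⟩
      · rintro ⟨hx, hxB⟩
        by_cases hxe : x = e
        · exact Or.inl hxe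
        · exact Or.inr ⟨⟨hxe, hx⟩, hxB⟩
    have hBval : r₁ (insert e B) + r₂ (X \ B) ≤ k := by
      rw [← hXB]
      omega
    -- submodularity contradiction
    have hsub1 : r₁ (A ∪ insert e B) + r₁ (A ∩ insert e B) ≤ r₁ A + r₁ (insert e B) :=
      h₁.submod A (insert e B)
    have hu1 : A ∪ insert e B = insert e (A ∪ B) := by
      ext x; simp only [Finset.mem_union, Finset.mem_insert]; tauto
    have hi1 : r₁ (A ∩ B) ≤ r₁ (A ∩ insert e B) :=
      h₁.mono (Finset.inter_subset_inter (subset_refl A) (Finset.subset_insert e B))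
    have hsub2 : r₂ ((X' \ A) ∪ (X \ B)) + r₂ ((X' \ A) ∩ (X \ B)) ≤
        r₂ (X' \ A) + r₂ (X \ B) := h₂.submod _ _
    have hu2 : (X' \ A) ∪ (X \ B) = X \ (A ∩ B) := by
      ext x
      simp only [Finset.mem_union, Finset.mem_sdiff, Finset.mem_erase, Finset.mem_inter,
        hX'def]
      constructor
      · rintro (⟨⟨-, hx⟩, hxA⟩ | ⟨hx, hxB⟩)
        · exact ⟨hx, fun h => hxA h.1⟩
        · exact ⟨hx, fun h => hxB h.2⟩
      · rintro ⟨hx, hxAB⟩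
        by_cases hxB : x ∈ B
        · by_cases hxe : x = e
          · exact absurd (hxe ▸ hxB) heB
          · exact Or.inl ⟨⟨hxe, hx⟩, fun hxA => hxAB ⟨hxA, hxB⟩⟩
        · exact Or.inr ⟨hx, hxB⟩
    have hi2 : (X' \ A) ∩ (X \ B) = X \ insert e (A ∪ B) := by
      ext x
      simp only [Finset.mem_inter, Finset.mem_sdiff, Finset.mem_erase, Finset.mem_insert,
        Finset.mem_union, hX'def]
      tauto
    have hm1 : k ≤ r₁ (A ∩ B) + r₂ (X \ (A ∩ B)) :=
      interSet_le ((Finset.inter_subset_left).trans (hA1.trans hX'X))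
    have hm2 : k ≤ r₁ (insert e (A ∪ B)) + r₂ (X \ insert e (A ∪ B)) :=
      interSet_le (Finset.insert_subset he (Finset.union_subset (hA1.trans hX'X) (hB1.trans hX'X)))
    rw [hu1] at hsub1
    rw [hu2, hi2] at hsub2
    omega

end IntersectionThm
section EasyBound
variable {E : Type} [DecidableEq E]

lemma common_indep_le {r₁ r₂ : Finset E → ℕ} (h₁ : IsRk r₁) (h₂ : IsRk r₂)
    {S X A : Finset E} (hSX : S ⊆ X) (hS1 : r₁ S = S.card) (hS2 : r₂ S = S.card) :
    S.card ≤ r₁ A + r₂ (X \ A) := by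
  have e1 : r₁ (S ∩ A) = (S ∩ A).card := h₁.subset_indep (Finset.inter_subset_left) hS1
  have e2 : r₂ (S \ A) = (S \ A).card := h₂.subset_indep (Finset.sdiff_subset) hS2
  have e3 : r₁ (S ∩ A) ≤ r₁ A := h₁.mono (Finset.inter_subset_right)
  have e4 : r₂ (S \ A) ≤ r₂ (X \ A) := h₂.mono (Finset.sdiff_subset_sdiff hSX (subset_refl A))
  have e5 : (S ∩ A).card + (S \ A).card = S.card := by
    rw [Finset.card_inter_add_card_sdiff]
  omega

end EasyBound

section Assembly
variable {E : Type} [Fintype E] {t : ℕ}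

/-- the i-th msl of a subset of `E × Fin t` -/
noncomputable def msl (i : Fin t) (S : Finset (E × Fin t)) : Finset E :=
  Finset.univ.filter (fun x => (x, i) ∈ S)

lemma mem_slice {i : Fin t} {S : Finset (E × Fin t)} {x : E} :
    x ∈ msl i S ↔ (x, i) ∈ S := by simp [msl]

lemma slice_empty (i : Fin t) : msl i (∅ : Finset (E × Fin t)) = ∅ := by
  ext x; simp [mem_slice]

lemma slice_mono {i : Fin t} {A B : Finset (E × Fin t)} (h : A ⊆ B) :
    msl i A ⊆ msl i B := fun x hx => mem_slice.mpr (h (mem_slice.mp hx))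

lemma slice_union (i : Fin t) (A B : Finset (E × Fin t)) :
    msl i (A ∪ B) = msl i A ∪ msl i B := by
  ext x; simp [mem_slice]

lemma slice_inter (i : Fin t) (A B : Finset (E × Fin t)) :
    msl i (A ∩ B) = msl i A ∩ msl i B := by
  ext x; simp [mem_slice]

lemma slice_insert_self (p : E × Fin t) (S : Finset (E × Fin t)) :
    msl p.2 (insert p S) = insert p.1 (msl p.2 S) := by
  ext x
  simp only [mem_slice, Finset.mem_insert]
  constructor
  · rintro (h | h)
    · exact Or.inl (congrArg Prod.fst h.symm).symm
    · exact Or.inr h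
  · rintro (rfl | h)
    · exact Or.inl (by rw [Prod.mk.eta])
    · exact Or.inr h

lemma slice_insert_ne {i : Fin t} (p : E × Fin t) (S : Finset (E × Fin t)) (h : i ≠ p.2) :
    msl i (insert p S) = msl i S := by
  ext x
  simp only [mem_slice, Finset.mem_insert]
  constructor
  · rintro (heq | hmem)
    · exact absurd (congrArg Prod.snd heq).symm h.symm
    · exact hmem
  · exact fun hmem => Or.inr hmem

lemma sum_card_slice (S : Finset (E × Fin t)) :
    ∑ i, (msl i S).card = S.card := by
  classical
  induction S using Finset.induction_on with
  | empty => simp [slice_empty]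
  | @insert p S hp ih =>
    rw [Finset.card_insert_of_notMem hp]
    rw [← Finset.sum_erase_add _ _ (Finset.mem_univ p.2)]
    rw [← Finset.sum_erase_add _ _ (Finset.mem_univ p.2)] at ih
    have h1 : ∑ i ∈ Finset.univ.erase p.2, (msl i (insert p S)).card
        = ∑ i ∈ Finset.univ.erase p.2, (msl i S).card := by
      refine Finset.sum_congr rfl fun i hi => ?_
      rw [slice_insert_ne p S (Finset.mem_erase.mp hi).1]
    have h2 : (msl p.2 (insert p S)).card = (msl p.2 S).card + 1 := by
      rw [slice_insert_self]
      exact Finset.card_insert_of_notMem (fun h => hp (by rwa [mem_slice, Prod.mk.eta] at h))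
    omega

variable (M : Fin t → Matroid E)

/-- direct sum rank function -/
noncomputable def mr1 (S : Finset (E × Fin t)) : ℕ := ∑ i, mrank (M i) (msl i S)

/-- partition rank function -/
noncomputable def mr2 (S : Finset (E × Fin t)) : ℕ := (S.image Prod.fst).card

lemma isRk_r1 : IsRk (mr1 M) := by
  constructor
  · simp [mr1, slice_empty, mrank_empty]
  · intro A B h
    exact Finset.sum_le_sum fun i _ => mrank_mono (slice_mono h)
  · intro A p
    unfold mr1
    rw [← Finset.sum_erase_add _ _ (Finset.mem_univ p.2),
        ← Finset.sum_erase_add _ _ (Finset.mem_univ p.2)]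
    have h1 : ∑ i ∈ Finset.univ.erase p.2, mrank (M i) (msl i (insert p A))
        = ∑ i ∈ Finset.univ.erase p.2, mrank (M i) (msl i A) := by
      refine Finset.sum_congr rfl fun i hi => ?_
      rw [slice_insert_ne p A (Finset.mem_erase.mp hi).1]
    have h2 : mrank (M p.2) (msl p.2 (insert p A)) ≤ mrank (M p.2) (msl p.2 A) + 1 := by
      rw [slice_insert_self]
      exact mrank_insert_le p.1
    omega
  · intro A B
    unfold mr1
    rw [← Finset.sum_add_distrib, ← Finset.sum_add_distrib]
    refine Finset.sum_le_sum fun i _ => ?_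
    rw [slice_union, slice_inter]
    exact mrank_submod (M i) _ _

lemma isRk_r2 : IsRk (mr2 (E := E) (t := t)) := by
  classical
  constructor
  · simp [mr2]
  · intro A B h
    exact Finset.card_le_card (Finset.image_subset_image h)
  · intro A p
    unfold mr2
    rw [Finset.image_insert]
    exact Finset.card_insert_le _ _
  · intro A B
    unfold mr2
    have h1 : (A ∪ B).image Prod.fst = A.image Prod.fst ∪ B.image Prod.fst :=
      Finset.image_union _ _
    have h2 : (A ∩ B).image Prod.fst ⊆ A.image Prod.fst ∩ B.image Prod.fst :=
      Finset.image_inter_subset _ _ _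
    have h3 := Finset.card_union_add_card_inter (A.image Prod.fst) (B.image Prod.fst)
    have h4 := Finset.card_le_card h2
    rw [h1]
    omega

end Assembly
/-- Nash-Williams/Edmonds: for matroids `M₁, …, M_t` on a common finite
ground set `E` and any `E' ⊆ E`, the rank of `E'` in the matroid union (the maximum size of
a subset of `E'` that is a union of sets independent in the respective matroids) equals
`min_{F ⊆ E'} (|F| + Σᵢ rᵢ(E' - F))`. -/
theorem stmt_13 {E : Type} [Fintype E] (t : ℕ) (M : Fin t → Matroid E)
    (hground : ∀ i, (M i).E = Set.univ) (E' : Finset E) :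
    sSup {n : ℕ | ∃ I : Finset E, I ⊆ E' ∧
        (∃ f : Fin t → Finset E, (∀ i, (M i).Indep (↑(f i) : Set E)) ∧
          (↑I : Set E) = ⋃ i, (↑(f i) : Set E)) ∧
        n = I.card}
      = sInf {m : ℕ | ∃ F : Finset E, F ⊆ E' ∧
          m = F.card + ∑ i, mrank (M i) (E' \ F)} := by
  rcases Nat.eq_zero_or_pos t with ht | ht
  · -- degenerate case t = 0
    subst ht
    have hL : {n : ℕ | ∃ I : Finset E, I ⊆ E' ∧
        (∃ f : Fin 0 → Finset E, (∀ i, (M i).Indep (↑(f i) : Set E)) ∧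
          (↑I : Set E) = ⋃ i, (↑(f i) : Set E)) ∧ n = I.card} = {0} := by
      ext n
      simp only [Set.mem_setOf_eq, Set.mem_singleton_iff]
      constructor
      · rintro ⟨I, -, ⟨f, -, hIf⟩, rfl⟩
        have : (↑I : Set E) = ∅ := by rw [hIf]; exact Set.iUnion_of_empty _
        have : I = ∅ := by exact_mod_cast this
        simp [this]
      · rintro rfl
        exact ⟨∅, by simp, ⟨fun i => ∅, fun i => i.elim0, by simp⟩, by simp⟩
    rw [hL, csSup_singleton]
    symm
    rw [Nat.sInf_eq_zero]
    exact Or.inl ⟨∅, by simp⟩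
  · -- main case t ≥ 1
    classical
    set X : Finset (E × Fin t) := E' ×ˢ Finset.univ with hXdef
    have hr1 := isRk_r1 M
    have hr2 := isRk_r2 (E := E) (t := t)
    -- Step A : the LHS set is the set of cardinalities of common independent sets
    have hA : {n : ℕ | ∃ I : Finset E, I ⊆ E' ∧
        (∃ f : Fin t → Finset E, (∀ i, (M i).Indep (↑(f i) : Set E)) ∧
          (↑I : Set E) = ⋃ i, (↑(f i) : Set E)) ∧ n = I.card}
        = {n : ℕ | ∃ S : Finset (E × Fin t), S ⊆ X ∧ mr1 M S = S.card ∧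
            mr2 S = S.card ∧ n = S.card} := by
      ext n
      simp only [Set.mem_setOf_eq]
      constructor
      · rintro ⟨I, hIE, ⟨f, hf, hIf⟩, rfl⟩
        have hex : ∀ x ∈ I, ∃ j, x ∈ f j := by
          intro x hx
          have hx' : (x : E) ∈ (↑I : Set E) := by exact_mod_cast hx
          rw [hIf] at hx'
          obtain ⟨j, hj⟩ := Set.mem_iUnion.mp hx'
          exact ⟨j, by exact_mod_cast hj⟩
        set g : E → Fin t := fun x => if h : ∃ j, x ∈ f j then h.choose else ⟨0, ht⟩ with hgdef
        have hgx : ∀ x, (∃ j, x ∈ f j) → x ∈ f (g x) := by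
          intro x h
          simp only [hgdef, dif_pos h]
          exact h.choose_spec
        set S : Finset (E × Fin t) := I.image (fun x => (x, g x)) with hSdef
        have hcard : S.card = I.card :=
          Finset.card_image_of_injOn (fun x _ y _ h => congrArg Prod.fst h)
        have hmemS : ∀ p : E × Fin t, p ∈ S ↔ p.1 ∈ I ∧ g p.1 = p.2 := by
          intro p
          simp only [hSdef, Finset.mem_image]
          constructor
          · rintro ⟨x, hx, rfl⟩
            exact ⟨hx, rfl⟩
          · rintro ⟨hx, hg⟩
            exact ⟨p.1, hx, by rw [hg]⟩
        have hSX : S ⊆ X := by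
          intro p hp
          rw [Finset.mem_product]
          exact ⟨hIE ((hmemS p).mp hp).1, Finset.mem_univ _⟩
        have himg : S.image Prod.fst = I := by
          rw [hSdef, Finset.image_image]
          exact Finset.image_id
        have hslice : ∀ i, msl i S ⊆ f i := by
          intro i x hx
          rw [mem_slice, hmemS] at hx
          obtain ⟨hxI, hgi⟩ := hx
          have := hgx x (hex x hxI)
          rwa [hgi] at this
        have hindep : ∀ i, (M i).Indep (↑(msl i S) : Set E) := by
          intro i
          exact (hf i).subset (by exact_mod_cast hslice i)
        refine ⟨S, hSX, ?_, ?_, by omega⟩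
        · unfold mr1
          rw [← sum_card_slice S]
          exact Finset.sum_congr rfl fun i _ => mrank_eq_card_of_indep (hindep i)
        · unfold mr2
          rw [himg]
          omega
      · rintro ⟨S, hSX, h1, h2, rfl⟩
        refine ⟨S.image Prod.fst, ?_, ⟨fun i => msl i S, ?_, ?_⟩, ?_⟩
        · intro x hx
          obtain ⟨p, hp, rfl⟩ := Finset.mem_image.mp hx
          exact (Finset.mem_product.mp (hSX hp)).1
        · -- each slice is independent
          intro i
          apply indep_of_mrank_eq_card
          have hle : ∀ i ∈ Finset.univ, mrank (M i) (msl i S) ≤ (msl i S).card :=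
            fun i _ => mrank_le_card
          have hsum : ∑ i, mrank (M i) (msl i S) = ∑ i, (msl i S).card := by
            rw [sum_card_slice S]
            exact h1
          exact (Finset.sum_eq_sum_iff_of_le hle).mp hsum i (Finset.mem_univ i)
        · ext x
          simp only [Finset.coe_image, Set.mem_image, Finset.mem_coe, Set.mem_iUnion,
            Finset.coe_filter, mem_slice, Set.mem_setOf_eq]
          constructor
          · rintro ⟨p, hp, rfl⟩
            exact ⟨p.2, by rwa [Prod.mk.eta]⟩
          · rintro ⟨i, hi⟩
            exact ⟨(x, i), hi, rfl⟩
        · unfold mr2 at h2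
          omega
    rw [hA]
    -- Step B : sSup of common independent cardinalities = sInf of interSet
    have hB : sSup {n : ℕ | ∃ S : Finset (E × Fin t), S ⊆ X ∧ mr1 M S = S.card ∧
        mr2 S = S.card ∧ n = S.card} = sInf (interSet (mr1 M) mr2 X) := by
      have hne : (0 : ℕ) ∈ {n : ℕ | ∃ S : Finset (E × Fin t), S ⊆ X ∧ mr1 M S = S.card ∧
          mr2 S = S.card ∧ n = S.card} := ⟨∅, by simp [hr1.empty, hr2.empty]⟩
      have hbdd : BddAbove {n : ℕ | ∃ S : Finset (E × Fin t), S ⊆ X ∧ mr1 M S = S.card ∧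
          mr2 S = S.card ∧ n = S.card} := by
        refine ⟨X.card, fun n hn => ?_⟩
        obtain ⟨S, hS, -, -, rfl⟩ := hn
        exact Finset.card_le_card hS
      apply le_antisymm
      · apply csSup_le ⟨0, hne⟩
        rintro n ⟨S, hSX, h1, h2, rfl⟩
        obtain ⟨A, hAX, hAval⟩ := interSet_attained (mr1 M) mr2 X
        rw [hAval]
        exact common_indep_le hr1 hr2 hSX h1 h2
      · obtain ⟨S, hSX, h1, h2, h3⟩ :=
          matroid_intersection_aux X.card (mr1 M) mr2 hr1 hr2 X le_rfl
        exact h3.trans (le_csSup hbdd ⟨S, hSX, h1, h2, rfl⟩)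
    rw [hB]
    -- Step C : the two minimization problems agree
    have hC1 : ∀ F : Finset E, F ⊆ E' →
        F.card + ∑ i, mrank (M i) (E' \ F) ∈ interSet (mr1 M) mr2 X := by
      intro F hFE
      refine ⟨(E' \ F) ×ˢ Finset.univ, ?_, ?_⟩
      · exact Finset.product_subset_product (Finset.sdiff_subset) (subset_refl _)
      have hslice : ∀ i : Fin t, msl i ((E' \ F) ×ˢ Finset.univ) = E' \ F := by
        intro i
        ext x
        simp [mem_slice, Finset.mem_product]
      have hdiff : X \ ((E' \ F) ×ˢ Finset.univ) = F ×ˢ Finset.univ := by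
        ext p
        simp only [hXdef, Finset.mem_sdiff, Finset.mem_product, Finset.mem_univ,
          and_true, true_and]
        constructor
        · rintro ⟨hp, hnp⟩
          by_contra hpF
          exact hnp ⟨hp, hpF⟩
        · intro hpF
          exact ⟨hFE hpF, fun h => h.2 hpF⟩
      have himg : (F ×ˢ (Finset.univ : Finset (Fin t))).image Prod.fst = F := by
        ext x
        simp only [Finset.mem_image, Finset.mem_product, Finset.mem_univ, and_true]
        constructor
        · rintro ⟨p, hp, rfl⟩
          exact hp
        · intro hx
          exact ⟨(x, ⟨0, ht⟩), hx, rfl⟩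
      rw [hdiff]
      unfold mr1 mr2
      rw [himg]
      have hsum : ∑ i, mrank (M i) (msl i ((E' \ F) ×ˢ Finset.univ))
          = ∑ i, mrank (M i) (E' \ F) :=
        Finset.sum_congr rfl fun i _ => by rw [hslice i]
      rw [hsum]
      omega
    have hC2 : ∀ A : Finset (E × Fin t), A ⊆ X →
        ∃ F : Finset E, F ⊆ E' ∧
          F.card + ∑ i, mrank (M i) (E' \ F) ≤ mr1 M A + mr2 (X \ A) := by
      intro A hAX
      set F : Finset E := E'.filter (fun e => ∃ i, (e, i) ∉ A) with hFdef
      refine ⟨F, Finset.filter_subset _ _, ?_⟩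
      have hc1 : F.card ≤ mr2 (X \ A) := by
        apply Finset.card_le_card
        intro e he
        rw [hFdef, Finset.mem_filter] at he
        obtain ⟨heE, i, hi⟩ := he
        exact Finset.mem_image.mpr ⟨(e, i), Finset.mem_sdiff.mpr
          ⟨Finset.mem_product.mpr ⟨heE, Finset.mem_univ _⟩, hi⟩, rfl⟩
      have hc2 : ∑ i, mrank (M i) (E' \ F) ≤ mr1 M A := by
        apply Finset.sum_le_sum
        intro i _
        apply mrank_mono
        intro e he
        rw [Finset.mem_sdiff, hFdef, Finset.mem_filter] at he
        rw [mem_slice]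
        by_contra hni
        exact he.2 ⟨he.1, i, hni⟩
      omega
    apply le_antisymm
    · obtain ⟨F, hFE, hFval⟩ := Nat.sInf_mem (s := {m : ℕ | ∃ F : Finset E, F ⊆ E' ∧
          m = F.card + ∑ i, mrank (M i) (E' \ F)}) ⟨E'.card + ∑ i, mrank (M i) (E' \ E'), E', subset_refl E', rfl⟩
      rw [hFval]
      exact Nat.sInf_le (hC1 F hFE)
    · obtain ⟨A, hAX, hAval⟩ := interSet_attained (mr1 M) mr2 X
      obtain ⟨F, hFE, hFle⟩ := hC2 A hAX
      rw [hAval]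
      exact le_trans (Nat.sInf_le ⟨F, hFE, rfl⟩) hFle
end
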